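/- arXiv:1910.10270 — 16 statements merged into one kernel-verified Lean document; each statement's English description precedes it below -/
import Mathlib

section
/- Let H be a nontrivial Puiseux monoid. Then the seminormal closure, root closure, and complete integral closure of H all coincide and equal q(H) ∩ Q≥0, where q(H) is the quotient group of H inside Q. Moreover, this common closure equals n · ⟨1/d : d ∈ d(H∖{0})⟩ where n = gcd of the set of numerators of elements of H and d(x) denotes the denominator of x in lowest terms. -/
/-!
If `a, b ∈ H` and `a > b ≥ 0`, clearing denominators turns `a, b` into naturals `A > B`, and as
for a numerical semigroup every multiple `m (A - B)` with `m ≥ A B` is an `ℕ`-combination of `A`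
and `B`. So every positive element of `q(H)` has all large multiples in `H`, which collapses the
three closures onto `q(H) ∩ ℚ≥0`.

For the description by denominators: integers dividing a numerator are prime to the denominator,
so the rationals whose numerator is divisible by `n` form a group containing `q(H)`. For `x > 0`
in `q(H)`, a large multiple `m x ∈ H` with `m ≡ 1 mod d(x)` shows `d(x) ∈ d(H)`. Conversely, the
`z ∈ ℤ` with `z / d(h) ∈ q(H)` form an ideal `e ℤ`; `e` divides `n(h)`, hence is prime to `d(h)`,
hence divides every numerator of `H`, and so `e ∣ n`, i.e. `n / d(h) ∈ q(H)`.
-/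

theorem AddSubmonoid.mul_sub_mem_of_mul_le {S : AddSubmonoid ℕ} {A B m : ℕ} (hA : A ∈ S)
    (hB : B ∈ S) (hBA : B < A) (hm : A * B ≤ m) : m * (A - B) ∈ S := by
  have hA0 : 0 < A := B.zero_le.trans_lt hBA
  set k := m / A + 1
  have hkA : m < k * A := Nat.lt_mul_of_div_lt (Nat.lt_succ_self _) hA0
  have hkB : k * B ≤ m := by
    refine Nat.le_of_mul_le_mul_right ?_ hA0
    calc k * B * A = (m / A * A) * B + A * B := by ring
      _ ≤ m * B + m := by gcongr; exact Nat.div_mul_le_self m A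
      _ ≤ m * A := by nlinarith
  -- `k * B ≤ m < k * A` makes both coefficients natural.
  have hcomb : (m - k * B) * A + (k * A - m) * B = m * (A - B) := by
    zify [hkB, hkA.le, hBA.le]
    ring
  rw [← hcomb]
  exact S.add_mem (S.nsmul_mem hA _) (S.nsmul_mem hB _)

theorem AddSubmonoid.exists_sub_eq_of_mem_closure {G : Type*} [AddCommGroup G]
    (H : AddSubmonoid G) {x : G} (hx : x ∈ AddSubgroup.closure (H : Set G)) :
    ∃ a ∈ H, ∃ b ∈ H, a - b = x := by
  induction hx using AddSubgroup.closure_induction with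
  | mem y hy => exact ⟨y, hy, 0, H.zero_mem, sub_zero y⟩
  | zero => exact ⟨0, H.zero_mem, 0, H.zero_mem, sub_zero 0⟩
  | add _ _ _ _ hy hz =>
    obtain ⟨a, ha, b, hb, rfl⟩ := hy
    obtain ⟨c, hc, d, hd, rfl⟩ := hz
    exact ⟨a + c, H.add_mem ha hc, b + d, H.add_mem hb hd, add_sub_add_comm a c b d⟩
  | neg _ _ hy =>
    obtain ⟨a, ha, b, hb, rfl⟩ := hy
    exact ⟨b, hb, a, ha, (neg_sub a b).symm⟩

theorem nonneg_of_forall_add_nsmul_nonneg {α : Type*} [AddCommGroup α] [LinearOrder α]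
    [IsOrderedAddMonoid α] [Archimedean α] {c x : α} (h : ∀ m : ℕ, 0 ≤ c + m • x) :
    0 ≤ x := by
  by_contra! hx
  obtain ⟨m, hm⟩ := exists_lt_nsmul (neg_pos.2 hx) c
  rw [smul_neg, lt_neg_iff_add_neg] at hm
  exact (h m).not_gt hm

namespace Rat

theorem den_natCast_mul_of_coprime {m : ℕ} {q : ℚ} (h : m.Coprime q.den) :
    ((m : ℚ) * q).den = q.den := by
  have hgcd : ((m : ℤ) * q.num).natAbs.gcd q.den = 1 := by
    rw [Int.natAbs_mul, Int.natAbs_natCast]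
    exact Nat.Coprime.mul_left h q.reduced
  simp [Rat.mul_den, hgcd]

theorem isCoprime_den_of_dvd_num {n : ℤ} {q : ℚ} (h : n ∣ q.num) : IsCoprime n q.den :=
  (isCoprime_num_den q).of_isCoprime_of_dvd_left h

theorem dvd_num_add {n : ℤ} {q r : ℚ} (hq : n ∣ q.num) (hr : n ∣ r.num) :
    n ∣ (q + r).num := by
  have hcop : IsCoprime n (q.den * r.den : ℕ) := by
    push_cast
    exact (isCoprime_den_of_dvd_num hq).mul_right (isCoprime_den_of_dvd_num hr)
  refine hcop.dvd_of_dvd_mul_right ?_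
  rw [Nat.cast_mul, ← mul_assoc, add_num_den']
  exact (dvd_add (hq.mul_right _) (hr.mul_right _)).mul_right _

end Rat

namespace AddSubmonoid

variable {H : AddSubmonoid ℚ}

theorem exists_forall_ge_natCast_mul_sub_mem {a b : ℚ} (ha : a ∈ H) (hb : b ∈ H) (hb0 : 0 ≤ b)
    (hba : b ≤ a) : ∃ N : ℕ, ∀ m ≥ N, (m : ℚ) * (a - b) ∈ H := by
  rcases hba.eq_or_lt with rfl | hba
  · exact ⟨0, fun m _ => by simp⟩
  -- Clear denominators with `d = a.den * b.den` and work in the submonoid `{k : ℕ | k / d ∈ H}`.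
  set d : ℕ := a.den * b.den
  have hd : (0 : ℚ) < d := by positivity
  have hnat : ∀ q : ℚ, 0 ≤ q → ∃ k : ℕ, (k : ℚ) = q * q.den := fun q hq =>
    ⟨q.num.toNat, by
      rw [Rat.mul_den_eq_num]; exact_mod_cast Int.toNat_of_nonneg (Rat.num_nonneg.2 hq)⟩
  obtain ⟨A, hA⟩ := hnat a (hb0.trans hba.le)
  obtain ⟨B, hB⟩ := hnat b hb0
  let S : AddSubmonoid ℕ := H.comap ((AddMonoidHom.mulLeft (d : ℚ)⁻¹).comp (Nat.castAddMonoidHom ℚ))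
  have hS : ∀ k : ℕ, k ∈ S ↔ (k : ℚ) / d ∈ H := fun k => by simp [S, div_eq_inv_mul]
  have hAd : ((A * b.den : ℕ) : ℚ) / d = a := by
    push_cast [hA, d]; field_simp
  have hBd : ((B * a.den : ℕ) : ℚ) / d = b := by
    push_cast [hB, d]; field_simp
  have hlt : B * a.den < A * b.den := by
    rw [← Nat.cast_lt (α := ℚ), ← div_lt_div_iff_of_pos_right hd, hAd, hBd]; exact hba
  refine ⟨A * b.den * (B * a.den), fun m hm => ?_⟩
  have := (hS _).1 (mul_sub_mem_of_mul_le ((hS _).2 (hAd ▸ ha)) ((hS _).2 (hBd ▸ hb)) hlt hm)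
  rwa [Nat.cast_mul, Nat.cast_sub hlt.le, mul_div_assoc, sub_div, hAd, hBd] at this

theorem exists_forall_ge_natCast_mul_mem_of_mem_closure (hpos : ∀ x ∈ H, 0 ≤ x) {x : ℚ}
    (hx : x ∈ AddSubgroup.closure (H : Set ℚ)) (hx0 : 0 ≤ x) :
    ∃ N : ℕ, ∀ m ≥ N, (m : ℚ) * x ∈ H := by
  obtain ⟨a, ha, b, hb, rfl⟩ := H.exists_sub_eq_of_mem_closure hx
  exact exists_forall_ge_natCast_mul_sub_mem ha hb (hpos b hb) (sub_nonneg.1 hx0)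

theorem exists_den_eq_of_mem_closure (hpos : ∀ x ∈ H, 0 ≤ x) {x : ℚ}
    (hx : x ∈ AddSubgroup.closure (H : Set ℚ)) (hx0 : 0 < x) :
    ∃ h ∈ H, h ≠ 0 ∧ h.den = x.den := by
  obtain ⟨N, hN⟩ := exists_forall_ge_natCast_mul_mem_of_mem_closure hpos hx hx0.le
  -- `m ≡ 1 [MOD x.den]`, so multiplying by `m` does not change the denominator.
  set m := 1 + x.den * N
  have hcop : m.Coprime x.den :=
    (Nat.coprime_add_mul_left_left 1 x.den N).2 (Nat.coprime_one_left _)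
  have hmN : N ≤ m := (Nat.le_mul_of_pos_left N x.pos).trans (Nat.le_add_left _ _)
  exact ⟨m * x, hN m hmN, by positivity, Rat.den_natCast_mul_of_coprime hcop⟩

theorem dvd_num_of_mem_closure {n : ℤ} (hn : ∀ x ∈ H, x ≠ 0 → n ∣ x.num) {x : ℚ}
    (hx : x ∈ AddSubgroup.closure (H : Set ℚ)) : n ∣ x.num := by
  induction hx using AddSubgroup.closure_induction with
  | mem y hy => exact (eq_or_ne y 0).elim (fun h => by simp [h]) (hn y hy)
  | zero => simp
  | add _ _ _ _ hy hz => exact Rat.dvd_num_add hy hz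
  | neg _ _ hy => rwa [Rat.neg_num, dvd_neg]

theorem intCast_div_den_mem_closure {n : ℤ}
    (hn : ∀ e : ℤ, (∀ x ∈ H, x ≠ 0 → e ∣ x.num) → e ∣ n) {h : ℚ} (hh : h ∈ H) :
    (n : ℚ) / h.den ∈ AddSubgroup.closure (H : Set ℚ) := by
  set G := AddSubgroup.closure (H : Set ℚ)
  -- The integers `z` with `z / h.den ∈ G` form a subgroup `e ℤ` of `ℤ`.
  obtain ⟨e, he⟩ := Int.subgroup_cyclic
    (G.comap ((AddMonoidHom.mulLeft (h.den : ℚ)⁻¹).comp (Int.castAddHom ℚ)))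
  have hmem : ∀ z : ℤ, (z : ℚ) / h.den ∈ G ↔ e ∣ z := fun z => by
    rw [← Int.mem_zmultiples_iff, AddSubgroup.zmultiples_eq_closure, ← he]
    simp [div_eq_inv_mul]
  have hnum : e ∣ h.num := (hmem _).1 (by rw [Rat.num_div_den]; exact AddSubgroup.subset_closure hh)
  refine (hmem n).2 (hn e fun x hx _ => ?_)
  refine (Rat.isCoprime_den_of_dvd_num hnum).dvd_of_dvd_mul_right ((hmem _).1 ?_)
  rw [Int.cast_mul, Int.cast_natCast, mul_div_cancel_right₀ _ (by positivity), ← Rat.mul_den_eq_num]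
  simpa [nsmul_eq_mul, mul_comm] using G.nsmul_mem (AddSubgroup.subset_closure hx) x.den

theorem nonneg_mem_closure_eq_image_closure_one_div_den (hpos : ∀ x ∈ H, 0 ≤ x) {n : ℕ}
    (hn1 : ∀ x ∈ H, x ≠ 0 → (n : ℤ) ∣ x.num)
    (hn2 : ∀ m : ℤ, (∀ x ∈ H, x ≠ 0 → m ∣ x.num) → m ∣ (n : ℤ)) :
    {x ∈ (AddSubgroup.closure (H : Set ℚ) : Set ℚ) | 0 ≤ x} = (fun y : ℚ => (n : ℚ) * y) ''
      (closure {q : ℚ | ∃ x ∈ H, x ≠ 0 ∧ q = 1 / (x.den : ℚ)} : Set ℚ) := by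
  ext x
  constructor
  · rintro ⟨hx, hx0⟩
    rcases hx0.eq_or_lt with rfl | hx0
    · exact ⟨0, zero_mem _, mul_zero _⟩
    obtain ⟨h, hh, hne, hden⟩ := exists_den_eq_of_mem_closure hpos hx hx0
    obtain ⟨k, hk⟩ := Int.natCast_dvd.1 (dvd_num_of_mem_closure hn1 hx)
    have hgen : 1 / (x.den : ℚ) ∈ {q : ℚ | ∃ x ∈ H, x ≠ 0 ∧ q = 1 / (x.den : ℚ)} :=
      ⟨h, hh, hne, by rw [hden]⟩
    refine ⟨k • (1 / x.den), nsmul_mem (subset_closure hgen) k, ?_⟩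
    calc (n : ℚ) * (k • (1 / x.den)) = ((n * k : ℕ) : ℤ) / x.den := by
          push_cast [nsmul_eq_mul]; ring
      _ = x := by
          rw [← hk, Int.natCast_natAbs, abs_of_nonneg (Rat.num_nonneg.2 hx0.le), Rat.num_div_den]
  · rintro ⟨y, hy, rfl⟩
    have hle : closure {q : ℚ | ∃ x ∈ H, x ≠ 0 ∧ q = 1 / (x.den : ℚ)} ≤
        (AddSubgroup.closure (H : Set ℚ)).toAddSubmonoid.comap (AddMonoidHom.mulLeft (n : ℚ)) ⊓
          nonneg ℚ := by
      rw [closure_le]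
      rintro _ ⟨h, hh, -, rfl⟩
      refine ⟨?_, mem_nonneg.2 (by positivity)⟩
      simpa [div_eq_mul_inv] using intCast_div_den_mem_closure hn2 hh
    obtain ⟨hyG, hy0⟩ := hle hy
    exact ⟨hyG, mul_nonneg n.cast_nonneg hy0⟩

end AddSubmonoid

theorem puiseux_closures_general (H : AddSubmonoid ℚ) (hpos : ∀ x ∈ H, 0 ≤ x) (n : ℕ)
    (hn1 : ∀ x ∈ H, x ≠ 0 → (n : ℤ) ∣ x.num)
    (hn2 : ∀ m : ℤ, (∀ x ∈ H, x ≠ 0 → m ∣ x.num) → m ∣ (n : ℤ)) :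
    let Q : Set ℚ := (AddSubgroup.closure (H : Set ℚ) : Set ℚ)
    let semin : Set ℚ := {x ∈ Q | ∃ N : ℕ, ∀ m : ℕ, N ≤ m → (m : ℚ) * x ∈ H}
    let root : Set ℚ := {x ∈ Q | ∃ N : ℕ, 0 < N ∧ (N : ℚ) * x ∈ H}
    let cic : Set ℚ := {x ∈ Q | ∃ c ∈ H, ∀ m : ℕ, c + (m : ℚ) * x ∈ H}
    semin = root ∧ root = cic ∧ cic = {x ∈ Q | 0 ≤ x} ∧
      cic = (fun y : ℚ => (n : ℚ) * y) ''
        (AddSubmonoid.closure {q : ℚ | ∃ x ∈ H, x ≠ 0 ∧ q = 1 / (x.den : ℚ)} : Set ℚ) := by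
  intro Q semin root cic
  have semin_root : semin ⊆ root := fun x ⟨hxQ, N, hN⟩ =>
    ⟨hxQ, N + 1, N.succ_pos, hN (N + 1) N.le_succ⟩
  have root_nonneg : root ⊆ {x ∈ Q | 0 ≤ x} := fun x ⟨hxQ, N, hN, hNx⟩ =>
    ⟨hxQ, nonneg_of_mul_nonneg_right (hpos _ hNx) (Nat.cast_pos.2 hN)⟩
  have nonneg_semin : {x ∈ Q | 0 ≤ x} ⊆ semin := fun x ⟨hxQ, hx0⟩ =>
    ⟨hxQ, H.exists_forall_ge_natCast_mul_mem_of_mem_closure hpos hxQ hx0⟩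
  have semin_cic : semin ⊆ cic := fun x ⟨hxQ, N, hN⟩ =>
    ⟨hxQ, N * x, hN N le_rfl, fun m => by simpa [add_mul] using hN (N + m) (N.le_add_right m)⟩
  have cic_nonneg : cic ⊆ {x ∈ Q | 0 ≤ x} := fun x ⟨hxQ, c, hc, hcm⟩ =>
    ⟨hxQ, nonneg_of_forall_add_nsmul_nonneg (c := c) fun m => by
      simpa [nsmul_eq_mul] using hpos _ (hcm m)⟩
  have cic_eq_nonneg : cic = {x ∈ Q | 0 ≤ x} :=
    cic_nonneg.antisymm (nonneg_semin.trans semin_cic)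
  refine ⟨semin_root.antisymm (root_nonneg.trans nonneg_semin),
    (root_nonneg.trans (nonneg_semin.trans semin_cic)).antisymm
      (cic_nonneg.trans (nonneg_semin.trans semin_root)),
    cic_eq_nonneg, ?_⟩
  rw [cic_eq_nonneg]
  exact H.nonneg_mem_closure_eq_image_closure_one_div_den hpos hn1 hn2

/-- For a nontrivial Puiseux monoid H, the seminormal closure, root closure and
complete integral closure coincide, equal q(H) ∩ ℚ≥0, and equal
n · ⟨1/d : d ∈ d(H∖{0})⟩ where n = gcd of the numerators of elements of H. -/
theorem puiseux_closures (H : AddSubmonoid ℚ) (hpos : ∀ x ∈ H, 0 ≤ x)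
    (hnt : ∃ x ∈ H, x ≠ 0) (n : ℕ)
    (hn1 : ∀ x ∈ H, x ≠ 0 → (n : ℤ) ∣ x.num)
    (hn2 : ∀ m : ℤ, (∀ x ∈ H, x ≠ 0 → m ∣ x.num) → m ∣ (n : ℤ)) :
    let Q : Set ℚ := (AddSubgroup.closure (H : Set ℚ) : Set ℚ)
    let semin : Set ℚ := {x ∈ Q | ∃ N : ℕ, ∀ m : ℕ, N ≤ m → (m : ℚ) * x ∈ H}
    let root : Set ℚ := {x ∈ Q | ∃ N : ℕ, 0 < N ∧ (N : ℚ) * x ∈ H}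
    let cic : Set ℚ := {x ∈ Q | ∃ c ∈ H, ∀ m : ℕ, c + (m : ℚ) * x ∈ H}
    semin = root ∧ root = cic ∧ cic = {x ∈ Q | 0 ≤ x} ∧
      cic = (fun y : ℚ => (n : ℚ) * y) ''
        (AddSubmonoid.closure {q : ℚ | ∃ x ∈ H, x ≠ 0 ∧ q = 1 / (x.den : ℚ)} : Set ℚ) :=
  puiseux_closures_general H hpos n hn1 hn2
end

section
/- A nontrivial Puiseux monoid H is a valuation monoid if and only if it is seminormal. -/
/-!
Every element of the quotient group is a difference `a - b` of elements of `H`. If `H` is a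
valuation monoid, `a - b` or `b - a` lies in `H`; in the second case `a - b ≤ 0`, while
`a - b ≥ 0` as soon as some positive multiple of it lies in `H`.

Conversely, for `0 < b ≤ a` in `H` write `q • a = p • b` with `p, q` coprime. Then
`p • (a - b) = (p - q) • a` and `q • (a - b) = (p - q) • b` lie in `H`, so every large multiple
of `a - b` lies in `H` (Chicken McNugget), and seminormality gives `a - b ∈ H`.
-/

theorem AddSubmonoid.exists_sub_eq_of_mem_addSubgroupClosure {G : Type*} [AddCommGroup G]
    (M : AddSubmonoid G) {x : G} (hx : x ∈ AddSubgroup.closure (M : Set G)) :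
    ∃ a ∈ M, ∃ b ∈ M, a - b = x := by
  induction hx using AddSubgroup.closure_induction with
  | mem x hx => exact ⟨x, hx, 0, M.zero_mem, sub_zero x⟩
  | zero => exact ⟨0, M.zero_mem, 0, M.zero_mem, sub_zero 0⟩
  | add x y _ _ hx hy =>
    obtain ⟨a, ha, b, hb, rfl⟩ := hx
    obtain ⟨c, hc, d, hd, rfl⟩ := hy
    exact ⟨a + c, add_mem ha hc, b + d, add_mem hb hd, add_sub_add_comm a c b d⟩
  | neg x _ hx =>
    obtain ⟨a, ha, b, hb, rfl⟩ := hx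
    exact ⟨b, hb, a, ha, (neg_sub a b).symm⟩

theorem AddSubmonoid.exists_forall_ge_nsmul_mem_of_coprime {M : Type*} [AddMonoid M]
    (H : AddSubmonoid M) {x : M} {p q : ℕ} (hpq : p.Coprime q) (hp : p • x ∈ H)
    (hq : q • x ∈ H) : ∃ N : ℕ, ∀ m ≥ N, m • x ∈ H := by
  set S := H.comap (multiplesHom M x)
  have hgcd : Nat.setGcd S = 1 :=
    Nat.eq_one_of_dvd_coprimes hpq (Nat.setGcd_dvd_of_mem hp) (Nat.setGcd_dvd_of_mem hq)
  obtain ⟨N, hN⟩ := Nat.exists_mem_closure_of_ge (S : Set ℕ)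
  refine ⟨N, fun m hm => ?_⟩
  have hm' := hN m hm (hgcd ▸ one_dvd m)
  rwa [AddSubmonoid.closure_eq] at hm'

theorem Rat.exists_coprime_nsmul_eq_nsmul {a b : ℚ} (ha : 0 ≤ a) (hb : 0 < b) :
    ∃ p q : ℕ, p.Coprime q ∧ q • a = p • b := by
  set r := a / b
  refine ⟨r.num.natAbs, r.den, r.reduced, ?_⟩
  have hnum : (r.num.natAbs : ℚ) = r.num := by
    rw [Nat.cast_natAbs, abs_of_nonneg (Rat.num_nonneg.2 (div_nonneg ha hb.le))]
  rw [nsmul_eq_mul, nsmul_eq_mul, hnum, ← Rat.mul_den_eq_num, div_mul_eq_mul_div,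
    div_mul_cancel₀ _ hb.ne', mul_comm]

theorem sub_mem_of_seminormal {H : AddSubmonoid ℚ} (hpos : ∀ x ∈ H, 0 ≤ x)
    (hsemi : ∀ x ∈ (AddSubgroup.closure (H : Set ℚ) : Set ℚ),
      (∃ N : ℕ, ∀ m : ℕ, N ≤ m → (m : ℚ) * x ∈ H) → x ∈ H)
    {a b : ℚ} (ha : a ∈ H) (hb : b ∈ H) (hba : b ≤ a) : a - b ∈ H := by
  rcases (hpos b hb).eq_or_lt with rfl | hb0
  · simpa using ha
  obtain ⟨p, q, hpq, hqp⟩ := Rat.exists_coprime_nsmul_eq_nsmul (hb0.le.trans hba) hb0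
  have hqp_le : q ≤ p := by
    have : (q : ℚ) * b ≤ p * b := by
      simpa only [← nsmul_eq_mul, ← hqp] using nsmul_le_nsmul_right hba q
    exact_mod_cast le_of_mul_le_mul_right this hb0
  have hp : p • (a - b) ∈ H := by
    rw [nsmul_sub, ← hqp, sub_eq_add_neg, ← sub_nsmul a hqp_le]
    exact nsmul_mem ha _
  have hq : q • (a - b) ∈ H := by
    rw [nsmul_sub, hqp, sub_eq_add_neg, ← sub_nsmul b hqp_le]
    exact nsmul_mem hb _
  obtain ⟨N, hN⟩ := H.exists_forall_ge_nsmul_mem_of_coprime hpq hp hq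
  refine hsemi _ (sub_mem (AddSubgroup.subset_closure ha) (AddSubgroup.subset_closure hb))
    ⟨N, fun m hm => ?_⟩
  simpa only [nsmul_eq_mul] using hN m hm

theorem puiseux_valuation_iff_seminormal_general (H : AddSubmonoid ℚ)
    (hpos : ∀ x ∈ H, 0 ≤ x) :
    (∀ a ∈ H, ∀ b ∈ H, (∃ h ∈ H, a = b + h) ∨ (∃ h ∈ H, b = a + h)) ↔
    (∀ x ∈ (AddSubgroup.closure (H : Set ℚ) : Set ℚ),
      (∃ N : ℕ, ∀ m : ℕ, N ≤ m → (m : ℚ) * x ∈ H) → x ∈ H) := by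
  constructor
  · rintro hval x hx ⟨N, hN⟩
    obtain ⟨a, ha, b, hb, rfl⟩ := H.exists_sub_eq_of_mem_addSubgroupClosure hx
    have hx0 : 0 ≤ a - b :=
      nonneg_of_mul_nonneg_right (hpos _ (hN (N + 1) N.le_succ)) (by positivity)
    rcases hval a ha b hb with ⟨h, hh, rfl⟩ | ⟨h, hh, rfl⟩
    · rwa [add_sub_cancel_left]
    · obtain rfl : h = 0 := by linarith [hpos h hh]
      rw [add_zero, sub_self]
      exact H.zero_mem
  · intro hsemi a ha b hb
    rcases le_total b a with hba | hab
    · exact Or.inl ⟨a - b, sub_mem_of_seminormal hpos hsemi ha hb hba, by ring⟩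
    · exact Or.inr ⟨b - a, sub_mem_of_seminormal hpos hsemi hb ha hab, by ring⟩

/-- A nontrivial Puiseux monoid is a valuation monoid iff it is seminormal. -/
theorem puiseux_valuation_iff_seminormal (H : AddSubmonoid ℚ)
    (hpos : ∀ x ∈ H, 0 ≤ x) (hnt : ∃ x ∈ H, x ≠ 0) :
    (∀ a ∈ H, ∀ b ∈ H, (∃ h ∈ H, a = b + h) ∨ (∃ h ∈ H, b = a + h)) ↔
    (∀ x ∈ (AddSubgroup.closure (H : Set ℚ) : Set ℚ),
      (∃ N : ℕ, ∀ m : ℕ, N ≤ m → (m : ℚ) * x ∈ H) → x ∈ H) :=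
  puiseux_valuation_iff_seminormal_general H hpos
end

section
/- The complete integral closure of any nontrivial Puiseux monoid is a valuation monoid. -/
/-!
Every `x` in the difference group of a submonoid `H ⊆ ℚ` has the form `u - v` with `u, v ∈ H`.
If `u ≠ 0`, one of `x`, `-x` is a nonnegative rational multiple of `u`, say `N • x = k • u`.
Writing `m = q N + r` with `r < N`, the element
`N • v + m • x = (N - r) • v + r • u + (q k) • u` lies in `H` for every `m`, so that one of
`x`, `-x` is completely integral over `H` (if `u = 0`, then `-x = v ∈ H`). Applied to
`x = a - b`, this is the valuation property.
-/

def AddSubmonoid.completeIntegralClosure {G : Type*} [AddCommGroup G] (H : AddSubmonoid G) :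
    Set G :=
  {x ∈ AddSubgroup.closure (H : Set G) | ∃ c ∈ H, ∀ m : ℕ, c + m • x ∈ H}

theorem Rat.exists_nsmul_eq_nsmul_of_div_nonneg {x p : ℚ} (hp : p ≠ 0) (hxp : 0 ≤ x / p) :
    ∃ N k : ℕ, 0 < N ∧ N • x = k • p := by
  refine ⟨(x / p).den, (x / p).num.toNat, (x / p).den_pos, ?_⟩
  have hnum : ((x / p).num.toNat : ℚ) = (x / p).num := by
    exact_mod_cast Int.toNat_of_nonneg (Rat.num_nonneg.2 hxp)
  rw [nsmul_eq_mul, nsmul_eq_mul, hnum, ← Rat.mul_den_eq_num]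
  field_simp

namespace AddSubmonoid

section AddCommGroup

variable {G : Type*} [AddCommGroup G] (H : AddSubmonoid G)

theorem exists_sub_of_mem_addSubgroupClosure {x : G}
    (hx : x ∈ AddSubgroup.closure (H : Set G)) : ∃ u ∈ H, ∃ v ∈ H, x = u - v := by
  induction hx using AddSubgroup.closure_induction with
  | mem y hy => exact ⟨y, hy, 0, H.zero_mem, (sub_zero y).symm⟩
  | zero => exact ⟨0, H.zero_mem, 0, H.zero_mem, (sub_zero 0).symm⟩
  | add y z _ _ hy hz =>
    obtain ⟨u₁, hu₁, v₁, hv₁, rfl⟩ := hy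
    obtain ⟨u₂, hu₂, v₂, hv₂, rfl⟩ := hz
    exact ⟨u₁ + u₂, H.add_mem hu₁ hu₂, v₁ + v₂, H.add_mem hv₁ hv₂, by abel⟩
  | neg y _ hy =>
    obtain ⟨u, hu, v, hv, rfl⟩ := hy
    exact ⟨v, hv, u, hu, neg_sub u v⟩

theorem mem_completeIntegralClosure_of_nsmul_eq {u v p : G} (hu : u ∈ H) (hv : v ∈ H)
    (hp : p ∈ H) {N k : ℕ} (hN : 0 < N) (hNk : N • (u - v) = k • p) :
    u - v ∈ H.completeIntegralClosure := by
  refine ⟨AddSubgroup.sub_mem _ (AddSubgroup.subset_closure hu) (AddSubgroup.subset_closure hv),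
    N • v, H.nsmul_mem hv N, fun m => ?_⟩
  obtain ⟨q, r, hr, rfl⟩ : ∃ q r, r < N ∧ m = N * q + r :=
    ⟨m / N, m % N, Nat.mod_lt m hN, (Nat.div_add_mod m N).symm⟩
  have hsplit : N • v + (N * q + r) • (u - v) = (N - r) • v + r • u + q • k • p := by
    rw [add_nsmul, mul_nsmul, hNk, nsmul_sub]
    nth_rw 1 [← Nat.sub_add_cancel hr.le]
    rw [add_nsmul]
    abel
  rw [hsplit]
  exact H.add_mem (H.add_mem (H.nsmul_mem hv _) (H.nsmul_mem hu _))
    (H.nsmul_mem (H.nsmul_mem hp k) q)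

end AddCommGroup

theorem mem_or_neg_mem_completeIntegralClosure (H : AddSubmonoid ℚ) {x : ℚ}
    (hx : x ∈ AddSubgroup.closure (H : Set ℚ)) :
    x ∈ H.completeIntegralClosure ∨ -x ∈ H.completeIntegralClosure := by
  obtain ⟨u, hu, v, hv, rfl⟩ := H.exists_sub_of_mem_addSubgroupClosure hx
  rw [neg_sub]
  by_cases hu0 : u = 0
  · subst hu0
    exact Or.inr <| H.mem_completeIntegralClosure_of_nsmul_eq hv H.zero_mem hv one_pos
      (k := 1) (by rw [sub_zero])
  rcases le_total 0 ((u - v) / u) with h | h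
  · obtain ⟨N, k, hN, hNk⟩ := Rat.exists_nsmul_eq_nsmul_of_div_nonneg hu0 h
    exact Or.inl <| H.mem_completeIntegralClosure_of_nsmul_eq hu hv hu hN hNk
  · have h' : 0 ≤ (v - u) / u := by rw [← neg_sub, neg_div]; exact neg_nonneg.2 h
    obtain ⟨N, k, hN, hNk⟩ := Rat.exists_nsmul_eq_nsmul_of_div_nonneg hu0 h'
    exact Or.inr <| H.mem_completeIntegralClosure_of_nsmul_eq hv hu hu hN hNk

end AddSubmonoid

theorem puiseux_cic_valuation_general (H : AddSubmonoid ℚ) :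
    let cic : Set ℚ := {x ∈ (AddSubgroup.closure (H : Set ℚ) : Set ℚ) |
      ∃ c ∈ H, ∀ m : ℕ, c + (m : ℚ) * x ∈ H}
    ∀ a ∈ cic, ∀ b ∈ cic, (∃ h ∈ cic, a = b + h) ∨ (∃ h ∈ cic, b = a + h) := by
  intro cic a ha b hb
  have hcic : cic = H.completeIntegralClosure := by
    simp only [cic, AddSubmonoid.completeIntegralClosure, nsmul_eq_mul, SetLike.mem_coe]
  rw [hcic] at ha hb ⊢
  rcases H.mem_or_neg_mem_completeIntegralClosure (sub_mem ha.1 hb.1) with h | h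
  · exact Or.inl ⟨a - b, h, (add_sub_cancel b a).symm⟩
  · exact Or.inr ⟨b - a, neg_sub a b ▸ h, (add_sub_cancel a b).symm⟩

/-- The complete integral closure of a nontrivial Puiseux monoid is a
valuation monoid. -/
theorem puiseux_cic_valuation (H : AddSubmonoid ℚ)
    (hpos : ∀ x ∈ H, 0 ≤ x) (hnt : ∃ x ∈ H, x ≠ 0) :
    let cic : Set ℚ := {x ∈ (AddSubgroup.closure (H : Set ℚ) : Set ℚ) |
      ∃ c ∈ H, ∀ m : ℕ, c + (m : ℚ) * x ∈ H}
    ∀ a ∈ cic, ∀ b ∈ cic, (∃ h ∈ cic, a = b + h) ∨ (∃ h ∈ cic, b = a + h) :=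
  puiseux_cic_valuation_general H
end

section
/- Let H be a Puiseux monoid with complete integral closure Ĥ and conductor f = (H : Ĥ) = {x ∈ q(H) : x + Ĥ ⊆ H}, and let σ = sup(Ĥ ∖ H) (with sup ∅ = 0). Then f = ∅ if σ = ∞, and f = {x ∈ H : x ≥ σ} if σ < ∞. -/
private lemma puiseux_crux (H : AddSubmonoid ℚ) (hpos : ∀ x ∈ H, 0 ≤ x)
    (x y c : ℚ) (hxH : x ∈ H)
    (hxf : ∀ z : ℚ, z ∈ AddSubgroup.closure (H : Set ℚ) →
      (∃ c' ∈ H, ∀ m : ℕ, c' + (m : ℚ) * z ∈ H) → x + z ∈ H)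
    (hcH : c ∈ H) (hy : ∀ m : ℕ, c + (m : ℚ) * y ∈ H) (hyH : y ∉ H) :
    y ≤ x := by
  by_contra hlt
  push_neg at hlt
  have hx0 : 0 ≤ x := hpos x hxH
  have hy0 : 0 < y := lt_of_le_of_lt hx0 hlt
  -- common denominator
  have hnum : ∀ q : ℚ, (q.num : ℚ) = q * (q.den : ℚ) := by
    intro q
    have hd : ((q.den : ℚ)) ≠ 0 := by
      have : (0:ℚ) < (q.den : ℚ) := by exact_mod_cast q.pos
      linarith
    have h : ((q.num:ℚ)/(q.den:ℚ)) * (q.den:ℚ) = (q.num:ℚ) := div_mul_cancel₀ _ hd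
    rw [← h, Rat.num_div_den]
  set Nq : ℚ := (x.den : ℚ) * (y.den : ℚ) * (c.den : ℚ) with hNqdef
  have hxd : (0:ℚ) < (x.den : ℚ) := by exact_mod_cast x.pos
  have hyd : (0:ℚ) < (y.den : ℚ) := by exact_mod_cast y.pos
  have hcd : (0:ℚ) < (c.den : ℚ) := by exact_mod_cast c.pos
  have hN0 : 0 < Nq := by positivity
  have hNne : Nq ≠ 0 := hN0.ne'
  set A : Set ℤ := {n : ℤ | 0 ≤ n ∧ (n : ℚ) / Nq ∈ H} with hAdef
  have hA0 : (0:ℤ) ∈ A := ⟨le_refl 0, by simpa using H.zero_mem⟩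
  have hAadd : ∀ a ∈ A, ∀ b ∈ A, a + b ∈ A := by
    rintro a ⟨ha0, haH⟩ b ⟨hb0, hbH⟩
    refine ⟨by omega, ?_⟩
    have h : ((a + b : ℤ) : ℚ) / Nq = (a:ℚ)/Nq + (b:ℚ)/Nq := by push_cast; ring
    rw [h]; exact H.add_mem haH hbH
  have hmem : ∀ (n : ℤ) (q : ℚ), q ∈ H → (n:ℚ) = Nq * q → n ∈ A := by
    intro n q hq hcast
    have h0 : (0:ℚ) ≤ (n:ℚ) := by rw [hcast]; exact mul_nonneg hN0.le (hpos q hq)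
    refine ⟨by exact_mod_cast h0, ?_⟩
    rw [hcast, mul_comm, mul_div_assoc, div_self hNne, mul_one]
    exact hq
  -- integer representatives
  set xi : ℤ := (y.den : ℤ) * (c.den : ℤ) * x.num with hxidef
  set yi : ℤ := (x.den : ℤ) * (c.den : ℤ) * y.num with hyidef
  set ci : ℤ := (x.den : ℤ) * (y.den : ℤ) * c.num with hcidef
  have hxi : (xi : ℚ) = Nq * x := by
    rw [hxidef, hNqdef]; push_cast; rw [hnum x]; ring
  have hyi : (yi : ℚ) = Nq * y := by
    rw [hyidef, hNqdef]; push_cast; rw [hnum y]; ring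
  have hci : (ci : ℚ) = Nq * c := by
    rw [hcidef, hNqdef]; push_cast; rw [hnum c]; ring
  have hxiA : xi ∈ A := hmem xi x hxH hxi
  have hcyA : ∀ m : ℕ, ci + (m:ℤ) * yi ∈ A := by
    intro m
    refine hmem _ (c + (m:ℚ) * y) (hy m) ?_
    rw [hcidef, hyidef, hNqdef]
    push_cast
    rw [hnum c, hnum y]; ring
  -- the subgroup generated by A is cyclic
  obtain ⟨d₀, hG⟩ := Int.subgroup_cyclic (AddSubgroup.closure A)
  have hdvd : ∀ n ∈ AddSubgroup.closure A, d₀ ∣ n := by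
    intro n hn
    rw [hG] at hn
    obtain ⟨k, hk⟩ := AddSubgroup.mem_closure_singleton.mp hn
    exact ⟨k, by rw [← hk, zsmul_eq_mul, Int.cast_id, mul_comm]⟩
  have hdxi : d₀ ∣ xi := hdvd xi (AddSubgroup.subset_closure hxiA)
  have hdci : d₀ ∣ ci := hdvd ci (AddSubgroup.subset_closure (by simpa using hcyA 0))
  have hdyi : d₀ ∣ yi := by
    have h1 : d₀ ∣ ci + yi := hdvd _ (AddSubgroup.subset_closure (by simpa using hcyA 1))
    have h2 := dvd_sub h1 hdci
    simpa using h2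
  have hyipos : 0 < yi := by
    have : (0:ℚ) < (yi:ℚ) := by rw [hyi]; exact mul_pos hN0 hy0
    exact_mod_cast this
  have hd0ne : d₀ ≠ 0 := by
    rintro rfl
    rw [zero_dvd_iff] at hdyi
    omega
  set D : ℤ := (d₀.natAbs : ℤ) with hDdef
  have hD0 : 0 < D := by
    rw [hDdef]
    exact_mod_cast Int.natAbs_pos.mpr hd0ne
  have hd0cl : d₀ ∈ AddSubgroup.closure A := by
    rw [hG]; exact AddSubgroup.subset_closure rfl
  have hDmem : D ∈ AddSubgroup.closure A := by
    rw [hDdef]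
    rcases Int.natAbs_eq d₀ with h | h
    · rw [← h]; exact hd0cl
    · have h2 : (d₀.natAbs : ℤ) = -d₀ := by omega
      rw [h2]; exact neg_mem hd0cl
  have hDdvd : ∀ n : ℤ, d₀ ∣ n → D ∣ n := fun n h => Int.natAbs_dvd.mpr h
  -- every element of the closure is a difference of elements of A
  have hdiff : ∀ n ∈ AddSubgroup.closure A, ∃ a ∈ A, ∃ b ∈ A, n = a - b := by
    intro n hn
    refine AddSubgroup.closure_induction ?_ ?_ ?_ ?_ hn
    · intro z hz; exact ⟨z, hz, 0, hA0, by ring⟩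
    · exact ⟨0, hA0, 0, hA0, by ring⟩
    · rintro u v hu hv ⟨a1, ha1, b1, hb1, rfl⟩ ⟨a2, ha2, b2, hb2, rfl⟩
      exact ⟨a1 + a2, hAadd _ ha1 _ ha2, b1 + b2, hAadd _ hb1 _ hb2, by ring⟩
    · rintro u hu ⟨a1, ha1, b1, hb1, rfl⟩
      exact ⟨b1, hb1, a1, ha1, by ring⟩
  obtain ⟨a0, ha0A, b0, hb0A, hab0⟩ := hdiff D hDmem
  -- arrange the representative b ≥ 1
  obtain ⟨a, haA, b, hbA, hab, hb1⟩ :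
      ∃ a ∈ A, ∃ b ∈ A, D = a - b ∧ 1 ≤ b := by
    rcases eq_or_lt_of_le hb0A.1 with h | h
    · have ha0D : a0 = D := by omega
      refine ⟨a0 + a0, hAadd _ ha0A _ ha0A, a0, ha0A, by omega, by omega⟩
    · exact ⟨a0, ha0A, b0, hb0A, hab0, by omega⟩
  -- natural multiples stay in A
  have hsmul : ∀ (n : ℕ), ∀ m ∈ A, (n:ℤ) * m ∈ A := by
    intro n
    induction n with
    | zero => intro m hm; simpa using hA0
    | succ k ih =>
      intro m hm
      have h : ((k+1 : ℕ):ℤ) * m = (k:ℤ) * m + m := by push_cast; ring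
      rw [h]; exact hAadd _ (ih m hm) _ hm
  have hsmul' : ∀ (t : ℤ), ∀ m ∈ A, 0 ≤ t → t * m ∈ A := by
    intro t m hm ht
    have := hsmul t.toNat m hm
    rwa [Int.toNat_of_nonneg ht] at this
  -- Frobenius-type statement: b*b + k*D ∈ A for all k
  have hfrob : ∀ k : ℕ, b * b + (k:ℤ) * D ∈ A := by
    intro k
    set K : ℤ := (k:ℤ) with hK
    have hb0' : (0:ℤ) < b := by omega
    have hr0 : 0 ≤ K % b := Int.emod_nonneg K hb0'.ne'
    have hrb : K % b < b := Int.emod_lt_of_pos K hb0'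
    have hq0 : 0 ≤ K / b := Int.ediv_nonneg (by positivity) hb0'.le
    have h1 : b * (K / b) + K % b = K := Int.mul_ediv_add_emod K b
    have h2 : a = b + D := by omega
    have key : b * b + K * D = (b + (K / b) * D - K % b) * b + (K % b) * a := by
      rw [h2]; linear_combination (-D) * h1
    rw [key]
    refine hAadd _ (hsmul' _ _ hbA ?_) _ (hsmul' _ _ haA hr0)
    have : 0 ≤ (K / b) * D := mul_nonneg hq0 hD0.le
    omega
  -- the quantum δ = D / Nq
  set δ : ℚ := (D:ℚ) / Nq with hδdef
  have hδcl : δ ∈ AddSubgroup.closure (H : Set ℚ) := by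
    have h : δ = (a:ℚ)/Nq - (b:ℚ)/Nq := by
      rw [hδdef, div_sub_div_same]
      congr 1
      exact_mod_cast hab
    rw [h]
    exact sub_mem (AddSubgroup.subset_closure haA.2) (AddSubgroup.subset_closure hbA.2)
  have hstep : ∀ m : ℕ, x + (m:ℚ) * δ ∈ H := by
    intro m
    apply hxf ((m:ℚ) * δ)
    · have h : (m:ℚ) * δ = m • δ := (nsmul_eq_mul m δ).symm
      rw [h]
      exact AddSubgroup.nsmul_mem _ hδcl m
    · refine ⟨((b*b : ℤ) : ℚ)/Nq, (hsmul' b b hbA (by omega)).2, ?_⟩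
      intro k
      have hmemk := (hfrob (k * m)).2
      have h : ((b*b + ((k*m : ℕ):ℤ) * D : ℤ) : ℚ) / Nq
          = ((b*b : ℤ):ℚ)/Nq + (k:ℚ) * ((m:ℚ) * δ) := by
        rw [hδdef]
        push_cast
        ring
      rw [← h]
      exact hmemk
  -- conclude y ∈ H, contradiction
  have hdvd_yx : D ∣ yi - xi := hDdvd _ (dvd_sub hdyi hdxi)
  obtain ⟨j, hj⟩ := hdvd_yx
  have hyx : 0 < yi - xi := by
    have h : (0:ℚ) < ((yi - xi : ℤ) : ℚ) := by
      push_cast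
      rw [hyi, hxi]
      nlinarith
    exact_mod_cast h
  have hjpos : 0 < j := by
    rcases mul_pos_iff.mp (hj ▸ hyx) with ⟨_, h⟩ | ⟨h, _⟩
    · exact h
    · omega
  have hyval : y = x + ((j.toNat : ℕ) : ℚ) * δ := by
    have hjq : ((j.toNat : ℕ) : ℚ) = (j:ℚ) := by
      have := Int.toNat_of_nonneg hjpos.le
      exact_mod_cast congrArg (fun t : ℤ => (t:ℚ)) this
    have h2 : (D:ℚ) * (j:ℚ) = Nq * (y - x) := by
      have h1 : ((yi - xi : ℤ):ℚ) = Nq * (y - x) := by push_cast; rw [hyi, hxi]; ring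
      rw [← h1, hj]; push_cast; ring
    rw [hjq, hδdef]
    field_simp
    linarith [h2]
  exact hyH (hyval ▸ hstep j.toNat)
/-- Description of the conductor f = (H : Ĥ) of a Puiseux monoid:
with σ = sup(Ĥ ∖ H) (as a real number, sup ∅ = 0), f = ∅ if Ĥ ∖ H is
unbounded and f = H_{≥ σ} otherwise. -/
theorem puiseux_conductor (H : AddSubmonoid ℚ) (hpos : ∀ x ∈ H, 0 ≤ x)
    (hnt : ∃ x ∈ H, x ≠ 0) :
    let cic : Set ℚ := {x ∈ (AddSubgroup.closure (H : Set ℚ) : Set ℚ) |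
      ∃ c ∈ H, ∀ m : ℕ, c + (m : ℚ) * x ∈ H}
    let f : Set ℚ := {x ∈ (AddSubgroup.closure (H : Set ℚ) : Set ℚ) |
      ∀ y ∈ cic, x + y ∈ H}
    let S : Set ℝ := (fun q : ℚ => (q : ℝ)) '' (cic \ (H : Set ℚ))
    (¬ BddAbove S → f = ∅) ∧
    (BddAbove S → f = {x : ℚ | x ∈ H ∧ sSup S ≤ (x : ℝ)}) := by
  intro cic f S
  have hc0 : (0:ℚ) ∈ cic := by
    refine ⟨AddSubgroup.zero_mem _, 0, H.zero_mem, fun m => by simpa using H.zero_mem⟩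
  have hHc : ∀ h ∈ H, h ∈ cic := by
    intro h hh
    refine ⟨AddSubgroup.subset_closure hh, 0, H.zero_mem, fun m => ?_⟩
    rw [zero_add]
    have h1 := nsmul_mem hh m
    rwa [nsmul_eq_mul] at h1
  have hadd : ∀ y1 ∈ cic, ∀ y2 ∈ cic, y1 + y2 ∈ cic := by
    rintro y1 ⟨hy1, c1, hc1, hm1⟩ y2 ⟨hy2, c2, hc2, hm2⟩
    refine ⟨add_mem hy1 hy2, c1 + c2, H.add_mem hc1 hc2, fun m => ?_⟩
    have h : c1 + c2 + (m:ℚ) * (y1 + y2) = (c1 + (m:ℚ) * y1) + (c2 + (m:ℚ) * y2) := by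
      ring
    rw [h]
    exact H.add_mem (hm1 m) (hm2 m)
  have hnn : ∀ y ∈ cic, 0 ≤ y := by
    rintro y ⟨-, c, hcH, hcy⟩
    by_contra h
    push_neg at h
    obtain ⟨m, hm⟩ := exists_nat_gt (c / (-y))
    have hy' : (0:ℚ) < -y := by linarith
    have h1 : c < (m:ℚ) * (-y) := (div_lt_iff₀ hy').mp hm
    have h2 := hpos _ (hcy m)
    nlinarith
  have hfH : ∀ x ∈ f, x ∈ H := by
    intro x hx
    have h := hx.2 0 hc0
    rwa [add_zero] at h
  have hcrux : ∀ x ∈ f, ∀ y ∈ cic, y ∉ H → y ≤ x := by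
    rintro x hx y ⟨hycl, c, hcH, hcy⟩ hyH
    exact puiseux_crux H hpos x y c (hfH x hx)
      (fun z hz hwz => hx.2 z ⟨hz, hwz⟩) hcH hcy hyH
  constructor
  · intro hub
    rw [Set.eq_empty_iff_forall_notMem]
    intro x hx
    apply hub
    refine ⟨(x:ℝ), ?_⟩
    rintro s ⟨q, ⟨hq1, hq2⟩, rfl⟩
    show ((q:ℝ)) ≤ (x:ℝ)
    exact_mod_cast hcrux x hx q hq1 hq2
  · intro hb
    ext z
    constructor
    · intro hz
      refine ⟨hfH z hz, Real.sSup_le ?_ (by exact_mod_cast hpos z (hfH z hz))⟩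
      rintro s ⟨q, ⟨hq1, hq2⟩, rfl⟩
      show ((q:ℝ)) ≤ (z:ℝ)
      exact_mod_cast hcrux z hz q hq1 hq2
    · rintro ⟨hzH, hzs⟩
      refine ⟨AddSubgroup.subset_closure hzH, ?_⟩
      intro y hy
      by_contra hne
      have hzy : z + y ∈ cic := hadd z (hHc z hzH) y hy
      have hS : ((z + y : ℚ) : ℝ) ∈ S := ⟨z + y, ⟨hzy, hne⟩, rfl⟩
      have h1 : ((z + y : ℚ) : ℝ) ≤ sSup S := le_csSup hb hS
      have h2 : (0:ℚ) ≤ y := hnn y hy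
      have h3 : (z + y : ℚ) ≤ z := by exact_mod_cast h1.trans hzs
      have hy0 : y = 0 := le_antisymm (by linarith) h2
      exact hne (by rw [hy0, add_zero]; exact hzH)
end

section
/- Let H be a commutative cancellative monoid with nonempty maximal ideal m = H ∖ H^×. Then H is strongly primary if and only if H is primary and there exist a ∈ m and n ∈ N such that m^n ⊆ aH. -/
open Pointwise

/-- A cancellative commutative monoid with nonempty maximal ideal m = H ∖ H^× is
strongly primary iff it is primary and m^n ⊆ aH for some non-unit a and n ∈ ℕ. -/
theorem stronglyPrimary_iff (M : Type*) [CancelCommMonoid M]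
    (hm : ∃ a : M, ¬IsUnit a) :
    (∀ a : M, ¬IsUnit a → ∃ n : ℕ, 0 < n ∧
        {b : M | ¬IsUnit b} ^ n ⊆ {c : M | a ∣ c}) ↔
    ((∀ a b : M, ¬IsUnit a → ¬IsUnit b → ∃ n : ℕ, 0 < n ∧ a ∣ b ^ n) ∧
      ∃ a : M, ¬IsUnit a ∧ ∃ n : ℕ, 0 < n ∧
        {b : M | ¬IsUnit b} ^ n ⊆ {c : M | a ∣ c}) := by
  constructor
  · intro h
    refine ⟨fun a b ha hb => ?_, ?_⟩
    · obtain ⟨n, hn, hsub⟩ := h a ha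
      exact ⟨n, hn, hsub (Set.pow_mem_pow hb)⟩
    · obtain ⟨a, ha⟩ := hm
      exact ⟨a, ha, h a ha⟩
  · rintro ⟨hprim, a₀, ha₀, n₀, hn₀, hsub⟩
    intro a ha
    obtain ⟨k, hk, hdvd⟩ := hprim a a₀ ha ha₀
    refine ⟨k * n₀, Nat.mul_pos hk hn₀, ?_⟩
    have key : ∀ k, ∀ x ∈ ({b : M | ¬IsUnit b} : Set M) ^ (k * n₀), a₀ ^ k ∣ x := by
      intro k
      induction k with
      | zero => simp
      | succ k ih =>
        intro x hx
        rw [Nat.succ_mul, pow_add] at hx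
        obtain ⟨y, hy, z, hz, rfl⟩ := Set.mem_mul.mp hx
        rw [pow_succ]
        exact mul_dvd_mul (ih y hy) (hsub hz)
    intro x hx
    exact hdvd.trans (key k x hx)
end

section
/- Every strongly primary monoid is a BF-monoid: every non-unit is a finite product of atoms, and every element has a finite set of lengths. Moreover, for every non-unit a, sup L(a) ≤ M(a), where M(a) is the least n with (H ∖ H^×)^n ⊆ aH. -/
/-!
If `(H ∖ H^×)^n ⊆ aH` and `a` is associated to a product of `k > n` non-units, then the first
`n` factors already form a multiple of `a`, so by cancellation the remaining (nonempty) product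
is a unit, which is impossible. Hence factorizations of `a` into non-units have length at most
`n`; one of maximal length consists of atoms, since splitting a non-atom would lengthen it.
A unit `a` satisfies the hypothesis with `n = 0`, so all sets of lengths are finite.
-/

open Pointwise

section CancelCommMonoid

variable {M : Type*} [CancelCommMonoid M]

theorem isUnit_of_mul_dvd_self {a q : M} (h : a * q ∣ a) : IsUnit q := by
  obtain ⟨r, hr⟩ := h
  have : a * (q * r) = a * 1 := by rw [mul_one, ← mul_assoc, ← hr]
  exact IsUnit.of_mul_eq_one r (mul_left_cancel this)

theorem card_le_of_nonunits_pow_subset_dvd {a : M} {n : ℕ}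
    (hn : nonunits M ^ n ⊆ {c | a ∣ c}) {k : ℕ} {f : Fin k → M}
    (hf : ∀ i, ¬IsUnit (f i)) (hfa : Associated (∏ i, f i) a) : k ≤ n := by
  by_contra! hk
  obtain ⟨m, rfl⟩ : ∃ m, k = n + (m + 1) := ⟨k - n - 1, by omega⟩
  have hhead : a ∣ ∏ i : Fin n, f (Fin.castAdd (m + 1) i) :=
    hn (Set.mem_pow_iff_prod.mpr ⟨_, fun i => hf _, rfl⟩)
  set tail := ∏ i : Fin (m + 1), f (Fin.natAdd n i)
  have htail : IsUnit tail := isUnit_of_mul_dvd_self <|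
    calc a * tail ∣ (∏ i : Fin n, f (Fin.castAdd (m + 1) i)) * tail := mul_dvd_mul_right hhead _
      _ = ∏ i, f i := (Fin.prod_univ_add f).symm
      _ ∣ a := hfa.dvd
  simp only [tail, Fin.prod_univ_succ] at htail
  exact hf _ (isUnit_of_mul_isUnit_left htail)

end CancelCommMonoid

section CommMonoid

variable {M : Type*} [CommMonoid M]

theorem exists_longer_nonunit_factorization {k : ℕ} {f : Fin (k + 1) → M}
    (hf : ∀ i, ¬IsUnit (f i)) {i : Fin (k + 1)} (hi : ¬Irreducible (f i)) :
    ∃ g : Fin (k + 2) → M, (∀ j, ¬IsUnit (g j)) ∧ ∏ j, g j = ∏ j, f j := by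
  obtain ⟨b, c, hbc, hb, hc⟩ : ∃ b c, f i = b * c ∧ ¬IsUnit b ∧ ¬IsUnit c := by
    by_contra! h
    exact hi ⟨hf i, fun b c hbc => or_iff_not_imp_left.mpr (h b c hbc)⟩
  refine ⟨Fin.cons b (Fin.cons c fun j => f (i.succAbove j)), ?_, ?_⟩
  · exact Fin.cases hb (Fin.cases hc fun j => hf _)
  · rw [Fin.prod_cons, Fin.prod_cons, ← mul_assoc, ← hbc, Fin.prod_univ_succAbove f i]

theorem exists_irreducible_factorization_of_bddAbove {a : M} (ha : ¬IsUnit a)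
    (hbdd : BddAbove {k | ∃ f : Fin k → M, (∀ i, ¬IsUnit (f i)) ∧ ∏ i, f i = a}) :
    ∃ (k : ℕ) (f : Fin k → M), (∀ i, Irreducible (f i)) ∧ ∏ i, f i = a := by
  set lengths := {k | ∃ f : Fin k → M, (∀ i, ¬IsUnit (f i)) ∧ ∏ i, f i = a}
  have hone : 1 ∈ lengths := ⟨fun _ => a, fun _ => ha, Fin.prod_const 1 a ▸ pow_one a⟩
  obtain ⟨N, ⟨f, hf, hfa⟩, hmax⟩ : ∃ N ∈ lengths, ∀ k ∈ lengths, k ≤ N :=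
    ⟨_, Nat.sSup_mem ⟨1, hone⟩ hbdd, fun k hk => le_csSup hbdd hk⟩
  refine ⟨N, f, fun i => ?_, hfa⟩
  by_contra hi
  cases N with
  | zero => exact i.elim0
  | succ k =>
    obtain ⟨g, hg, hgf⟩ := exists_longer_nonunit_factorization hf hi
    have := hmax _ ⟨g, hg, hgf.trans hfa⟩
    omega

end CommMonoid

theorem stronglyPrimary_BF_general (M : Type*) [CancelCommMonoid M]
    (Mfun : M → ℕ)
    (hM : ∀ a : M, ¬IsUnit a →
      IsLeast {n : ℕ | 0 < n ∧ {b : M | ¬IsUnit b} ^ n ⊆ {c : M | a ∣ c}} (Mfun a)) :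
    (∀ a : M, ¬IsUnit a → ∃ (k : ℕ) (f : Fin k → M),
        (∀ i, Irreducible (f i)) ∧ Associated (∏ i, f i) a) ∧
    (∀ a : M, {k : ℕ | ∃ f : Fin k → M,
        (∀ i, Irreducible (f i)) ∧ Associated (∏ i, f i) a}.Finite) ∧
    (∀ a : M, ¬IsUnit a → ∀ k ∈ {k : ℕ | ∃ f : Fin k → M,
        (∀ i, Irreducible (f i)) ∧ Associated (∏ i, f i) a}, k ≤ Mfun a) := by
  have hsub (a : M) (ha : ¬IsUnit a) : nonunits M ^ Mfun a ⊆ {c | a ∣ c} := (hM a ha).1.2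
  refine ⟨fun a ha => ?_, fun a => ?_, ?_⟩
  · obtain ⟨k, f, hf, hfa⟩ := exists_irreducible_factorization_of_bddAbove ha
      ⟨Mfun a, fun k ⟨f, hf, hfa⟩ =>
        card_le_of_nonunits_pow_subset_dvd (hsub a ha) hf (.of_eq hfa)⟩
    exact ⟨k, f, hf, .of_eq hfa⟩
  · obtain ⟨n, hn⟩ : ∃ n, nonunits M ^ n ⊆ {c | a ∣ c} := by
      by_cases ha : IsUnit a
      · exact ⟨0, fun c _ => ha.dvd⟩
      · exact ⟨Mfun a, hsub a ha⟩
    refine (Set.finite_Iic n).subset fun k ⟨f, hf, hfa⟩ => ?_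
    exact card_le_of_nonunits_pow_subset_dvd hn (fun i => (hf i).not_isUnit) hfa
  · rintro a ha k ⟨f, hf, hfa⟩
    exact card_le_of_nonunits_pow_subset_dvd (hsub a ha) (fun i => (hf i).not_isUnit) hfa

/-- Every strongly primary monoid is a BF-monoid: every non-unit is a product of
atoms, all sets of lengths are finite, and sup L(a) ≤ M(a) for every non-unit a. -/
theorem stronglyPrimary_BF (M : Type*) [CancelCommMonoid M]
    (hm : ∃ a : M, ¬IsUnit a) (Mfun : M → ℕ)
    (hM : ∀ a : M, ¬IsUnit a →
      IsLeast {n : ℕ | 0 < n ∧ {b : M | ¬IsUnit b} ^ n ⊆ {c : M | a ∣ c}} (Mfun a)) :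
    (∀ a : M, ¬IsUnit a → ∃ (k : ℕ) (f : Fin k → M),
        (∀ i, Irreducible (f i)) ∧ Associated (∏ i, f i) a) ∧
    (∀ a : M, {k : ℕ | ∃ f : Fin k → M,
        (∀ i, Irreducible (f i)) ∧ Associated (∏ i, f i) a}.Finite) ∧
    (∀ a : M, ¬IsUnit a → ∀ k ∈ {k : ℕ | ∃ f : Fin k → M,
        (∀ i, Irreducible (f i)) ∧ Associated (∏ i, f i) a}, k ≤ Mfun a) :=
  stronglyPrimary_BF_general M Mfun hM
end

section
/- If H is a strongly primary Puiseux monoid, then 0 is not a limit point of H ∖ {0}; equivalently, inf(H ∖ {0}) > 0. -/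
/-- If H is a strongly primary Puiseux monoid, then 0 is not a limit point of
H ∖ {0}: the nonzero elements of H have a positive lower bound. -/
theorem stronglyPrimary_puiseux_inf_pos (H : AddSubmonoid ℚ)
    (hpos : ∀ x ∈ H, 0 ≤ x) (hnt : ∃ x ∈ H, x ≠ 0)
    (hsp : ∀ a ∈ H, a ≠ 0 → ∃ n : ℕ, 0 < n ∧ ∀ f : Fin n → ℚ,
      (∀ i, f i ∈ H ∧ f i ≠ 0) → ∃ h ∈ H, (∑ i, f i) = a + h) :
    ∃ ε : ℚ, 0 < ε ∧ ∀ x ∈ H, x ≠ 0 → ε ≤ x := by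
  obtain ⟨a, haH, ha0⟩ := hnt
  have hapos : 0 < a := lt_of_le_of_ne (hpos a haH) (Ne.symm ha0)
  obtain ⟨n, hn, hnf⟩ := hsp a haH ha0
  refine ⟨a / n, by positivity, fun x hxH hx0 => ?_⟩
  obtain ⟨h, hhH, hsum⟩ := hnf (fun _ => x) (fun _ => ⟨hxH, hx0⟩)
  have : (n : ℚ) * x = a + h := by simpa using hsum
  have hax : a ≤ (n : ℚ) * x := by
    have := hpos h hhH; linarith
  rw [div_le_iff₀ (by positivity)]
  linarith [hax]
end

section
/- Let H be a nontrivial Puiseux monoid with nonempty conductor (H : Ĥ) ≠ ∅. If 0 is not a limit point of H ∖ {0}, then H is strongly primary. -/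
/-- Chicken-McNugget-type representability: if `a` and `b` are coprime, `b > 0`,
then every `n ≥ a * b` is a nonnegative combination of `a` and `b`. -/
lemma rep_lemma (a b n : ℕ) (h : Nat.Coprime a b) (hb : 0 < b) (hn : a * b ≤ n) :
    ∃ x y : ℕ, n = x * a + y * b := by
  have key : (a : ℤ) * Nat.gcdA a b + (b : ℤ) * Nat.gcdB a b = 1 := by
    have := Nat.gcd_eq_gcd_ab a b
    rw [h] at this
    exact_mod_cast this.symm
  set u := Nat.gcdA a b
  set v := Nat.gcdB a b
  have hbz : (0 : ℤ) < (b : ℤ) := by exact_mod_cast hb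
  set x : ℤ := (n * u) % (b : ℤ) with hxdef
  have hx0 : 0 ≤ x := Int.emod_nonneg _ (by positivity)
  have hxb : x < (b : ℤ) := Int.emod_lt_of_pos _ hbz
  set k : ℤ := (n * u) / (b : ℤ)
  have hxeq : x = n * u - b * k := by
    rw [hxdef, Int.emod_def]
  set y : ℤ := (n : ℤ) * v + k * a with hydef
  have heq : (n : ℤ) = x * a + y * b := by
    rw [hxeq, hydef]
    nlinarith [key]
  have hy0 : 0 ≤ y := by
    have h1 : y * b = (n : ℤ) - x * a := by linarith
    have h2 : x * a ≤ ((b : ℤ) - 1) * a := by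
      apply mul_le_mul_of_nonneg_right _ (by positivity)
      omega
    have h3 : 0 ≤ y * b := by
      have : (a : ℤ) * b ≤ n := by exact_mod_cast hn
      nlinarith
    exact nonneg_of_mul_nonneg_right (by linarith : (0:ℤ) ≤ (b:ℤ) * y) hbz
  refine ⟨x.toNat, y.toNat, ?_⟩
  have : (n : ℤ) = (x.toNat : ℤ) * a + (y.toNat : ℤ) * b := by
    rwa [Int.toNat_of_nonneg hx0, Int.toNat_of_nonneg hy0]
  exact_mod_cast this

/-- Every element of the quotient group of `H` is a difference of two elements of `H`. -/
lemma closure_sub (H : AddSubmonoid ℚ) {g : ℚ}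
    (hg : g ∈ AddSubgroup.closure (H : Set ℚ)) : ∃ A ∈ H, ∃ B ∈ H, g = A - B := by
  have hle : AddSubgroup.closure (H : Set ℚ) ≤
      { carrier := {x : ℚ | ∃ A ∈ H, ∃ B ∈ H, x = A - B},
        zero_mem' := ⟨0, H.zero_mem, 0, H.zero_mem, by ring⟩,
        add_mem' := by
          rintro x y ⟨A, hA, B, hB, rfl⟩ ⟨A', hA', B', hB', rfl⟩
          exact ⟨A + A', H.add_mem hA hA', B + B', H.add_mem hB hB', by ring⟩,
        neg_mem' := by
          rintro x ⟨A, hA, B, hB, rfl⟩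
          exact ⟨B, hB, A, hA, by ring⟩ } :=
    AddSubgroup.closure_le _ |>.2 (fun x hx => ⟨x, hx, 0, H.zero_mem, by ring⟩)
  exact hle hg

/-- Every nonnegative element of the quotient group of a Puiseux monoid is
almost integral over it. -/
lemma mem_hat (H : AddSubmonoid ℚ) (hpos : ∀ x ∈ H, 0 ≤ x) {g : ℚ}
    (hgcl : g ∈ AddSubgroup.closure (H : Set ℚ)) (hg0 : 0 ≤ g) :
    ∃ c ∈ H, ∀ m : ℕ, c + (m : ℚ) * g ∈ H := by
  obtain ⟨A, hA, B, hB, rfl⟩ := closure_sub H hgcl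
  rcases eq_or_lt_of_le hg0 with hg | hgpos
  · exact ⟨0, H.zero_mem, fun m => by simpa [← hg] using H.zero_mem⟩
  by_cases hB0 : B = 0
  · refine ⟨0, H.zero_mem, fun m => ?_⟩
    rw [hB0, sub_zero, zero_add]
    simpa [nsmul_eq_mul] using H.nsmul_mem hA m
  have hBpos : 0 < B := lt_of_le_of_ne (hpos B hB) (Ne.symm hB0)
  have hApos : 0 < A := by linarith
  set α : ℕ := A.num.toNat * B.den with hαdef
  set β : ℕ := B.num.toNat * A.den with hβdef
  set Dq : ℚ := (A.den : ℚ) * (B.den : ℚ) with hDdef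
  have hDq : 0 < Dq := by
    rw [hDdef]
    have h1 : (0:ℚ) < A.den := by exact_mod_cast A.pos
    have h2 : (0:ℚ) < B.den := by exact_mod_cast B.pos
    positivity
  have hAnum0 : (0:ℤ) ≤ A.num := (Rat.num_pos.mpr hApos).le
  have hBnum0 : (0:ℤ) ≤ B.num := (Rat.num_pos.mpr hBpos).le
  have h2A : ((A.num.toNat : ℕ) : ℚ) = (A.num : ℚ) := by
    exact_mod_cast congrArg (fun z : ℤ => (z : ℚ)) (Int.toNat_of_nonneg hAnum0)
  have h2B : ((B.num.toNat : ℕ) : ℚ) = (B.num : ℚ) := by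
    exact_mod_cast congrArg (fun z : ℤ => (z : ℚ)) (Int.toNat_of_nonneg hBnum0)
  have hAden : ((A.den : ℚ)) ≠ 0 := by
    have : (0:ℚ) < A.den := by exact_mod_cast A.pos
    exact this.ne'
  have hBden : ((B.den : ℚ)) ≠ 0 := by
    have : (0:ℚ) < B.den := by exact_mod_cast B.pos
    exact this.ne'
  have hAnum : (A.num : ℚ) = A * (A.den : ℚ) := (div_eq_iff hAden).1 (Rat.num_div_den A)
  have hBnum : (B.num : ℚ) = B * (B.den : ℚ) := (div_eq_iff hBden).1 (Rat.num_div_den B)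
  have hαq : (α : ℚ) = A * Dq := by
    have h1 : (α : ℚ) = ((A.num.toNat : ℕ) : ℚ) * (B.den : ℚ) := by
      rw [hαdef]; push_cast; ring
    rw [h1, h2A, hAnum, hDdef]; ring
  have hβq : (β : ℚ) = B * Dq := by
    have h1 : (β : ℚ) = ((B.num.toNat : ℕ) : ℚ) * (A.den : ℚ) := by
      rw [hβdef]; push_cast; ring
    rw [h1, h2B, hBnum, hDdef]; ring
  have hβα : β < α := by
    have : (β : ℚ) < (α : ℚ) := by
      rw [hαq, hβq]
      exact mul_lt_mul_of_pos_right (by linarith) hDq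
    exact_mod_cast this
  have hβpos : 0 < β := by
    have : (0 : ℚ) < (β : ℚ) := by rw [hβq]; positivity
    exact_mod_cast this
  set e : ℕ := Nat.gcd α β with hedef
  have he : 0 < e := Nat.gcd_pos_of_pos_right α hβpos
  set a' : ℕ := α / e with ha'def
  set b' : ℕ := β / e with hb'def
  have hcop : Nat.Coprime a' b' := Nat.coprime_div_gcd_div_gcd he
  have ha'e : a' * e = α := Nat.div_mul_cancel (Nat.gcd_dvd_left α β)
  have hb'e : b' * e = β := Nat.div_mul_cancel (Nat.gcd_dvd_right α β)
  have hb'pos : 0 < b' := by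
    rcases Nat.eq_zero_or_pos b' with h | h
    · rw [h, zero_mul] at hb'e; omega
    · exact h
  have ha'b' : b' < a' := by
    have : b' * e < a' * e := by rw [ha'e, hb'e]; exact hβα
    exact Nat.lt_of_mul_lt_mul_right this
  clear_value a' b' e β α
  have hrep : ∀ j : ℕ, a' * b' ≤ j → ((j : ℚ)) * (A - B) ∈ H := by
    intro j hj
    have hn : a' * b' ≤ j * (a' - b') := by
      calc a' * b' ≤ j := hj
        _ = j * 1 := (mul_one j).symm
        _ ≤ j * (a' - b') := Nat.mul_le_mul_left j (by omega)
    obtain ⟨x, y, hxy⟩ := rep_lemma a' b' (j * (a' - b')) hcop hb'pos hn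
    have hnat : x * α + y * β = j * (α - β) := by
      calc x * α + y * β = (x * a' + y * b') * e := by rw [← ha'e, ← hb'e]; ring
        _ = (j * (a' - b')) * e := by rw [← hxy]
        _ = j * ((a' - b') * e) := by ring
        _ = j * (a' * e - b' * e) := by rw [Nat.sub_mul]
        _ = j * (α - β) := by rw [ha'e, hb'e]
    have hnat' : x * α + y * β + j * β = j * α := by
      rw [hnat, ← Nat.mul_add, Nat.sub_add_cancel hβα.le]
    have hcast : (x : ℚ) * (α : ℚ) + (y : ℚ) * (β : ℚ) + (j : ℚ) * (β : ℚ)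
        = (j : ℚ) * (α : ℚ) := by exact_mod_cast hnat'
    have hq : (x : ℚ) * A + (y : ℚ) * B = (j : ℚ) * (A - B) := by
      apply mul_right_cancel₀ hDq.ne'
      rw [hαq, hβq] at hcast
      ring_nf
      ring_nf at hcast
      linarith
    rw [← hq]
    exact H.add_mem (by simpa [nsmul_eq_mul] using H.nsmul_mem hA x)
      (by simpa [nsmul_eq_mul] using H.nsmul_mem hB y)
  refine ⟨((a' * b' : ℕ) : ℚ) * (A - B), hrep (a' * b') le_rfl, fun m => ?_⟩
  have h5 := hrep (a' * b' + m) (Nat.le_add_right _ _)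
  have h6 : ((a' * b' + m : ℕ) : ℚ) * (A - B)
      = ((a' * b' : ℕ) : ℚ) * (A - B) + (m : ℚ) * (A - B) := by
    push_cast; ring
  rwa [h6] at h5

/-- A nontrivial Puiseux monoid with nonempty conductor in which 0 is not a
limit point of H ∖ {0} is strongly primary. -/
theorem puiseux_inf_pos_stronglyPrimary (H : AddSubmonoid ℚ)
    (hpos : ∀ x ∈ H, 0 ≤ x) (hnt : ∃ x ∈ H, x ≠ 0)
    (hcond : ∃ x ∈ (AddSubgroup.closure (H : Set ℚ) : Set ℚ),
      ∀ y ∈ {x ∈ (AddSubgroup.closure (H : Set ℚ) : Set ℚ) |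
        ∃ c ∈ H, ∀ m : ℕ, c + (m : ℚ) * x ∈ H}, x + y ∈ H)
    (hinf : ∃ ε : ℚ, 0 < ε ∧ ∀ x ∈ H, x ≠ 0 → ε ≤ x) :
    ∀ a ∈ H, a ≠ 0 → ∃ n : ℕ, 0 < n ∧ ∀ f : Fin n → ℚ,
      (∀ i, f i ∈ H ∧ f i ≠ 0) → ∃ h ∈ H, (∑ i, f i) = a + h := by
  obtain ⟨t, htcl, ht⟩ := hcond
  obtain ⟨ε, hε0, hε⟩ := hinf
  have h0hat : (0:ℚ) ∈ {x ∈ (AddSubgroup.closure (H : Set ℚ) : Set ℚ) |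
      ∃ c ∈ H, ∀ m : ℕ, c + (m : ℚ) * x ∈ H} :=
    ⟨(AddSubgroup.closure (H : Set ℚ)).zero_mem, 0, H.zero_mem,
      fun m => by simpa using H.zero_mem⟩
  have htH : t ∈ H := by simpa using ht 0 h0hat
  have ht0 : 0 ≤ t := hpos t htH
  intro a haH ha0
  obtain ⟨n₀, hn₀⟩ := exists_nat_ge ((a + t) / ε)
  refine ⟨n₀ + 1, Nat.succ_pos _, ?_⟩
  intro f hfi
  have hsH : (∑ i, f i) ∈ H := AddSubmonoid.sum_mem _ fun i _ => (hfi i).1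
  have hslb : ((n₀ + 1 : ℕ) : ℚ) * ε ≤ ∑ i, f i := by
    have h1 := Finset.card_nsmul_le_sum Finset.univ f ε
      (fun i _ => hε _ (hfi i).1 (hfi i).2)
    simpa [nsmul_eq_mul, Finset.card_univ] using h1
  have hy0 : 0 ≤ (∑ i, f i) - a - t := by
    have h2 : a + t ≤ (n₀ : ℚ) * ε := by
      rw [div_le_iff₀ hε0] at hn₀
      linarith
    have h3 : (n₀ : ℚ) * ε ≤ ((n₀ + 1 : ℕ) : ℚ) * ε := by
      have : (n₀ : ℚ) ≤ ((n₀ + 1 : ℕ) : ℚ) := by push_cast; linarith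
      exact mul_le_mul_of_nonneg_right this hε0.le
    linarith
  have hycl : (∑ i, f i) - a - t ∈ AddSubgroup.closure (H : Set ℚ) := by
    have hs := AddSubgroup.subset_closure hsH
    have haa := AddSubgroup.subset_closure haH
    have htt := AddSubgroup.subset_closure htH
    exact sub_mem (sub_mem hs haa) htt
  obtain ⟨c, hc, hcm⟩ := mem_hat H hpos hycl hy0
  have hfin : t + ((∑ i, f i) - a - t) ∈ H := ht _ ⟨hycl, c, hc, hcm⟩
  refine ⟨(∑ i, f i) - a, ?_, by ring⟩
  rwa [show t + ((∑ i, f i) - a - t) = (∑ i, f i) - a by ring] at hfin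
end

section
/- Let H be a Puiseux monoid with nonempty conductor (H : Ĥ) ≠ ∅. If H satisfies the ascending chain condition on principal ideals, then 0 is not a limit point of H ∖ {0}. -/
/-!
If `0` were a limit point of `H ∖ {0}`, we could pick `e₀, e₁, … ∈ H ∖ {0}` whose partial sums
`Sₖ` stay below some `x ∈ H`. Two elements `0 ≤ b ≤ a` of `H` satisfy a relation
`q • a = p • b` with `0 < q ≤ p`, which makes `a - b` almost integral; so every `x - Sₖ` lies
in the complete integral closure, and a conductor element `f` puts `f + x - Sₖ` in `H`. These
elements form a descending chain with differences `eₖ ∈ H ∖ {0}`, i.e. a strictly ascending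
chain of principal ideals, contradicting the ACCP.
-/

open Finset

theorem AddSubmonoid.nsmul_add_nsmul_sub_mem {G : Type*} [AddCommGroup G] (H : AddSubmonoid G)
    {a b : G} (ha : a ∈ H) (hb : b ∈ H) {p q : ℕ} (hq : 0 < q) (hqp : q ≤ p)
    (hab : q • a = p • b) (m : ℕ) : q • b + m • (a - b) ∈ H := by
  obtain ⟨j, r, hr, rfl⟩ : ∃ j r, r < q ∧ m = q * j + r :=
    ⟨m / q, m % q, Nat.mod_lt _ hq, (Nat.div_add_mod m q).symm⟩
  -- for `m = q * j + r`, trade `j • q • a` for `j • p • b`; the shift `q • b` absorbs the `-r • b`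
  obtain ⟨t, rfl⟩ := Nat.exists_eq_add_of_le hqp
  obtain ⟨u, rfl⟩ := Nat.exists_eq_add_of_le hr.le
  have key : (r + u) • b + ((r + u) * j + r) • (a - b) = (u + j * t) • b + r • a := by
    linear_combination (norm := module) (j : ℤ) • hab
  rw [key]
  exact H.add_mem (H.nsmul_mem hb _) (H.nsmul_mem ha _)

theorem AddSubmonoid.exists_add_natCast_mul_sub_mem {H : AddSubmonoid ℚ} {a b : ℚ}
    (ha : a ∈ H) (hb : b ∈ H) (hb0 : 0 ≤ b) (hba : b ≤ a) :
    ∃ c ∈ H, ∀ m : ℕ, c + (m : ℚ) * (a - b) ∈ H := by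
  obtain rfl | hb0 := hb0.eq_or_lt
  · exact ⟨0, H.zero_mem, fun m => by simpa [nsmul_eq_mul] using H.nsmul_mem ha m⟩
  set r := a / b
  have hr : 1 ≤ r := (one_le_div hb0).2 hba
  have hnum : ((r.num.toNat : ℕ) : ℚ) = r.num := by
    exact_mod_cast Int.toNat_of_nonneg (Rat.num_nonneg.2 (by linarith))
  have hden : (r.den : ℚ) * r = r.num := Rat.den_mul_eq_num r
  have hab : r.den • a = r.num.toNat • b := by
    rw [nsmul_eq_mul, nsmul_eq_mul, hnum, ← hden, mul_assoc, div_mul_cancel₀ a hb0.ne']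
  have hqp : r.den ≤ r.num.toNat := by
    have : (r.den : ℚ) ≤ r.num.toNat := by rw [hnum, ← hden]; nlinarith [r.den_pos]
    exact_mod_cast this
  refine ⟨r.den • b, H.nsmul_mem hb _, fun m => ?_⟩
  rw [← nsmul_eq_mul]
  exact H.nsmul_add_nsmul_sub_mem ha hb r.den_pos hqp hab m

theorem exists_seq_pos_mem_sum_range_lt {K : Type*} [Field K] [LinearOrder K]
    [IsStrictOrderedRing K] {s : Set K} (hs : ∀ δ > 0, ∃ e ∈ s, 0 < e ∧ e < δ) {x : K}
    (hx : 0 < x) :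
    ∃ e : ℕ → K, (∀ i, e i ∈ s ∧ 0 < e i) ∧ ∀ k, ∑ i ∈ range k, e i < x := by
  choose e hes hepos helt using fun i : ℕ => hs (x / 2 ^ (i + 1)) (by positivity)
  refine ⟨e, fun i => ⟨hes i, hepos i⟩, fun k => ?_⟩
  have hbound : ∀ k, ∑ i ∈ range k, e i + x / 2 ^ k ≤ x := by
    intro k
    induction k with
    | zero => simp
    | succ k ih =>
      have : x / 2 ^ (k + 1) + x / 2 ^ (k + 1) = x / 2 ^ k := by field_simp; ring
      rw [sum_range_succ]
      linarith [helt k]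
  linarith [hbound k, show 0 < x / 2 ^ k by positivity]

/-- A Puiseux monoid with nonempty conductor satisfying the ACCP has 0 not a
limit point of H ∖ {0}. -/
theorem puiseux_accp_inf_pos (H : AddSubmonoid ℚ)
    (hpos : ∀ x ∈ H, 0 ≤ x) (hnt : ∃ x ∈ H, x ≠ 0)
    (hcond : ∃ x ∈ (AddSubgroup.closure (H : Set ℚ) : Set ℚ),
      ∀ y ∈ {x ∈ (AddSubgroup.closure (H : Set ℚ) : Set ℚ) |
        ∃ c ∈ H, ∀ m : ℕ, c + (m : ℚ) * x ∈ H}, x + y ∈ H)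
    (haccp : ∀ s : ℕ → ℚ, (∀ k, s k ∈ H) →
      (∀ k, ∃ h ∈ H, s k = s (k + 1) + h) → ∃ N, ∀ k, N ≤ k → s k = s N) :
    ∃ ε : ℚ, 0 < ε ∧ ∀ x ∈ H, x ≠ 0 → ε ≤ x := by
  by_contra! hsmall
  obtain ⟨f, -, hf⟩ := hcond
  obtain ⟨x, hx, hx0⟩ := hnt
  obtain ⟨e, he, hsum⟩ := exists_seq_pos_mem_sum_range_lt (s := H)
    (fun δ hδ => (hsmall δ hδ).imp fun e ⟨heH, he0, heδ⟩ =>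
      ⟨heH, (hpos e heH).lt_of_ne' he0, heδ⟩) ((hpos x hx).lt_of_ne' hx0)
  have hS : ∀ k, ∑ i ∈ range k, e i ∈ H := fun k => sum_mem fun i _ => (he i).1
  have hchain : ∀ k, f + (x - ∑ i ∈ range k, e i) ∈ H := fun k =>
    hf _ ⟨sub_mem (AddSubgroup.subset_closure hx) (AddSubgroup.subset_closure (hS k)),
      AddSubmonoid.exists_add_natCast_mul_sub_mem hx (hS k)
        (sum_nonneg fun i _ => (he i).2.le) (hsum k).le⟩
  obtain ⟨N, hN⟩ := haccp _ hchain fun k => ⟨e k, (he k).1, by rw [sum_range_succ]; ring⟩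
  have := hN (N + 1) N.le_succ
  rw [sum_range_succ] at this
  linarith [(he N).2]
end

section
/- The Puiseux monoid H = ⟨1/p : p prime⟩ satisfies the ACCP but is not a BF-monoid; in particular, its set of atoms is {1/p : p prime}, and p ∈ L(1) for every prime p, so L(1) is infinite. -/
/-!
Every element of `H` has a unique normal form `n + ∑ a_p / p` with `n ∈ ℕ` and `0 ≤ a_p < p`;
uniqueness holds because `∑ c_p / p ∈ ℤ` forces `p ∣ c_p`. Adding a nonzero element of `H` either
raises the integer part `n` (through carries) or, without carries, raises `∑ a_p`. So along a chain
of divisors the pair `(n, ∑ a_p)` decreases strictly in the lexicographic order, which is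
well-founded: this is the ACCP. The same comparison shows that no `1/p` is a sum of two nonzero
elements, and every nonzero element is `1/p + h` with `h ∈ H`, so the atoms are exactly the `1/p`.
Finally `1 = p · (1/p)` puts every prime into `L(1)`.
-/

namespace AddSubmonoid

variable {M : Type*} [AddMonoid M] {s : Set M}

theorem eq_zero_or_exists_add_of_mem_closure {x : M} (hx : x ∈ closure s) :
    x = 0 ∨ ∃ g ∈ s, ∃ h ∈ closure s, x = g + h := by
  induction hx using closure_induction with
  | mem g hg => exact Or.inr ⟨g, hg, 0, zero_mem _, (add_zero g).symm⟩
  | zero => exact Or.inl rfl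
  | add x y _ hy ihx ihy =>
    rcases ihx with rfl | ⟨g, hg, h, hh, rfl⟩
    · simpa using ihy
    · exact Or.inr ⟨g, hg, h + y, add_mem hh hy, add_assoc g h y⟩

theorem mem_of_mem_closure_of_not_exists_add (hs : (0 : M) ∉ s) {u : M} (hu : u ∈ closure s)
    (hu0 : u ≠ 0) (hirr : ¬∃ x ∈ closure s, ∃ y ∈ closure s, x ≠ 0 ∧ y ≠ 0 ∧ u = x + y) :
    u ∈ s := by
  obtain rfl | ⟨g, hg, h, hh, rfl⟩ := eq_zero_or_exists_add_of_mem_closure hu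
  · exact absurd rfl hu0
  obtain rfl | hh0 := eq_or_ne h 0
  · simpa using hg
  · exact absurd ⟨g, subset_closure hg, h, hh, ne_of_mem_of_not_mem hg hs, hh0, rfl⟩ hirr

end AddSubmonoid

namespace PrimeReciprocals

theorem exists_prod_mul_sum_div_eq_intCast (S : Finset ℕ) (c : ℕ → ℤ) :
    ∃ z : ℤ, (∏ p ∈ S, (p : ℚ)) * ∑ p ∈ S, (c p : ℚ) / p = z := by
  induction S using Finset.induction_on with
  | empty => exact ⟨0, by simp⟩
  | insert r S hr ih =>
    obtain ⟨z, hz⟩ := ih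
    rcases eq_or_ne r 0 with rfl | hr0
    · refine ⟨0, ?_⟩
      rw [Finset.prod_eq_zero (Finset.mem_insert_self 0 S) Nat.cast_zero, zero_mul, Int.cast_zero]
    refine ⟨(∏ p ∈ S, (p : ℤ)) * c r + r * z, ?_⟩
    rw [Finset.prod_insert hr, Finset.sum_insert hr]
    push_cast
    rw [← hz]
    field_simp

theorem dvd_of_sum_div_eq_intCast {S : Finset ℕ} (hS : ∀ p ∈ S, p.Prime) {c : ℕ → ℤ} {k : ℤ}
    (h : ∑ p ∈ S, (c p : ℚ) / p = k) {q : ℕ} (hqS : q ∈ S) : (q : ℤ) ∣ c q := by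
  have hq : Prime (q : ℤ) := Nat.prime_iff_prime_int.mp (hS q hqS)
  obtain ⟨z, hz⟩ := exists_prod_mul_sum_div_eq_intCast (S.erase q) c
  set M := ∏ p ∈ S.erase q, (p : ℤ)
  have hMc : M * c q = q * (M * k - z) := by
    have hq0 : (q : ℚ) ≠ 0 := by exact_mod_cast (hS q hqS).ne_zero
    rw [← Finset.add_sum_erase S _ hqS] at h
    have : (M : ℚ) * c q = q * (M * k - z) := by
      rw [← hz, ← h]
      push_cast [M]
      field_simp
      ring
    exact_mod_cast this
  have hqM : ¬(q : ℤ) ∣ M := by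
    intro hdvd
    obtain ⟨p, hp, hqp⟩ := hq.exists_mem_finset_dvd hdvd
    have := (Nat.prime_dvd_prime_iff_eq (hS q hqS) (hS p (Finset.mem_of_mem_erase hp))).mp
      (Int.natCast_dvd_natCast.mp hqp)
    exact Finset.ne_of_mem_erase hp this.symm
  exact (hq.dvd_or_dvd ⟨_, hMc⟩).resolve_left hqM

abbrev primeReciprocals : Set ℚ := {q | ∃ p : ℕ, p.Prime ∧ q = 1 / p}

/-- Zero coefficients are allowed on `S`, so that two normal forms can always be compared over a
common set of primes. -/
structure IsNormalForm (x : ℚ) (n : ℕ) (S : Finset ℕ) (a : ℕ → ℕ) : Prop where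
  prime : ∀ p ∈ S, p.Prime
  lt : ∀ p ∈ S, a p < p
  eq_zero : ∀ p ∉ S, a p = 0
  eq : x = n + ∑ p ∈ S, (a p : ℚ) / p

theorem isNormalForm_one_div {p : ℕ} (hp : p.Prime) :
    IsNormalForm (1 / p) 0 {p} (Pi.single p 1) where
  prime := by simpa using hp
  lt := by simpa using hp.one_lt
  eq_zero q hq := by simp_all
  eq := by simp

theorem sum_div_eq_zero_iff_forall_lt {S : Finset ℕ} (hS : ∀ p ∈ S, 0 < p) {e : ℕ → ℕ} :
    ∑ p ∈ S, e p / p = 0 ↔ ∀ p ∈ S, e p < p := by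
  rw [Finset.sum_eq_zero_iff]
  exact forall₂_congr fun p hp => Nat.div_eq_zero_iff_lt (hS p hp)

namespace IsNormalForm

variable {x y h : ℚ} {n m k : ℕ} {S T R : Finset ℕ} {a b c : ℕ → ℕ}

theorem sum_subset {M : Type*} [AddCommMonoid M] (hx : IsNormalForm x n S a) (hST : S ⊆ T)
    (f : ℕ → ℕ → M) (hf : ∀ p, f p 0 = 0) :
    ∑ p ∈ T, f p (a p) = ∑ p ∈ S, f p (a p) :=
  (Finset.sum_subset hST fun p _ hp => by rw [hx.eq_zero p hp, hf]).symm

theorem mono (hx : IsNormalForm x n S a) (hST : S ⊆ T) (hT : ∀ p ∈ T, p.Prime) :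
    IsNormalForm x n T a where
  prime := hT
  lt p hp := by
    by_cases hpS : p ∈ S
    · exact hx.lt p hpS
    · rw [hx.eq_zero p hpS]; exact (hT p hp).pos
  eq_zero p hp := hx.eq_zero p fun hpS => hp (hST hpS)
  eq := by rw [hx.sum_subset hST (fun p k => (k : ℚ) / p) (by simp)]; exact hx.eq

theorem eq_zero_of_sum_eq_zero (hx : IsNormalForm x 0 S a) (ha : ∑ p ∈ S, a p = 0) : x = 0 := by
  rw [hx.eq, Finset.sum_eq_zero fun p hp => by simp [Finset.sum_eq_zero_iff.mp ha p hp]]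
  simp

theorem add (hx : IsNormalForm x n S a) (hy : IsNormalForm y m S b) :
    IsNormalForm (x + y) (n + m + ∑ p ∈ S, (a p + b p) / p) S fun p => (a p + b p) % p where
  prime := hx.prime
  lt p hp := Nat.mod_lt _ (hx.prime p hp).pos
  eq_zero p hp := by simp [hx.eq_zero p hp, hy.eq_zero p hp]
  eq := by
    have hdivmod : ∀ p ∈ S, ((a p + b p : ℕ) : ℚ) / p
        = ((a p + b p) / p : ℕ) + ((a p + b p) % p : ℕ) / p := by
      intro p hp
      have hp0 : (p : ℚ) ≠ 0 := by exact_mod_cast (hx.prime p hp).ne_zero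
      field_simp
      exact_mod_cast (Nat.div_add_mod (a p + b p) p).symm
    have hsum : ∑ p ∈ S, (a p : ℚ) / p + ∑ p ∈ S, (b p : ℚ) / p
        = ∑ p ∈ S, (((a p + b p) / p : ℕ) : ℚ) + ∑ p ∈ S, (((a p + b p) % p : ℕ) : ℚ) / p := by
      rw [← Finset.sum_add_distrib, ← Finset.sum_add_distrib]
      refine Finset.sum_congr rfl fun p hp => ?_
      rw [← hdivmod p hp]
      push_cast
      ring
    rw [hx.eq, hy.eq]
    push_cast
    linarith

theorem unique (hx : IsNormalForm x n S a) (hx' : IsNormalForm x m T b) : n = m ∧ a = b := by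
  have hU : ∀ p ∈ S ∪ T, p.Prime := by
    simpa [or_imp, forall_and] using And.intro hx.prime hx'.prime
  have ha := hx.mono Finset.subset_union_left hU
  have hb := hx'.mono Finset.subset_union_right hU
  have hint : ∑ p ∈ S ∪ T, (((a p : ℤ) - b p : ℤ) : ℚ) / p = ((m - n : ℤ) : ℚ) := by
    have := ha.eq.symm.trans hb.eq
    push_cast [sub_div, Finset.sum_sub_distrib]
    linarith
  have hab : a = b := by
    funext p
    by_cases hp : p ∈ S ∪ T
    · have := Int.eq_zero_of_abs_lt_dvd (dvd_of_sum_div_eq_intCast hU hint hp)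
        (abs_sub_lt_of_nonneg_of_lt (by positivity) (by exact_mod_cast ha.lt p hp)
          (by positivity) (by exact_mod_cast hb.lt p hp))
      omega
    · rw [ha.eq_zero p hp, hb.eq_zero p hp]
  subst hab
  refine ⟨?_, rfl⟩
  have := ha.eq.symm.trans hb.eq
  exact_mod_cast add_right_cancel this

theorem toLex_eq (hx : IsNormalForm x n S a) (hx' : IsNormalForm x m T b) :
    toLex (n, ∑ p ∈ S, a p) = toLex (m, ∑ p ∈ T, b p) := by
  obtain ⟨rfl, rfl⟩ := hx.unique hx'
  rw [← hx.sum_subset Finset.subset_union_left (fun _ k => k) fun _ => rfl,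
    ← hx'.sum_subset Finset.subset_union_right (fun _ k => k) fun _ => rfl]

theorem toLex_lt_of_add (hy : IsNormalForm y m T b) (hh : IsNormalForm h k R c)
    (hyh : IsNormalForm (y + h) n S a) (h0 : h ≠ 0) :
    toLex (m, ∑ p ∈ T, b p) < toLex (n, ∑ p ∈ S, a p) := by
  set U := S ∪ T ∪ R
  have hU : ∀ p ∈ U, p.Prime := by
    simpa [U, or_imp, forall_and] using ⟨hyh.prime, hy.prime, hh.prime⟩
  have hSU : S ⊆ U := Finset.subset_union_left.trans Finset.subset_union_left
  have hTU : T ⊆ U := Finset.subset_union_right.trans Finset.subset_union_left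
  have hRU : R ⊆ U := Finset.subset_union_right
  obtain ⟨hn, rfl⟩ := hyh.unique ((hy.mono hTU hU).add (hh.mono hRU hU))
  rw [Prod.Lex.toLex_lt_toLex']
  refine ⟨by simp only [hn]; omega, fun hmn => ?_⟩
  have hk : k = 0 := by omega
  have hnocarry : ∀ p ∈ U, b p + c p < p :=
    (sum_div_eq_zero_iff_forall_lt fun p hp => (hU p hp).pos).mp (by omega)
  subst hk
  have hc : 0 < ∑ p ∈ R, c p := Nat.pos_of_ne_zero fun hc => h0 (hh.eq_zero_of_sum_eq_zero hc)
  calc ∑ p ∈ T, b p < ∑ p ∈ T, b p + ∑ p ∈ R, c p := by omega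
    _ = ∑ p ∈ U, (b p + c p) := by
      rw [Finset.sum_add_distrib, hy.sum_subset hTU (fun _ k => k) fun _ => rfl,
        hh.sum_subset hRU (fun _ k => k) fun _ => rfl]
    _ = ∑ p ∈ U, (b p + c p) % p :=
      Finset.sum_congr rfl fun p hp => (Nat.mod_eq_of_lt (hnocarry p hp)).symm
    _ = ∑ p ∈ S, (b p + c p) % p := hyh.sum_subset hSU (fun _ k => k) fun _ => rfl

end IsNormalForm

theorem exists_isNormalForm {x : ℚ} (hx : x ∈ AddSubmonoid.closure primeReciprocals) :
    ∃ n S a, IsNormalForm x n S a := by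
  induction hx using AddSubmonoid.closure_induction with
  | mem q hq =>
    obtain ⟨p, hp, rfl⟩ := hq
    exact ⟨0, {p}, _, isNormalForm_one_div hp⟩
  | zero => exact ⟨0, ∅, 0, ⟨by simp, by simp, by simp, by simp⟩⟩
  | add x y _ _ hx hy =>
    obtain ⟨n, S, a, hx⟩ := hx
    obtain ⟨m, T, b, hy⟩ := hy
    have hU : ∀ p ∈ S ∪ T, p.Prime := by
      simpa [or_imp, forall_and] using And.intro hx.prime hy.prime
    exact ⟨_, _, _,
      (hx.mono Finset.subset_union_left hU).add (hy.mono Finset.subset_union_right hU)⟩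

theorem accp {s : ℕ → ℚ} (hs : ∀ k, s k ∈ AddSubmonoid.closure primeReciprocals)
    (hstep : ∀ k, ∃ h ∈ AddSubmonoid.closure primeReciprocals, s k = s (k + 1) + h) :
    ∃ N, ∀ k, N ≤ k → s k = s N := by
  choose n S a hs using fun k => exists_isNormalForm (hs k)
  choose h hH hsh using hstep
  choose m R c hh using fun k => exists_isNormalForm (hH k)
  set w : ℕ → ℕ ×ₗ ℕ := fun k => toLex (n k, ∑ p ∈ S k, a k p)
  have hlt : ∀ k, h k ≠ 0 → w (k + 1) < w k := fun k hk =>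
    (hs (k + 1)).toLex_lt_of_add (hh k) (hsh k ▸ hs k) hk
  have hanti : Antitone w := by
    refine antitone_nat_of_succ_le fun k => ?_
    obtain hk | hk := eq_or_ne (h k) 0
    · have hsk : s (k + 1) = s k := by rw [hsh k, hk, add_zero]
      exact ((hs (k + 1)).toLex_eq (hsk ▸ hs k)).le
    · exact (hlt k hk).le
  obtain ⟨N, hN⟩ := WellFoundedLT.antitone_chain_condition hanti
  refine ⟨N, fun k hk => ?_⟩
  induction k, hk using Nat.le_induction with
  | base => rfl
  | succ k hNk ih =>
    have hk : h k = 0 := by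
      by_contra hk
      exact (hlt k hk).ne (by rw [← hN k hNk, ← hN (k + 1) (by omega)])
    rw [← ih, hsh k, hk, add_zero]

theorem not_exists_add_eq_one_div {p : ℕ} (hp : p.Prime) :
    ¬∃ x ∈ AddSubmonoid.closure primeReciprocals, ∃ y ∈ AddSubmonoid.closure primeReciprocals,
      x ≠ 0 ∧ y ≠ 0 ∧ 1 / (p : ℚ) = x + y := by
  rintro ⟨x, hx, y, hy, hx0, hy0, hxy⟩
  obtain ⟨n, S, a, hx⟩ := exists_isNormalForm hx
  obtain ⟨m, T, b, hy⟩ := exists_isNormalForm hy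
  have := hx.toLex_lt_of_add hy (hxy ▸ isNormalForm_one_div hp) hy0
  simp only [Prod.Lex.toLex_lt_toLex, Finset.sum_singleton, Pi.single_eq_same] at this
  obtain ⟨rfl, ha⟩ : n = 0 ∧ ∑ p ∈ S, a p = 0 := by omega
  exact hx0 (hx.eq_zero_of_sum_eq_zero ha)

theorem atoms_eq_primeReciprocals : {u : ℚ | u ∈ AddSubmonoid.closure primeReciprocals ∧ u ≠ 0 ∧
    ¬∃ x ∈ AddSubmonoid.closure primeReciprocals, ∃ y ∈ AddSubmonoid.closure primeReciprocals,
      x ≠ 0 ∧ y ≠ 0 ∧ u = x + y} = primeReciprocals := by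
  ext u
  constructor
  · rintro ⟨hu, hu0, hirr⟩
    refine AddSubmonoid.mem_of_mem_closure_of_not_exists_add ?_ hu hu0 hirr
    rintro ⟨p, hp, hp0⟩
    simp [hp.ne_zero, eq_comm] at hp0
  · rintro ⟨p, hp, rfl⟩
    exact ⟨AddSubmonoid.subset_closure ⟨p, hp, rfl⟩, by simp [hp.ne_zero],
      not_exists_add_eq_one_div hp⟩

end PrimeReciprocals

open PrimeReciprocals in
/-- The Puiseux monoid H = ⟨1/p : p prime⟩ satisfies the ACCP, its atoms are
exactly the 1/p, every prime p lies in L(1), and L(1) is infinite (so H is not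
a BF-monoid). -/
theorem primeReciprocals_accp_not_BF :
    ∀ H : AddSubmonoid ℚ,
      H = AddSubmonoid.closure {q : ℚ | ∃ p : ℕ, p.Prime ∧ q = 1 / p} →
    ∀ A : Set ℚ, A = {u : ℚ | u ∈ H ∧ u ≠ 0 ∧
        ¬∃ x ∈ H, ∃ y ∈ H, x ≠ 0 ∧ y ≠ 0 ∧ u = x + y} →
    ∀ L : ℚ → Set ℕ, (∀ a : ℚ, L a = {k : ℕ | ∃ f : Fin k → ℚ,
        (∀ i, f i ∈ A) ∧ a = ∑ i, f i}) →
    (∀ s : ℕ → ℚ, (∀ k, s k ∈ H) →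
        (∀ k, ∃ h ∈ H, s k = s (k + 1) + h) → ∃ N, ∀ k, N ≤ k → s k = s N) ∧
    (A = {q : ℚ | ∃ p : ℕ, p.Prime ∧ q = 1 / p}) ∧
    (∀ p : ℕ, p.Prime → p ∈ L 1) ∧ (L 1).Infinite := by
  rintro H rfl A rfl L hL
  have hL1 : ∀ p : ℕ, p.Prime → p ∈ L 1 := by
    intro p hp
    rw [hL]
    refine ⟨fun _ => 1 / p, fun _ => atoms_eq_primeReciprocals ▸ ⟨p, hp, rfl⟩, ?_⟩
    simp [hp.ne_zero]
  exact ⟨fun _ => accp, atoms_eq_primeReciprocals, hL1, Nat.infinite_setOfPred_prime.mono hL1⟩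
end

section
/- Let r be a rational number with r > 1 and r ∉ Z, and let H = ⟨rⁱ : i ∈ N₀⟩ be the Puiseux monoid generated by the powers of r. Then H is atomic with A(H) = {rⁱ : i ∈ N₀}, but H is not strongly primary. -/
/-!
Write `r = p / q` in lowest terms, so `q ≥ 2`, and note that the elements of `H` are the values
`P(r)` of polynomials `P ∈ ℕ[X]`. If `rᵏ` were a sum of two nonzero elements, both would only
involve powers below `rᵏ`, so `r` would be a root of a monic integer polynomial `Xᵏ - P`, hence an
integer. Because `q • rⁱ⁺¹ = p • rⁱ`, every element of `H` has a canonical representation, one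
whose coefficients at positive powers are below `q`, and it is unique since `q` divides the top
coefficient of every integer polynomial vanishing at `r`. The canonical representation of
`r + ⋯ + rⁿ` has constant term `0`, while adding `1` to that of any `h ∈ H` gives one with
constant term at least `1`; so `r + ⋯ + rⁿ ∉ 1 + H` and `H` is not strongly primary at `1`.
-/

open Finset Polynomial

namespace AddSubmonoid

variable {M : Type*}

def atoms [AddMonoid M] (H : AddSubmonoid M) : Set M :=
  {u | u ∈ H ∧ u ≠ 0 ∧ ¬∃ x ∈ H, ∃ y ∈ H, x ≠ 0 ∧ y ≠ 0 ∧ u = x + y}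

theorem atoms_closure_subset [AddMonoid M] (S : Set M) : (closure S).atoms ⊆ S := by
  suffices ∀ u ∈ closure S, u ∈ (closure S).atoms → u ∈ S from fun u hu => this u hu.1 hu
  intro u hu
  induction hu using closure_induction with
  | mem u hu => exact fun _ => hu
  | zero => exact fun h => absurd rfl h.2.1
  | add x y hx hy ihx ihy =>
    rintro ⟨hxy, hne, hirr⟩
    by_cases hx0 : x = 0
    · subst hx0
      simp only [zero_add] at hxy hne hirr ⊢
      exact ihy ⟨hxy, hne, hirr⟩
    by_cases hy0 : y = 0
    · subst hy0
      simp only [add_zero] at hxy hne hirr ⊢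
      exact ihx ⟨hxy, hne, hirr⟩
    exact absurd ⟨x, hx, y, hy, hx0, hy0, rfl⟩ hirr

theorem exists_fin_sum_of_mem_closure [AddCommMonoid M] {S : Set M} {x : M}
    (hx : x ∈ closure S) : ∃ (k : ℕ) (f : Fin k → M), (∀ i, f i ∈ S) ∧ x = ∑ i, f i := by
  obtain ⟨l, hl, rfl⟩ := exists_list_of_mem_closure hx
  exact ⟨l.length, l.get, fun i => hl _ (l.get_mem i), by rw [← List.sum_ofFn, List.ofFn_get]⟩

end AddSubmonoid

theorem mem_closure_range_pow_iff {R : Type*} [CommSemiring R] (r x : R) :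
    x ∈ AddSubmonoid.closure (Set.range (r ^ · : ℕ → R)) ↔ ∃ P : ℕ[X], aeval r P = x := by
  rw [← Submonoid.coe_powers, Submonoid.powers_eq_closure,
    ← Submodule.span_nat_eq_addSubmonoidClosure, ← Algebra.adjoin_eq_span,
    Algebra.adjoin_singleton_eq_range_aeval]
  simp

theorem pow_natDegree_le_aeval {R : Type*} [CommSemiring R] [PartialOrder R] [IsOrderedRing R]
    {r : R} (hr : 1 ≤ r) {P : ℕ[X]} (hP : P ≠ 0) : r ^ P.natDegree ≤ aeval r P := by
  have hr0 : 0 ≤ r := zero_le_one.trans hr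
  rw [aeval_eq_sum_range]
  calc r ^ P.natDegree ≤ P.coeff P.natDegree • r ^ P.natDegree := by
        simpa using nsmul_le_nsmul_left (pow_nonneg hr0 _)
          (Nat.one_le_iff_ne_zero.2 (leadingCoeff_ne_zero.2 hP))
    _ ≤ ∑ i ∈ range (P.natDegree + 1), P.coeff i • r ^ i :=
        single_le_sum (fun i _ => nsmul_nonneg (pow_nonneg hr0 i) _) (self_mem_range_succ _)

theorem pow_mem_atoms_closure_range_pow {r : ℚ} (hr : 1 < r) (hrz : ¬∃ z : ℤ, r = z) (k : ℕ) :
    r ^ k ∈ (AddSubmonoid.closure (Set.range (r ^ · : ℕ → ℚ))).atoms := by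
  refine ⟨AddSubmonoid.subset_closure ⟨k, rfl⟩, pow_ne_zero _ (by positivity), ?_⟩
  rintro ⟨x, hx, y, hy, hx0, hy0, hxy⟩
  obtain ⟨P, rfl⟩ := (mem_closure_range_pow_iff r x).1 hx
  obtain ⟨Q, rfl⟩ := (mem_closure_range_pow_iff r y).1 hy
  have hlt : ∀ P Q : ℕ[X], aeval r P ≠ 0 → aeval r Q ≠ 0 →
      r ^ k = aeval r P + aeval r Q → P.natDegree < k := by
    intro P Q hP hQ h
    by_contra! hk
    have hPk := (pow_le_pow_right₀ hr.le hk).trans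
      (pow_natDegree_le_aeval hr.le (by rintro rfl; exact hP (map_zero _)))
    have hQ0 := (pow_pos (by positivity) _).trans_le
      (pow_natDegree_le_aeval hr.le (by rintro rfl; exact hQ (map_zero _) : Q ≠ 0))
    linarith
  have hdeg : (P + Q).natDegree < k := (natDegree_add_le _ _).trans_lt
    (max_lt (hlt P Q hx0 hy0 hxy) (hlt Q P hy0 hx0 (hxy.trans (add_comm _ _))))
  have hmonic : (X ^ k - (P + Q).map (algebraMap ℕ ℤ)).Monic := monic_X_pow_sub <|
    degree_map_le.trans_lt (degree_le_natDegree.trans_lt (by exact_mod_cast hdeg))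
  obtain ⟨z, hz⟩ := isInteger_of_is_root_of_monic hmonic (r := r) (by simp [hxy])
  exact hrz ⟨z, by simpa using hz.symm⟩

theorem natDegree_erase_succ_le {R : Type*} [Semiring R] {P : R[X]} {N : ℕ}
    (hP : P.natDegree ≤ N + 1) : (P.erase (N + 1)).natDegree ≤ N := by
  refine natDegree_le_iff_coeff_eq_zero.2 fun m hm => ?_
  rw [coeff_erase]
  split_ifs with h
  · rfl
  · exact coeff_eq_zero_of_natDegree_lt (by omega)

def IsCanonicalRep (q : ℕ) (P : ℕ[X]) : Prop :=
  ∀ i ≠ 0, P.coeff i < q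

section CanonicalRep

variable {r : ℚ} {p q : ℕ}

theorem dvd_coeff_of_aeval_eq_zero (hpq : p.Coprime q) (hr : r * q = p) {P : ℤ[X]} {N : ℕ}
    (hN : P.natDegree ≤ N) (h : aeval r P = 0) : (q : ℤ) ∣ P.coeff N := by
  have hsum : ∑ i ∈ range (N + 1), P.coeff i * (p : ℤ) ^ i * (q : ℤ) ^ (N - i) = 0 := by
    have hcast : ∀ i ∈ range (N + 1),
        ((P.coeff i * (p : ℤ) ^ i * (q : ℤ) ^ (N - i) : ℤ) : ℚ) = q ^ N * (P.coeff i • r ^ i) := by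
      intro i hi
      rw [zsmul_eq_mul, ← pow_sub_mul_pow (q : ℚ) (Nat.le_of_lt_succ (mem_range.1 hi))]
      push_cast
      rw [← hr]
      ring
    have : ((∑ i ∈ range (N + 1), P.coeff i * (p : ℤ) ^ i * (q : ℤ) ^ (N - i) : ℤ) : ℚ) = 0 := by
      rw [Int.cast_sum, sum_congr rfl hcast, ← mul_sum,
        ← aeval_eq_sum_range' (Nat.lt_succ_of_le hN), h, mul_zero]
    exact_mod_cast this
  rw [sum_range_succ, Nat.sub_self, pow_zero, mul_one] at hsum
  have hlow : (q : ℤ) ∣ ∑ i ∈ range N, P.coeff i * (p : ℤ) ^ i * (q : ℤ) ^ (N - i) :=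
    dvd_sum fun i hi => dvd_mul_of_dvd_right
      (dvd_pow_self _ (Nat.sub_ne_zero_of_lt (mem_range.1 hi))) _
  have htop : (q : ℤ) ∣ P.coeff N * (p : ℤ) ^ N := by
    rw [eq_neg_of_add_eq_zero_right hsum]
    exact hlow.neg_right
  exact ((Nat.isCoprime_iff_coprime.2 hpq.symm).pow_right).dvd_of_dvd_mul_right htop

theorem coeff_modEq_of_aeval_eq (hpq : p.Coprime q) (hr : r * q = p) {P Q : ℕ[X]} {N : ℕ}
    (hP : P.natDegree ≤ N) (hQ : Q.natDegree ≤ N) (h : aeval r P = aeval r Q) :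
    P.coeff N ≡ Q.coeff N [MOD q] := by
  have := dvd_coeff_of_aeval_eq_zero hpq hr (P := Q.map (algebraMap ℕ ℤ) - P.map (algebraMap ℕ ℤ))
    (natDegree_sub_le_of_le (natDegree_map_le.trans hQ) (natDegree_map_le.trans hP))
    (by simp [h])
  simpa [Nat.modEq_iff_dvd] using this

theorem IsCanonicalRep.erase {P : ℕ[X]} (hP : IsCanonicalRep q P) (n : ℕ) :
    IsCanonicalRep q (P.erase n) := fun i hi => by
  rw [coeff_erase]
  split_ifs
  · exact Nat.zero_lt_of_lt (hP i hi)
  · exact hP i hi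

theorem IsCanonicalRep.eq_of_aeval_eq (hpq : p.Coprime q) (hr : r * q = p) {P Q : ℕ[X]}
    (hP : IsCanonicalRep q P) (hQ : IsCanonicalRep q Q) (h : aeval r P = aeval r Q) : P = Q := by
  suffices ∀ N, ∀ P Q : ℕ[X], IsCanonicalRep q P → IsCanonicalRep q Q →
      P.natDegree ≤ N → Q.natDegree ≤ N → aeval r P = aeval r Q → P = Q from
    this _ P Q hP hQ (le_max_left _ _) (le_max_right _ _) h
  intro N
  induction N with
  | zero =>
    intro P Q _ _ hP0 hQ0 h
    rw [eq_C_of_natDegree_le_zero hP0, eq_C_of_natDegree_le_zero hQ0] at h ⊢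
    simpa using h
  | succ N ih =>
    intro P Q hP hQ hPN hQN h
    have htop : P.coeff (N + 1) = Q.coeff (N + 1) :=
      (coeff_modEq_of_aeval_eq hpq hr hPN hQN h).eq_of_lt_of_lt (hP _ N.succ_ne_zero)
        (hQ _ N.succ_ne_zero)
    rw [← monomial_add_erase P (N + 1), ← monomial_add_erase Q (N + 1), htop] at h ⊢
    rw [map_add, map_add, add_right_inj] at h
    rw [ih _ _ (hP.erase _) (hQ.erase _) (natDegree_erase_succ_le hPN)
      (natDegree_erase_succ_le hQN) h]

theorem exists_isCanonicalRep_aeval_eq (hq : 0 < q) (hr : r * q = p) (P : ℕ[X]) :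
    ∃ Q, IsCanonicalRep q Q ∧ aeval r Q = aeval r P := by
  suffices ∀ N, ∀ P : ℕ[X], P.natDegree ≤ N →
      ∃ Q, IsCanonicalRep q Q ∧ Q.natDegree ≤ N ∧ aeval r Q = aeval r P by
    obtain ⟨Q, hQ, -, hQP⟩ := this _ P le_rfl
    exact ⟨Q, hQ, hQP⟩
  intro N
  induction N with
  | zero =>
    intro P hP
    refine ⟨P, fun i hi => ?_, hP, rfl⟩
    rw [coeff_eq_zero_of_natDegree_lt (by omega)]
    exact hq
  | succ N ih =>
    intro P hP
    set c := P.coeff (N + 1)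
    -- carry `c / q` copies of `q * r ^ (N + 1) = p * r ^ N` one place down
    obtain ⟨Q, hQ, hQN, hQP⟩ := ih (P.erase (N + 1) + monomial N (c / q * p))
      (natDegree_add_le_of_degree_le (natDegree_erase_succ_le hP) (natDegree_monomial_le _))
    refine ⟨Q + monomial (N + 1) (c % q), fun i hi => ?_, ?_, ?_⟩
    · rw [coeff_add, coeff_monomial]
      split_ifs with hi'
      · rw [← hi', coeff_eq_zero_of_natDegree_lt (by omega), zero_add]
        exact Nat.mod_lt _ hq
      · simpa using hQ i hi
    · exact natDegree_add_le_of_degree_le (hQN.trans N.le_succ) (natDegree_monomial_le _)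
    · conv_rhs => rw [← monomial_add_erase P (N + 1)]
      have hc : (c : ℚ) = q * (c / q : ℕ) + (c % q : ℕ) := by
        exact_mod_cast (Nat.div_add_mod c q).symm
      simp only [map_add, hQP, aeval_monomial, eq_natCast, Nat.cast_mul]
      rw [hc, ← hr]
      ring

theorem aeval_ne_one_add_aeval (hpq : p.Coprime q) (hr : r * q = p) {S : ℕ[X]}
    (hS : IsCanonicalRep q S) (hS0 : S.coeff 0 = 0) (P : ℕ[X]) :
    aeval r S ≠ 1 + aeval r P := by
  intro h
  obtain ⟨Q, hQ, hQP⟩ :=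
    exists_isCanonicalRep_aeval_eq (Nat.zero_lt_of_lt (hS 1 one_ne_zero)) hr P
  have hQ1 : IsCanonicalRep q (1 + Q) := fun i hi => by simpa [coeff_one, hi] using hQ i hi
  have := congrArg (coeff · 0) (hS.eq_of_aeval_eq hpq hr hQ1 (by simp [h, hQP]))
  simp [hS0] at this
  omega

theorem isCanonicalRep_X_mul_sum_X_pow (hq : 1 < q) (n : ℕ) :
    IsCanonicalRep q (X * ∑ i ∈ range n, X ^ i) := by
  intro i hi
  obtain ⟨j, rfl⟩ := Nat.exists_eq_succ_of_ne_zero hi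
  simp only [coeff_X_mul, finsetSum_coeff, coeff_X_pow, sum_ite_eq]
  split_ifs <;> omega

end CanonicalRep

/-- For rational r > 1 with r ∉ ℤ, the Puiseux monoid H = ⟨rⁱ : i ∈ ℕ₀⟩ is
atomic with atoms exactly the powers of r, but it is not strongly primary. -/
theorem powers_atomic_not_stronglyPrimary (r : ℚ) (hr : 1 < r)
    (hrz : ¬∃ z : ℤ, r = (z : ℚ)) :
    ∀ H : AddSubmonoid ℚ,
      H = AddSubmonoid.closure (Set.range fun i : ℕ => r ^ i) →
    ∀ A : Set ℚ, A = {u : ℚ | u ∈ H ∧ u ≠ 0 ∧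
        ¬∃ x ∈ H, ∃ y ∈ H, x ≠ 0 ∧ y ≠ 0 ∧ u = x + y} →
    (∀ a ∈ H, a ≠ 0 → ∃ (k : ℕ) (f : Fin k → ℚ),
        (∀ i, f i ∈ A) ∧ a = ∑ i, f i) ∧
    (A = Set.range fun i : ℕ => r ^ i) ∧
    ¬(∀ a ∈ H, a ≠ 0 → ∃ n : ℕ, 0 < n ∧ ∀ f : Fin n → ℚ,
        (∀ i, f i ∈ H ∧ f i ≠ 0) → ∃ h ∈ H, (∑ i, f i) = a + h) := by
  rintro _ rfl A rfl
  set H := AddSubmonoid.closure (Set.range fun i : ℕ => r ^ i)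
  have hatoms : H.atoms = Set.range (r ^ ·) :=
    (AddSubmonoid.atoms_closure_subset _).antisymm
      (Set.range_subset_iff.2 (pow_mem_atoms_closure_range_pow hr hrz))
  refine ⟨fun a ha _ => ?_, hatoms, fun hprimary => ?_⟩
  · obtain ⟨k, f, hf, rfl⟩ := AddSubmonoid.exists_fin_sum_of_mem_closure ha
    exact ⟨k, f, fun i => (hatoms.symm ▸ hf i : f i ∈ H.atoms), rfl⟩
  have hpq : r.num.natAbs.Coprime r.den := r.reduced
  have hrpq : r * r.den = r.num.natAbs := by
    rw [Rat.mul_den_eq_num, Nat.cast_natAbs, abs_of_pos (Rat.num_pos.2 (by linarith))]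
  have hden : 1 < r.den := by
    by_contra! h
    exact hrz ⟨r.num, (Rat.coe_int_num_of_den_eq_one (by have := r.den_pos; omega)).symm⟩
  obtain ⟨n, -, hn⟩ := hprimary 1 (AddSubmonoid.subset_closure ⟨0, pow_zero r⟩) one_ne_zero
  obtain ⟨h, hh, hsum⟩ := hn (fun i => r ^ ((i : ℕ) + 1)) fun i =>
    ⟨AddSubmonoid.subset_closure ⟨_, rfl⟩, pow_ne_zero _ (by positivity)⟩
  obtain ⟨P, rfl⟩ := (mem_closure_range_pow_iff r h).1 hh
  refine aeval_ne_one_add_aeval hpq hrpq (isCanonicalRep_X_mul_sum_X_pow hden n)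
    (coeff_X_mul_zero _) P ?_
  simpa [mul_sum, ← pow_succ', Fin.sum_univ_eq_sum_range (fun i => r ^ (i + 1))] using hsum
end

section
/- Let H be a strongly primary Puiseux monoid. Then the elasticity of H equals sup A(H) / inf A(H), where A(H) is the set of atoms. Consequently, ρ(H) = 1 if and only if H is isomorphic to (N₀, +). -/
open scoped ENNReal

/-- An element of a Puiseux monoid is an atom if it is nonzero and not the sum
of two nonzero elements. -/
def PuiseuxAtom (H : AddSubmonoid ℚ) (u : ℚ) : Prop :=
  u ∈ H ∧ u ≠ 0 ∧ ¬∃ x ∈ H, ∃ y ∈ H, x ≠ 0 ∧ y ≠ 0 ∧ u = x + y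

/-- Set of lengths of an element of a Puiseux monoid. -/
def PuiseuxL (H : AddSubmonoid ℚ) (a : ℚ) : Set ℕ :=
  {k : ℕ | ∃ f : Fin k → ℚ, (∀ i, PuiseuxAtom H (f i)) ∧ a = ∑ i, f i}

/-- Elasticity of a Puiseux monoid, as an extended nonnegative real. -/
noncomputable def PuiseuxElasticity (H : AddSubmonoid ℚ) : ℝ≥0∞ :=
  ⨆ a ∈ {x : ℚ | x ∈ H ∧ x ≠ 0},
    (⨆ k ∈ PuiseuxL H a, (k : ℝ≥0∞)) / ⨅ k ∈ PuiseuxL H a, (k : ℝ≥0∞)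

private lemma fin_sum_const (n : ℕ) (x : ℚ) : ∑ _i : Fin n, x = n * x := by
  simp [mul_comm]

/-- A strongly primary Puiseux monoid is bounded below away from zero. -/
private lemma pu_lb (H : AddSubmonoid ℚ) (hpos : ∀ x ∈ H, 0 ≤ x)
    (hnt : ∃ x ∈ H, x ≠ 0)
    (hsp : ∀ a ∈ H, a ≠ 0 → ∃ n : ℕ, 0 < n ∧ ∀ f : Fin n → ℚ,
      (∀ i, f i ∈ H ∧ f i ≠ 0) → ∃ h ∈ H, (∑ i, f i) = a + h) :
    ∃ l : ℚ, 0 < l ∧ ∀ x ∈ H, x ≠ 0 → l ≤ x := by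
  obtain ⟨a, haH, ha0⟩ := hnt
  obtain ⟨n, hn, hf⟩ := hsp a haH ha0
  have hapos : 0 < a := lt_of_le_of_ne (hpos a haH) (Ne.symm ha0)
  have hnq : (0:ℚ) < (n:ℚ) := by exact_mod_cast hn
  refine ⟨a / n, div_pos hapos hnq, ?_⟩
  intro x hx hx0
  obtain ⟨h, hh, hsum⟩ := hf (fun _ => x) (fun _ => ⟨hx, hx0⟩)
  rw [fin_sum_const] at hsum
  have hha := hpos h hh
  rw [div_le_iff₀ hnq]
  nlinarith [hsum, hha]

/-- Factorization existence by strong induction on a bound. -/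
private lemma pu_fact (H : AddSubmonoid ℚ) {l : ℚ} (hl : 0 < l)
    (hlb : ∀ x ∈ H, x ≠ 0 → l ≤ x) :
    ∀ m : ℕ, ∀ a, a ∈ H → a ≠ 0 → a ≤ m * l → ∃ k, k ∈ PuiseuxL H a := by
  intro m
  induction m with
  | zero =>
    intro a haH ha0 hle
    have := hlb a haH ha0
    simp only [Nat.cast_zero, zero_mul] at hle
    linarith
  | succ m ih =>
    intro a haH ha0 hle
    by_cases hA : PuiseuxAtom H a
    · exact ⟨1, fun _ => a, fun _ => hA, by simp⟩
    · have hdec : ∃ x ∈ H, ∃ y ∈ H, x ≠ 0 ∧ y ≠ 0 ∧ a = x + y := by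
        by_contra hcon
        exact hA ⟨haH, ha0, hcon⟩
      obtain ⟨x, hxH, y, hyH, hx0, hy0, hxy⟩ := hdec
      have hlx := hlb x hxH hx0
      have hly := hlb y hyH hy0
      have hc : ((m:ℚ) + 1) * l = (m:ℚ) * l + l := by ring
      have hle' : a ≤ (m:ℚ) * l + l := by
        push_cast at hle; linarith
      have hxle : x ≤ (m:ℚ) * l := by linarith [hxy ▸ hle']
      have hyle : y ≤ (m:ℚ) * l := by linarith [hxy ▸ hle']
      obtain ⟨k1, f, hfA, hfs⟩ := ih x hxH hx0 hxle
      obtain ⟨k2, g, hgA, hgs⟩ := ih y hyH hy0 hyle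
      refine ⟨k1 + k2, Fin.append f g, ?_, ?_⟩
      · intro i
        refine Fin.addCases (fun j => ?_) (fun j => ?_) i
        · rw [Fin.append_left]; exact hfA j
        · rw [Fin.append_right]; exact hgA j
      · rw [Fin.sum_univ_add]
        simp only [Fin.append_left, Fin.append_right]
        rw [← hfs, ← hgs]; exact hxy

/-- For a strongly primary Puiseux monoid, the elasticity is
sup A(H) / inf A(H); in particular ρ(H) = 1 iff H ≅ (ℕ₀, +). -/
theorem puiseux_elasticity_eq (H : AddSubmonoid ℚ)
    (hpos : ∀ x ∈ H, 0 ≤ x) (hnt : ∃ x ∈ H, x ≠ 0)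
    (hsp : ∀ a ∈ H, a ≠ 0 → ∃ n : ℕ, 0 < n ∧ ∀ f : Fin n → ℚ,
      (∀ i, f i ∈ H ∧ f i ≠ 0) → ∃ h ∈ H, (∑ i, f i) = a + h) :
    PuiseuxElasticity H =
      (⨆ u ∈ {u : ℚ | PuiseuxAtom H u}, ENNReal.ofReal (u : ℝ)) /
        ⨅ u ∈ {u : ℚ | PuiseuxAtom H u}, ENNReal.ofReal (u : ℝ) ∧
    (PuiseuxElasticity H = 1 ↔ Nonempty (H ≃+ ℕ)) := by
  obtain ⟨l, hl, hlb⟩ := pu_lb H hpos hnt hsp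
  set A : Set ℚ := {u : ℚ | PuiseuxAtom H u} with hA
  set mu : ℝ≥0∞ := ⨆ u ∈ A, ENNReal.ofReal (u : ℝ) with hmu
  set lam : ℝ≥0∞ := ⨅ u ∈ A, ENNReal.ofReal (u : ℝ) with hlam
  -- basic facts about elements and atoms
  have hxpos : ∀ x ∈ H, x ≠ 0 → 0 < x := fun x hx h0 =>
    lt_of_le_of_ne (hpos x hx) (Ne.symm h0)
  have hAmem : ∀ u ∈ A, u ∈ H ∧ 0 < u ∧ l ≤ u := by
    intro u hu
    obtain ⟨h1, h2, _⟩ := hu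
    exact ⟨h1, hxpos u h1 h2, hlb u h1 h2⟩
  -- length sets are nonempty
  have hLne : ∀ a ∈ H, a ≠ 0 → ∃ k, k ∈ PuiseuxL H a := by
    intro a haH ha0
    obtain ⟨m, hm⟩ := exists_nat_ge (a / l)
    exact pu_fact H hl hlb m a haH ha0 ((div_le_iff₀ hl).mp hm)
  have hzeroL : ∀ a : ℚ, a ≠ 0 → (0:ℕ) ∉ PuiseuxL H a := by
    rintro a ha0 ⟨f, -, hfs⟩
    simp at hfs
    exact ha0 hfs
  -- atoms exist
  have hAne : ∃ g, g ∈ A := by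
    obtain ⟨a, haH, ha0⟩ := hnt
    obtain ⟨k, f, hfA, hfs⟩ := hLne a haH ha0
    rcases Nat.eq_zero_or_pos k with hk | hk
    · exact absurd (hk ▸ (⟨f, hfA, hfs⟩ : k ∈ PuiseuxL H a)) (hzeroL a ha0)
    · exact ⟨f ⟨0, hk⟩, hfA _⟩
  obtain ⟨g₀, hg₀A⟩ := hAne
  have hle_mu : ∀ u ∈ A, ENNReal.ofReal ((u:ℚ):ℝ) ≤ mu := fun u hu => by
    rw [hmu]
    exact le_iSup₂ (f := fun w (_ : w ∈ A) => ENNReal.ofReal ((w:ℚ):ℝ)) u hu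
  have hlam_le : ∀ u ∈ A, lam ≤ ENNReal.ofReal ((u:ℚ):ℝ) := fun u hu => by
    rw [hlam]
    exact iInf₂_le (f := fun w (_ : w ∈ A) => ENNReal.ofReal ((w:ℚ):ℝ)) u hu
  -- lam is nonzero and finite
  have hlam_lb : ENNReal.ofReal (l:ℝ) ≤ lam := by
    rw [hlam]
    refine le_iInf₂ fun u hu => ENNReal.ofReal_le_ofReal ?_
    exact_mod_cast (hAmem u hu).2.2
  have hlam0 : lam ≠ 0 := by
    refine ne_of_gt (lt_of_lt_of_le ?_ hlam_lb)
    exact ENNReal.ofReal_pos.2 (by exact_mod_cast hl)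
  have hlamt : lam ≠ ⊤ :=
    ne_top_of_le_ne_top (ENNReal.ofReal_ne_top (r := ((g₀:ℚ):ℝ))) (hlam_le g₀ hg₀A)
  -- key bound: for k ∈ L(a), k*lam ≤ a ≤ k*mu
  have hbound : ∀ a : ℚ, ∀ k ∈ PuiseuxL H a,
      (k:ℝ≥0∞) * lam ≤ ENNReal.ofReal (a:ℝ) ∧
      ENNReal.ofReal (a:ℝ) ≤ (k:ℝ≥0∞) * mu := by
    rintro a k ⟨f, hfA, hfs⟩
    have hnn : ∀ i : Fin k, (0:ℝ) ≤ ((f i : ℚ):ℝ) := fun i => by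
      exact_mod_cast hpos _ (hfA i).1
    have hsum : ENNReal.ofReal (a:ℝ) = ∑ i : Fin k, ENNReal.ofReal ((f i : ℚ):ℝ) := by
      rw [hfs]
      push_cast
      exact ENNReal.ofReal_sum_of_nonneg (fun i _ => hnn i)
    constructor
    · rw [hsum]
      calc (k:ℝ≥0∞) * lam = (Finset.univ : Finset (Fin k)).card • lam := by
            simp [nsmul_eq_mul]
        _ ≤ ∑ i : Fin k, ENNReal.ofReal ((f i : ℚ):ℝ) := by
            exact Finset.card_nsmul_le_sum _ _ _ fun i _ => hlam_le (f i) (hfA i)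
    · rw [hsum]
      calc ∑ i : Fin k, ENNReal.ofReal ((f i : ℚ):ℝ)
          ≤ (Finset.univ : Finset (Fin k)).card • mu := by
            exact Finset.sum_le_card_nsmul _ _ _ fun i _ => hle_mu (f i) (hfA i)
        _ = (k:ℝ≥0∞) * mu := by simp [nsmul_eq_mul]
  -- main equality
  have main : PuiseuxElasticity H = mu / lam := by
    apply le_antisymm
    · rw [PuiseuxElasticity]
      refine iSup₂_le ?_
      rintro a ⟨haH, ha0⟩
      by_cases hmt : mu = ⊤
      · rw [hmt, ENNReal.top_div_of_ne_top hlamt]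
        exact le_top
      · obtain ⟨kk, hkk⟩ := hLne a haH ha0
        set k2 := sInf (PuiseuxL H a) with hk2
        have hk2m : k2 ∈ PuiseuxL H a := Nat.sInf_mem ⟨kk, hkk⟩
        have hk2pos : k2 ≠ 0 := fun h => (hzeroL a ha0) (h ▸ hk2m)
        have hI : (⨅ k ∈ PuiseuxL H a, (k:ℝ≥0∞)) = (k2:ℝ≥0∞) := by
          refine le_antisymm (iInf₂_le _ hk2m) (le_iInf₂ fun k hk => ?_)
          exact_mod_cast Nat.sInf_le hk
        rw [hI, ENNReal.div_le_iff (by exact_mod_cast hk2pos) (ENNReal.natCast_ne_top k2)]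
        refine iSup₂_le fun k1 hk1 => ?_
        have h12 : (k1:ℝ≥0∞) * lam ≤ (k2:ℝ≥0∞) * mu :=
          (hbound a k1 hk1).1.trans (hbound a k2 hk2m).2
        have hstep : (k1:ℝ≥0∞) ≤ ((k2:ℝ≥0∞) * mu) / lam :=
          (ENNReal.le_div_iff_mul_le (Or.inl hlam0) (Or.inl hlamt)).2 h12
        calc (k1:ℝ≥0∞) ≤ ((k2:ℝ≥0∞) * mu) / lam := hstep
          _ = mu / lam * (k2:ℝ≥0∞) := by
              rw [div_eq_mul_inv, div_eq_mul_inv]; ring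
    · have key : ∀ u ∈ A, ∀ v ∈ A,
          ENNReal.ofReal (u:ℝ) / ENNReal.ofReal (v:ℝ) ≤ PuiseuxElasticity H := by
        intro u huA v hvA
        obtain ⟨huH, hupos, -⟩ := hAmem u huA
        obtain ⟨hvH, hvpos, -⟩ := hAmem v hvA
        set m : ℕ := v.num.toNat * u.den with hm
        set n : ℕ := u.num.toNat * v.den with hn
        have hunum : (0:ℤ) < u.num := Rat.num_pos.2 hupos
        have hvnum : (0:ℤ) < v.num := Rat.num_pos.2 hvpos
        have hmpos : 0 < m := Nat.mul_pos (by omega) u.pos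
        have hnpos : 0 < n := Nat.mul_pos (by omega) v.pos
        have hdu : (u.den:ℚ) * u = u.num := by exact_mod_cast Rat.den_mul_eq_num u
        have hdv : (v.den:ℚ) * v = v.num := by exact_mod_cast Rat.den_mul_eq_num v
        have htv : ((v.num.toNat:ℕ):ℚ) = (v.num:ℚ) := by
          exact_mod_cast congrArg (fun z : ℤ => (z:ℚ)) (Int.toNat_of_nonneg hvnum.le)
        have htu : ((u.num.toNat:ℕ):ℚ) = (u.num:ℚ) := by
          exact_mod_cast congrArg (fun z : ℤ => (z:ℚ)) (Int.toNat_of_nonneg hunum.le)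
        have hmc : (m:ℚ) = (v.num:ℚ) * (u.den:ℚ) := by
          rw [hm, Nat.cast_mul, htv]
        have hnc : (n:ℚ) = (u.num:ℚ) * (v.den:ℚ) := by
          rw [hn, Nat.cast_mul, htu]
        have hx : (m:ℚ) * u = (n:ℚ) * v := by
          rw [hmc, hnc, mul_assoc, mul_assoc, hdu, hdv]; ring
        set x : ℚ := (m:ℚ) * u with hxdef
        have hxH : x ∈ H := by
          have := AddSubmonoid.nsmul_mem H huH m
          rwa [nsmul_eq_mul] at this
        have hx0 : x ≠ 0 := by
          have : (0:ℚ) < (m:ℚ) * u := by positivity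
          exact ne_of_gt this
        have hmL : m ∈ PuiseuxL H x := ⟨fun _ => u, fun _ => huA, (fin_sum_const m u).symm⟩
        have hnL : n ∈ PuiseuxL H x := ⟨fun _ => v, fun _ => hvA, by
          rw [fin_sum_const, ← hx]⟩
        -- ofReal u / ofReal v = n / m
        have hratio : ENNReal.ofReal (u:ℝ) / ENNReal.ofReal (v:ℝ) = (n:ℝ≥0∞) / (m:ℝ≥0∞) := by
          have hq : u / v = (n:ℚ) / (m:ℚ) := by
            have hm0 : (m:ℚ) ≠ 0 := by positivity
            field_simp
            linarith [hx]
          have hvr : (0:ℝ) < (v:ℝ) := by exact_mod_cast hvpos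
          have hmr : (0:ℝ) < ((n:ℕ):ℝ) + 0 ∨ True := Or.inr trivial
          have hmr' : (0:ℝ) < ((m:ℕ):ℝ) := by exact_mod_cast hmpos
          have hr : (u:ℝ) / (v:ℝ) = ((n:ℕ):ℝ) / ((m:ℕ):ℝ) := by
            have h3 := congrArg (fun q : ℚ => (q:ℝ)) hq
            push_cast at h3
            exact h3
          rw [← ENNReal.ofReal_div_of_pos hvr, hr, ENNReal.ofReal_div_of_pos hmr',
            ENNReal.ofReal_natCast, ENNReal.ofReal_natCast]
        rw [hratio, PuiseuxElasticity]
        refine le_trans ?_ (le_iSup₂ x ⟨hxH, hx0⟩)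
        exact ENNReal.div_le_div (le_iSup₂ (f := fun (k:ℕ) (_ : k ∈ PuiseuxL H x) => (k:ℝ≥0∞)) n hnL)
          (iInf₂_le m hmL)
      -- now assemble: mu / lam ≤ elasticity
      rw [hmu, hlam, div_eq_mul_inv]
      have e1 : (⨅ u ∈ A, ENNReal.ofReal (u:ℝ)) = ⨅ (u : A), ENNReal.ofReal ((u:ℚ):ℝ) := by
        rw [iInf_subtype']
      have e2 : (⨆ u ∈ A, ENNReal.ofReal (u:ℝ)) = ⨆ (u : A), ENNReal.ofReal ((u:ℚ):ℝ) := by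
        rw [iSup_subtype']
      rw [e1, e2, ENNReal.inv_iInf, ENNReal.mul_iSup]
      refine iSup_le fun v => ?_
      rw [ENNReal.iSup_mul]
      refine iSup_le fun u => ?_
      rw [← div_eq_mul_inv]
      exact key u u.2 v v.2
  refine ⟨main, ?_, ?_⟩
  · -- elasticity = 1 → H ≃+ ℕ
    intro h1
    rw [main, ENNReal.div_eq_one_iff hlam0 hlamt] at h1
    have hall : ∀ u ∈ A, u = g₀ := by
      intro u huA
      have h1u : ENNReal.ofReal ((u:ℚ):ℝ) ≤ ENNReal.ofReal ((g₀:ℚ):ℝ) := by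
        calc ENNReal.ofReal ((u:ℚ):ℝ) ≤ mu := hle_mu u huA
          _ = lam := h1
          _ ≤ ENNReal.ofReal ((g₀:ℚ):ℝ) := hlam_le g₀ hg₀A
      have h2u : ENNReal.ofReal ((g₀:ℚ):ℝ) ≤ ENNReal.ofReal ((u:ℚ):ℝ) := by
        calc ENNReal.ofReal ((g₀:ℚ):ℝ) ≤ mu := hle_mu g₀ hg₀A
          _ = lam := h1
          _ ≤ ENNReal.ofReal ((u:ℚ):ℝ) := hlam_le u huA
      have heq := le_antisymm h1u h2u
      have hunn : (0:ℝ) ≤ (u:ℝ) := by exact_mod_cast (hpos u (hAmem u huA).1)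
      have hgnn : (0:ℝ) ≤ (g₀:ℝ) := by exact_mod_cast (hpos g₀ (hAmem g₀ hg₀A).1)
      have : (u:ℝ) = (g₀:ℝ) := by
        have := (ENNReal.ofReal_eq_ofReal_iff hunn hgnn).1 heq
        exact this
      exact_mod_cast this
    obtain ⟨hgH, hgpos, -⟩ := hAmem g₀ hg₀A
    refine ⟨(AddEquiv.ofBijective ((multiplesHom H) ⟨g₀, hgH⟩) ⟨?_, ?_⟩).symm⟩
    · intro a b hab
      have hval : (a:ℚ) * g₀ = (b:ℚ) * g₀ := by
        have h2 := congrArg (fun z : H => (z:ℚ)) hab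
        simpa [multiplesHom_apply, nsmul_eq_mul] using h2
      have : (a:ℚ) = (b:ℚ) := mul_right_cancel₀ (ne_of_gt hgpos) hval
      exact_mod_cast this
    · intro x
      rcases eq_or_ne (x:ℚ) 0 with h | h
      · refine ⟨0, ?_⟩
        ext
        simp [multiplesHom_apply, h]
      · obtain ⟨k, f, hfA, hfs⟩ := hLne (x:ℚ) x.2 h
        refine ⟨k, ?_⟩
        ext
        have hfg : ∀ i, f i = g₀ := fun i => hall _ (hfA i)
        have : (x:ℚ) = (k:ℚ) * g₀ := by
          rw [hfs]
          calc ∑ i : Fin k, f i = ∑ _i : Fin k, g₀ := Finset.sum_congr rfl fun i _ => hfg i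
            _ = (k:ℚ) * g₀ := fin_sum_const k g₀
        rw [show (((multiplesHom ↥H) ⟨g₀, hgH⟩ k : H) : ℚ) = (k:ℚ) * g₀ from by
          simp [multiplesHom_apply, nsmul_eq_mul]]
        exact this.symm
  · -- H ≃+ ℕ → elasticity = 1
    rintro ⟨e⟩
    set g' : H := e.symm 1 with hg'
    have hrep : ∀ x : H, x = (e x) • g' := by
      intro x
      apply e.injective
      rw [map_nsmul, hg', e.apply_symm_apply, smul_eq_mul, mul_one]
    set g : ℚ := (g' : ℚ) with hg
    have hgH : g ∈ H := g'.2
    have hg0 : g ≠ 0 := by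
      intro h
      have hz : g' = 0 := Subtype.ext h
      have : (1:ℕ) = 0 := by
        calc (1:ℕ) = e g' := by rw [hg']; simp
          _ = e 0 := by rw [hz]
          _ = 0 := by simp
      exact one_ne_zero this
    have hgpos : 0 < g := hxpos g hgH hg0
    -- every x ∈ H is a natural multiple of g
    have hmult : ∀ x ∈ H, ∃ n : ℕ, x = (n:ℚ) * g := by
      intro x hx
      refine ⟨e ⟨x, hx⟩, ?_⟩
      have := hrep ⟨x, hx⟩
      have hval := congrArg (fun z : H => (z:ℚ)) this
      simpa [nsmul_eq_mul] using hval
    have hmult0 : ∀ x ∈ H, x ≠ 0 → ∃ n : ℕ, 0 < n ∧ x = (n:ℚ) * g := by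
      intro x hx hx0
      obtain ⟨n, hn⟩ := hmult x hx
      refine ⟨n, ?_, hn⟩
      rcases Nat.eq_zero_or_pos n with h | h
      · exfalso; apply hx0; rw [hn, h]; simp
      · exact h
    -- the atoms are exactly {g}
    have hAg : A = {g} := by
      ext u
      constructor
      · intro huA
        obtain ⟨huH, hu0, hnd⟩ := huA
        obtain ⟨n, hnpos, hn⟩ := hmult0 u huH hu0
        rcases eq_or_lt_of_le (Nat.one_le_iff_ne_zero.2 (Nat.pos_iff_ne_zero.1 hnpos)) with h1 | h1
        · show u = g
          rw [hn, ← h1]; simp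
        · exfalso
          apply hnd
          refine ⟨g, hgH, ((n-1:ℕ):ℚ) * g, ?_, hg0, ?_, ?_⟩
          · have := AddSubmonoid.nsmul_mem H hgH (n-1)
            rwa [nsmul_eq_mul] at this
          · have hn1 : 0 < n - 1 := by omega
            have : (0:ℚ) < ((n-1:ℕ):ℚ) := by exact_mod_cast hn1
            positivity
          · rw [hn]
            have hcast : ((n:ℚ)) = 1 + ((n-1:ℕ):ℚ) := by
              rw [Nat.cast_sub (by omega : 1 ≤ n)]; ring
            rw [hcast]; ring
      · intro hu
        have hueq : u = g := hu
        subst hueq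
        refine ⟨hgH, hg0, ?_⟩
        rintro ⟨x, hxH, y, hyH, hx0, hy0, hxy⟩
        obtain ⟨nx, hnxp, hnx⟩ := hmult0 x hxH hx0
        obtain ⟨ny, hnyp, hny⟩ := hmult0 y hyH hy0
        have hsum2 : (1:ℚ) * g = ((nx + ny : ℕ):ℚ) * g := by
          push_cast
          rw [one_mul, add_mul, ← hnx, ← hny]
          exact hxy
        have h1 : (1:ℚ) = ((nx+ny:ℕ):ℚ) := mul_right_cancel₀ hg0 hsum2
        have : (1:ℕ) = nx + ny := by exact_mod_cast h1
        omega
    have hgne : ENNReal.ofReal (g:ℝ) ≠ 0 := by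
      refine ne_of_gt (ENNReal.ofReal_pos.2 ?_)
      exact_mod_cast hgpos
    have hmug : mu = ENNReal.ofReal (g:ℝ) := by rw [hmu, hAg]; simp
    have hlamg : lam = ENNReal.ofReal (g:ℝ) := by rw [hlam, hAg]; simp
    rw [main, hmug, hlamg]
    exact ENNReal.div_self hgne ENNReal.ofReal_ne_top
end

section
/- Let H be a strongly primary Puiseux monoid with finite elasticity ρ(H) < ∞. Then the conductor (H : Ĥ) is nonempty. -/
open scoped ENNReal

/-- Concatenating factorizations. -/
lemma PuiseuxL.concat {H : AddSubmonoid ℚ} {z₁ z₂ : ℚ} {k₁ k₂ : ℕ}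
    (h₁ : k₁ ∈ PuiseuxL H z₁) (h₂ : k₂ ∈ PuiseuxL H z₂) :
    k₁ + k₂ ∈ PuiseuxL H (z₁ + z₂) := by
  obtain ⟨f₁, ha₁, hs₁⟩ := h₁
  obtain ⟨f₂, ha₂, hs₂⟩ := h₂
  refine ⟨Fin.append f₁ f₂, ?_, ?_⟩
  · intro i
    refine Fin.addCases (motive := fun i => PuiseuxAtom H (Fin.append f₁ f₂ i)) ?_ ?_ i
    · intro j; simpa [Fin.append_left] using ha₁ j
    · intro j; simpa [Fin.append_right] using ha₂ j
  · rw [Fin.sum_univ_add]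
    simp only [Fin.append_left, Fin.append_right]
    rw [← hs₁, ← hs₂]

/-- Every nonzero element of a Puiseux monoid bounded below by `lam > 0`
has an atomic factorization. -/
lemma puiseux_exists_fact (H : AddSubmonoid ℚ) (lam : ℚ) (hlam : 0 < lam)
    (hlow : ∀ x ∈ H, x ≠ 0 → lam ≤ x) :
    ∀ z ∈ H, z ≠ 0 → ∃ l, 1 ≤ l ∧ l ∈ PuiseuxL H z := by
  have main : ∀ n : ℕ, ∀ z ∈ H, z ≠ 0 → z ≤ (n : ℚ) * lam →
      ∃ l, 1 ≤ l ∧ l ∈ PuiseuxL H z := by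
    intro n
    induction n with
    | zero =>
      intro z hz hz0 hb
      have := hlow z hz hz0
      exfalso; push_cast at hb; linarith
    | succ n ih =>
      intro z hz hz0 hb
      by_cases hat : PuiseuxAtom H z
      · exact ⟨1, le_rfl, ⟨fun _ => z, fun _ => hat, by simp⟩⟩
      · have hsplit : ∃ p ∈ H, ∃ q ∈ H, p ≠ 0 ∧ q ≠ 0 ∧ z = p + q := by
          by_contra hc; exact hat ⟨hz, hz0, hc⟩
        obtain ⟨p, hpH, q, hqH, hp0, hq0, hzpq⟩ := hsplit
        have hpl := hlow p hpH hp0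
        have hql := hlow q hqH hq0
        have hpb : p ≤ (n : ℚ) * lam := by push_cast at hb ⊢; linarith
        have hqb : q ≤ (n : ℚ) * lam := by push_cast at hb ⊢; linarith
        obtain ⟨l₁, hl₁, hL₁⟩ := ih p hpH hp0 hpb
        obtain ⟨l₂, hl₂, hL₂⟩ := ih q hqH hq0 hqb
        exact ⟨l₁ + l₂, by omega, hzpq ▸ PuiseuxL.concat hL₁ hL₂⟩
  intro z hz hz0
  obtain ⟨n, hn⟩ := exists_nat_ge (z / lam)
  refine main n z hz hz0 ?_
  rw [div_le_iff₀ hlam] at hn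
  linarith

/-- A sum of `k` nonzero elements has an atomic factorization of length at
least `k`. -/
lemma puiseux_pieces_fact (H : AddSubmonoid ℚ) (lam : ℚ) (hlam : 0 < lam)
    (hlow : ∀ x ∈ H, x ≠ 0 → lam ≤ x) :
    ∀ (k : ℕ) (f : Fin k → ℚ), (∀ i, f i ∈ H ∧ f i ≠ 0) →
      ∃ l, k ≤ l ∧ l ∈ PuiseuxL H (∑ i, f i) := by
  intro k
  induction k with
  | zero => intro f _; exact ⟨0, le_rfl, ⟨f, fun i => i.elim0, rfl⟩⟩
  | succ k ih =>
    intro f hf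
    obtain ⟨l₀, hl₀, hL₀⟩ :=
      puiseux_exists_fact H lam hlam hlow (f 0) (hf 0).1 (hf 0).2
    obtain ⟨l', hl', hL'⟩ := ih (fun i => f i.succ) (fun i => hf i.succ)
    refine ⟨l₀ + l', by omega, ?_⟩
    have := PuiseuxL.concat hL₀ hL'
    rwa [← Fin.sum_univ_succ] at this

/-- Merging a tuple of nonzero elements into a shorter tuple with the same sum. -/
lemma puiseux_merge (H : AddSubmonoid ℚ) (hpos : ∀ x ∈ H, 0 ≤ x) (n : ℕ) (hn : 0 < n) :
    ∀ k, n ≤ k → ∀ f : Fin k → ℚ, (∀ i, f i ∈ H ∧ f i ≠ 0) →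
      ∃ g : Fin n → ℚ, (∀ i, g i ∈ H ∧ g i ≠ 0) ∧ (∑ i, g i) = ∑ i, f i := by
  intro k
  induction k with
  | zero => intro hk; exact absurd hk (by omega)
  | succ k ih =>
    intro hk f hf
    rcases eq_or_lt_of_le hk with heq | hlt
    · subst heq; exact ⟨f, hf, rfl⟩
    · have hk' : n ≤ k := by omega
      have hk1 : 1 ≤ k := by omega
      classical
      set j₀ : Fin k := ⟨k - 1, by omega⟩ with hj₀
      set f' : Fin k → ℚ :=
        Function.update (fun i => f i.castSucc) j₀
          (f j₀.castSucc + f (Fin.last k)) with hf'def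
      have hpos' : ∀ i : Fin (k+1), 0 < f i := fun i =>
        lt_of_le_of_ne (hpos _ (hf i).1) (Ne.symm (hf i).2)
      have hf' : ∀ i, f' i ∈ H ∧ f' i ≠ 0 := by
        intro i
        by_cases hij : i = j₀
        · subst hij
          constructor
          · simp only [hf'def, Function.update_self]
            exact H.add_mem (hf _).1 (hf _).1
          · simp only [hf'def, Function.update_self]
            have := hpos' j₀.castSucc
            have := hpos' (Fin.last k)
            positivity
        · simp only [hf'def, Function.update_of_ne hij]
          exact hf _
      have hsum : (∑ i, f' i) = ∑ i, f i := by
        rw [Fin.sum_univ_castSucc (f := f)]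
        rw [← Finset.add_sum_erase _ f' (Finset.mem_univ j₀),
            ← Finset.add_sum_erase _ (fun i => f i.castSucc) (Finset.mem_univ j₀)]
        have h1 : f' j₀ = f j₀.castSucc + f (Fin.last k) := by
          simp [hf'def]
        have h2 : (∑ i ∈ Finset.univ.erase j₀, f' i)
            = ∑ i ∈ Finset.univ.erase j₀, f i.castSucc := by
          refine Finset.sum_congr rfl ?_
          intro i hi
          have : i ≠ j₀ := (Finset.mem_erase.1 hi).1
          simp [hf'def, Function.update_of_ne this]
        rw [h1, h2]; ring
      obtain ⟨g, hg, hgs⟩ := ih hk' f' hf'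
      exact ⟨g, hg, by rw [hgs, hsum]⟩

/-- Strong primariness applies to any tuple of at least `n` nonzero elements. -/
lemma puiseux_absorb (H : AddSubmonoid ℚ) (hpos : ∀ x ∈ H, 0 ≤ x) (a : ℚ) (n : ℕ)
    (hn : 0 < n)
    (ha : ∀ f : Fin n → ℚ, (∀ i, f i ∈ H ∧ f i ≠ 0) → ∃ h ∈ H, (∑ i, f i) = a + h)
    (k : ℕ) (hk : n ≤ k) (f : Fin k → ℚ) (hf : ∀ i, f i ∈ H ∧ f i ≠ 0) :
    ∃ h ∈ H, (∑ i, f i) = a + h := by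
  obtain ⟨g, hg, hgs⟩ := puiseux_merge H hpos n hn k hk f hf
  obtain ⟨h, hH, he⟩ := ha g hg
  exact ⟨h, hH, by rw [← hgs]; exact he⟩

/-- Finite elasticity gives a uniform ratio bound between any two
factorization lengths of the same element. -/
lemma puiseux_exists_rho (H : AddSubmonoid ℚ) (hfin : PuiseuxElasticity H ≠ ⊤) :
    ∃ ρ : ℕ, 1 ≤ ρ ∧ ∀ z, z ∈ H → z ≠ 0 →
      ∀ l l', l ∈ PuiseuxL H z → l' ∈ PuiseuxL H z → l ≤ ρ * l' := by
  classical
  set E := PuiseuxElasticity H with hE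
  refine ⟨⌈E.toReal⌉₊ + 1, by omega, ?_⟩
  intro z hz hz0 l l' hl hl'
  have hne0 : ∀ k ∈ PuiseuxL H z, k ≠ 0 := by
    intro k hk h0
    subst h0
    obtain ⟨f, _, hs⟩ := hk
    exact hz0 (by simpa using hs)
  have hS : (l : ℝ≥0∞) ≤ ⨆ k ∈ PuiseuxL H z, (k : ℝ≥0∞) :=
    le_biSup (fun k : ℕ => (k : ℝ≥0∞)) hl
  have hI : (⨅ k ∈ PuiseuxL H z, (k : ℝ≥0∞)) ≤ (l' : ℝ≥0∞) :=
    biInf_le (fun k : ℕ => (k : ℝ≥0∞)) hl'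
  have hI1 : (1 : ℝ≥0∞) ≤ ⨅ k ∈ PuiseuxL H z, (k : ℝ≥0∞) := by
    refine le_iInf₂ ?_
    intro k hk
    exact_mod_cast Nat.one_le_iff_ne_zero.2 (hne0 k hk)
  have hInetop : (⨅ k ∈ PuiseuxL H z, (k : ℝ≥0∞)) ≠ ⊤ :=
    ne_top_of_le_ne_top (by simp) hI
  have hIne0 : (⨅ k ∈ PuiseuxL H z, (k : ℝ≥0∞)) ≠ 0 :=
    (zero_lt_one.trans_le hI1).ne'
  have hdiv : (⨆ k ∈ PuiseuxL H z, (k : ℝ≥0∞)) / (⨅ k ∈ PuiseuxL H z, (k : ℝ≥0∞)) ≤ E := by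
    rw [hE]
    exact le_biSup
      (fun a : ℚ => (⨆ k ∈ PuiseuxL H a, (k : ℝ≥0∞)) / ⨅ k ∈ PuiseuxL H a, (k : ℝ≥0∞))
      (show z ∈ {x : ℚ | x ∈ H ∧ x ≠ 0} from ⟨hz, hz0⟩)
  have hmul : (⨆ k ∈ PuiseuxL H z, (k : ℝ≥0∞)) ≤ E * ⨅ k ∈ PuiseuxL H z, (k : ℝ≥0∞) :=
    (ENNReal.div_le_iff_le_mul (Or.inl hIne0) (Or.inl hInetop)).1 hdiv
  have hEρ : E ≤ ((⌈E.toReal⌉₊ + 1 : ℕ) : ℝ≥0∞) := by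
    calc E = ENNReal.ofReal E.toReal := (ENNReal.ofReal_toReal hfin).symm
      _ ≤ ENNReal.ofReal ((⌈E.toReal⌉₊ + 1 : ℕ) : ℝ) := by
          refine ENNReal.ofReal_le_ofReal ?_
          push_cast
          have := Nat.le_ceil E.toReal
          linarith
      _ = ((⌈E.toReal⌉₊ + 1 : ℕ) : ℝ≥0∞) := ENNReal.ofReal_natCast _
  have hfinal : (l : ℝ≥0∞) ≤ (((⌈E.toReal⌉₊ + 1) * l' : ℕ) : ℝ≥0∞) := by
    calc (l : ℝ≥0∞) ≤ ⨆ k ∈ PuiseuxL H z, (k : ℝ≥0∞) := hS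
      _ ≤ E * ⨅ k ∈ PuiseuxL H z, (k : ℝ≥0∞) := hmul
      _ ≤ ((⌈E.toReal⌉₊ + 1 : ℕ) : ℝ≥0∞) * (l' : ℝ≥0∞) := mul_le_mul' hEρ hI
      _ = (((⌈E.toReal⌉₊ + 1) * l' : ℕ) : ℝ≥0∞) := by push_cast; ring
  exact_mod_cast hfinal

/-- A strongly primary Puiseux monoid with finite elasticity has nonempty
conductor (H : Ĥ). -/
theorem puiseux_finite_elasticity_conductor (H : AddSubmonoid ℚ)
    (hpos : ∀ x ∈ H, 0 ≤ x) (hnt : ∃ x ∈ H, x ≠ 0)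
    (hsp : ∀ a ∈ H, a ≠ 0 → ∃ n : ℕ, 0 < n ∧ ∀ f : Fin n → ℚ,
      (∀ i, f i ∈ H ∧ f i ≠ 0) → ∃ h ∈ H, (∑ i, f i) = a + h)
    (hfin : PuiseuxElasticity H ≠ ⊤) :
    ∃ x ∈ (AddSubgroup.closure (H : Set ℚ) : Set ℚ),
      ∀ y ∈ {x ∈ (AddSubgroup.closure (H : Set ℚ) : Set ℚ) |
        ∃ c ∈ H, ∀ m : ℕ, c + (m : ℚ) * x ∈ H}, x + y ∈ H := by
  classical
  obtain ⟨u0, hu0H, hu0ne⟩ := hnt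
  have hu0pos : 0 < u0 := lt_of_le_of_ne (hpos u0 hu0H) (Ne.symm hu0ne)
  obtain ⟨n0, hn01, hn0⟩ := hsp u0 hu0H hu0ne
  -- lower bound on nonzero elements
  set lam : ℚ := u0 / n0 with hlamdef
  have hn0Q : (0 : ℚ) < (n0 : ℚ) := by exact_mod_cast hn01
  have hlam : 0 < lam := div_pos hu0pos hn0Q
  have hlow : ∀ x ∈ H, x ≠ 0 → lam ≤ x := by
    intro x hx hx0
    have hxpos : 0 < x := lt_of_le_of_ne (hpos x hx) (Ne.symm hx0)
    obtain ⟨h, hhH, heq⟩ := hn0 (fun _ => x) (fun _ => ⟨hx, hx0⟩)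
    have hsum : (∑ _i : Fin n0, x) = (n0 : ℚ) * x := by
      simp [Finset.sum_const, Finset.card_univ, nsmul_eq_mul]
    rw [hsum] at heq
    have hh := hpos h hhH
    rw [hlamdef, div_le_iff₀ hn0Q]
    nlinarith
  obtain ⟨ρ, hρ1, hrho⟩ := puiseux_exists_rho H hfin
  set N : ℕ := 2 * ρ * n0 with hNdef
  have hN2 : 2 ≤ N := by
    have h : 2 * 1 * 1 ≤ 2 * ρ * n0 :=
      Nat.mul_le_mul (Nat.mul_le_mul (le_refl 2) hρ1) hn01
    rw [hNdef]; omega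
  set X : ℚ := (N : ℚ) * u0 with hXdef
  have hXH : X ∈ H := by
    have := AddSubmonoid.nsmul_mem H hu0H N
    rwa [nsmul_eq_mul] at this
  refine ⟨X, AddSubgroup.subset_closure hXH, ?_⟩
  intro y hy
  obtain ⟨hyG, c, hcH, hc⟩ := hy
  by_cases hyH : y ∈ H
  · exact H.add_mem hXH hyH
  -- y ∉ H
  have hy0 : y ≠ 0 := fun h => hyH (h ▸ H.zero_mem)
  have hypos : 0 < y := by
    rcases lt_trichotomy y 0 with hneg | h0 | hp
    · exfalso
      obtain ⟨m, hm⟩ := exists_nat_gt (c / (-y))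
      have h1 := hpos _ (hc m)
      have hny : (0 : ℚ) < -y := by linarith
      have := (div_lt_iff₀ hny).1 hm
      nlinarith
    · exact absurd h0 hy0
    · exact hp
  have hcne : c ≠ 0 := by
    intro h
    apply hyH
    have := hc 1
    simpa [h] using this
  have hcpos : 0 < c := lt_of_le_of_ne (hpos c hcH) (Ne.symm hcne)
  obtain ⟨nc, hnc1, hnc⟩ := hsp c hcH hcne
  -- the sequence K m
  have hPnc : ∀ m : ℕ, (nc : ℚ) * u0 + (m : ℚ) * y ∈ H := by
    intro m
    have hcmy : c + (m : ℚ) * y ∈ H := hc m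
    have hcmyne : c + (m : ℚ) * y ≠ 0 := by
      have : (0:ℚ) ≤ (m : ℚ) * y := by positivity
      intro h; nlinarith [hcpos]
    set f : Fin (nc + 1) → ℚ := Fin.cons (c + (m : ℚ) * y) (fun _ => u0) with hfdef
    have hfp : ∀ i, f i ∈ H ∧ f i ≠ 0 := by
      intro i
      refine Fin.cases ?_ ?_ i
      · simpa [hfdef] using ⟨hcmy, hcmyne⟩
      · intro j; simpa [hfdef] using ⟨hu0H, hu0ne⟩
    obtain ⟨h, hhH, heq⟩ :=
      puiseux_absorb H hpos c nc hnc1 hnc (nc + 1) (by omega) f hfp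
    have hsumf : (∑ i, f i) = (c + (m : ℚ) * y) + (nc : ℚ) * u0 := by
      simp [hfdef, Fin.sum_cons, Finset.sum_const, Finset.card_univ, nsmul_eq_mul]
    rw [hsumf] at heq
    have : (nc : ℚ) * u0 + (m : ℚ) * y = h := by linarith
    rw [this]; exact hhH
  have hP : ∀ m : ℕ, ∃ k : ℕ, (k : ℚ) * u0 + (m : ℚ) * y ∈ H :=
    fun m => ⟨nc, hPnc m⟩
  set K : ℕ → ℕ := fun m => Nat.find (hP m) with hKdef
  have hK : ∀ m, ((K m : ℚ)) * u0 + (m : ℚ) * y ∈ H := fun m => Nat.find_spec (hP m)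
  have hKmin : ∀ m j, j < K m → ¬ ((j : ℚ) * u0 + (m : ℚ) * y ∈ H) :=
    fun m j hj => Nat.find_min (hP m) hj
  have hKb : ∀ m, K m ≤ nc := fun m => Nat.find_le (hPnc m)
  have hK1 : 1 ≤ K 1 := by
    rcases Nat.eq_zero_or_pos (K 1) with h0 | h1
    · exfalso
      have := hK 1
      rw [h0] at this
      simp only [Nat.cast_zero, zero_mul, Nat.cast_one, one_mul, zero_add] at this
      exact hyH this
    · exact h1
  -- find a descent point
  have hmstar : ∃ m, 1 ≤ m ∧ 1 ≤ K m ∧ K (m + 1) ≤ K m := by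
    by_contra hno
    push_neg at hno
    have grow : ∀ j, 1 + j ≤ K (1 + j) := by
      intro j
      induction j with
      | zero => simpa using hK1
      | succ j ih =>
        have h1 : 1 ≤ K (1 + j) := le_trans (by omega) ih
        have hlt := hno (1 + j) (by omega) h1
        have e : 1 + (j + 1) = (1 + j) + 1 := by omega
        rw [e]
        omega
    have h1 := grow nc
    have h2 := hKb (1 + nc)
    omega
  obtain ⟨m, hm1, hKm1, hKle⟩ := hmstar
  set w : ℚ := ((K m : ℚ)) * u0 + (m : ℚ) * y with hwdef
  have hwH : w ∈ H := hK m
  have hwpos : 0 < w := by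
    have h1 : (1 : ℚ) ≤ (K m : ℚ) := by exact_mod_cast hKm1
    have h2 : (0:ℚ) ≤ (m : ℚ) * y := by positivity
    nlinarith
  have hwne : w ≠ 0 := (ne_of_gt hwpos)
  have hwsub : ¬ (((K m - 1 : ℕ) : ℚ) * u0 + (m : ℚ) * y ∈ H) :=
    hKmin m (K m - 1) (by omega)
  have hwy : w + y ∈ H := by
    have h2 := hK (m + 1)
    have h3 : ((K m - K (m+1) : ℕ) : ℚ) * u0 ∈ H := by
      have := AddSubmonoid.nsmul_mem H hu0H (K m - K (m+1))
      rwa [nsmul_eq_mul] at this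
    have h4 := H.add_mem h2 h3
    have e : w + y = (((K (m+1) : ℚ)) * u0 + ((m + 1 : ℕ) : ℚ) * y)
        + ((K m - K (m+1) : ℕ) : ℚ) * u0 := by
      rw [hwdef]
      push_cast [Nat.cast_sub hKle]
      ring
    rw [e]; exact h4
  have hwype : 0 < w + y := by linarith
  -- w has only short factorizations
  obtain ⟨lw, hlw1, hlwL⟩ := puiseux_exists_fact H lam hlam hlow w hwH hwne
  have hlw_lt : lw < n0 := by
    by_contra hge
    push_neg at hge
    obtain ⟨f, hfat, hfsum⟩ := hlwL
    have hfp : ∀ i, f i ∈ H ∧ f i ≠ 0 := fun i => ⟨(hfat i).1, (hfat i).2.1⟩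
    obtain ⟨h, hhH, heq⟩ := puiseux_absorb H hpos u0 n0 hn01 hn0 lw hge f hfp
    rw [← hfsum] at heq
    apply hwsub
    have e : ((K m - 1 : ℕ) : ℚ) * u0 + (m : ℚ) * y = h := by
      rw [hwdef] at heq
      push_cast [Nat.cast_sub hKm1]
      linarith
    rw [e]; exact hhH
  -- absorption: every sum of at least N nonzero pieces dominates w
  obtain ⟨nw, hnw1, hnw⟩ := hsp w hwH hwne
  have absorbW : ∀ (kk : ℕ) (f : Fin kk → ℚ), N ≤ kk →
      (∀ i, f i ∈ H ∧ f i ≠ 0) → ∃ h ∈ H, (∑ i, f i) = w + h := by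
    intro kk f hkN hfp
    set z : ℚ := ∑ i, f i with hzdef
    have hzH : z ∈ H := AddSubmonoid.sum_mem H (fun i _ => (hfp i).1)
    have hzpos : 0 < z := by
      refine Finset.sum_pos (fun i _ => lt_of_le_of_ne (hpos _ (hfp i).1)
        (Ne.symm (hfp i).2)) ⟨⟨0, by omega⟩, Finset.mem_univ _⟩
    -- the auxiliary sum with extra copies of u0
    have happend : ∀ jj : ℕ, ∃ l, kk + jj ≤ l ∧
        l ∈ PuiseuxL H (z + (jj : ℚ) * u0) := by
      intro jj
      set g : Fin (kk + jj) → ℚ := Fin.append f (fun _ => u0) with hgdef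
      have hgp : ∀ i, g i ∈ H ∧ g i ≠ 0 := by
        intro i
        refine Fin.addCases (motive := fun i => g i ∈ H ∧ g i ≠ 0) ?_ ?_ i
        · intro j; simpa [hgdef, Fin.append_left] using hfp j
        · intro j; simpa [hgdef, Fin.append_right] using ⟨hu0H, hu0ne⟩
      have hgsum : (∑ i, g i) = z + (jj : ℚ) * u0 := by
        rw [hgdef, Fin.sum_univ_add]
        simp [Fin.append_left, Fin.append_right, Finset.sum_const,
          Finset.card_univ, nsmul_eq_mul, hzdef]
      obtain ⟨l, hl, hlL⟩ :=
        puiseux_pieces_fact H lam hlam hlow (kk + jj) g hgp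
      rw [hgsum] at hlL
      exact ⟨l, hl, hlL⟩
    have hgsump : ∀ jj : ℕ, ∃ gg : Fin (kk + jj) → ℚ,
        (∀ i, gg i ∈ H ∧ gg i ≠ 0) ∧ (∑ i, gg i) = z + (jj : ℚ) * u0 := by
      intro jj
      refine ⟨Fin.append f (fun _ => u0), ?_, ?_⟩
      · intro i
        refine Fin.addCases (motive := fun i =>
          Fin.append f (fun _ => u0) i ∈ H ∧ Fin.append f (fun _ => u0) i ≠ 0) ?_ ?_ i
        · intro j; simpa [Fin.append_left] using hfp j
        · intro j; simpa [Fin.append_right] using ⟨hu0H, hu0ne⟩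
      · rw [Fin.sum_univ_add]
        simp [Fin.append_left, Fin.append_right, Finset.sum_const,
          Finset.card_univ, nsmul_eq_mul, hzdef]
    have hQ : ∃ j : ℕ, ∃ h ∈ H, z + (j : ℚ) * u0 = w + h := by
      obtain ⟨gg, hggp, hggs⟩ := hgsump nw
      obtain ⟨h, hhH, heq⟩ :=
        puiseux_absorb H hpos w nw hnw1 hnw (kk + nw) (by omega) gg hggp
      exact ⟨nw, h, hhH, by rw [← hggs]; exact heq⟩
    obtain ⟨Ew, hEwH, hEweq⟩ := Nat.find_spec hQ
    set jst : ℕ := Nat.find hQ with hjstdef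
    rcases Nat.eq_zero_or_pos jst with hj0 | hj1
    · refine ⟨Ew, hEwH, ?_⟩
      rw [hj0] at hEweq
      simpa using hEweq
    · exfalso
      have hFH : z + (jst : ℚ) * u0 ∈ H := by rw [hEweq]; exact H.add_mem hwH hEwH
      have hFpos : 0 < z + (jst : ℚ) * u0 := by
        have : (0:ℚ) ≤ (jst : ℚ) * u0 := by positivity
        linarith
      -- short factorization of F
      have hshort : ∃ l₂, l₂ ≤ 2 * n0 - 2 ∧ l₂ ∈ PuiseuxL H (z + (jst : ℚ) * u0) := by
        by_cases hE0 : Ew = 0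
        · refine ⟨lw, by omega, ?_⟩
          have : z + (jst : ℚ) * u0 = w := by rw [hEweq, hE0, add_zero]
          rw [this]
          exact hlwL
        · obtain ⟨lE, hlE1, hlEL⟩ := puiseux_exists_fact H lam hlam hlow Ew hEwH hE0
          have hlE_lt : lE < n0 := by
            by_contra hge
            push_neg at hge
            obtain ⟨fE, hfEat, hfEsum⟩ := hlEL
            have hfEp : ∀ i, fE i ∈ H ∧ fE i ≠ 0 :=
              fun i => ⟨(hfEat i).1, (hfEat i).2.1⟩
            obtain ⟨h', hh'H, heq'⟩ :=
              puiseux_absorb H hpos u0 n0 hn01 hn0 lE hge fE hfEp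
            rw [← hfEsum] at heq'
            -- contradicts minimality of jst
            have : ∃ h ∈ H, z + ((jst - 1 : ℕ) : ℚ) * u0 = w + h := by
              refine ⟨h', hh'H, ?_⟩
              push_cast [Nat.cast_sub hj1]
              have : z + (jst : ℚ) * u0 = w + u0 + h' := by rw [hEweq, heq']; ring
              linarith
            exact Nat.find_min hQ (show jst - 1 < jst by omega) this
          refine ⟨lw + lE, by omega, ?_⟩
          have := PuiseuxL.concat hlwL hlEL
          rwa [← hEweq] at this
      obtain ⟨l₂, hl₂le, hl₂L⟩ := hshort
      obtain ⟨l₁, hl₁ge, hl₁L⟩ := happend jst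
      have hratio := hrho (z + (jst : ℚ) * u0) hFH (ne_of_gt hFpos) l₁ l₂ hl₁L hl₂L
      -- numbers: l₁ ≥ kk + jst ≥ N + 1, but ρ * l₂ ≤ ρ(2n0 - 2) = N - 2ρ < N
      have hcalc : ρ * l₂ ≤ ρ * (2 * n0 - 2) := Nat.mul_le_mul_left ρ hl₂le
      have hkey : ρ * (2 * n0 - 2) + 2 * ρ = N := by
        have h1 : 2 * n0 - 2 + 2 = 2 * n0 := by omega
        have h2 : ρ * (2 * n0 - 2 + 2) = ρ * (2 * n0 - 2) + ρ * 2 :=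
          Nat.mul_add ρ _ 2
        rw [h1] at h2
        have h3 : N = ρ * (2 * n0) := by rw [hNdef]; ring
        omega
      omega
  -- conclude
  set F : Fin (N + 1) → ℚ := Fin.cons (w + y) (fun _ => u0) with hFdef
  have hFp : ∀ i, F i ∈ H ∧ F i ≠ 0 := by
    intro i
    refine Fin.cases ?_ ?_ i
    · simpa [hFdef] using ⟨hwy, ne_of_gt hwype⟩
    · intro j; simpa [hFdef] using ⟨hu0H, hu0ne⟩
  obtain ⟨h, hhH, heq⟩ := absorbW (N + 1) F (by omega) hFp
  have hsumF : (∑ i, F i) = (w + y) + (N : ℚ) * u0 := by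
    simp [hFdef, Fin.sum_cons, Finset.sum_const, Finset.card_univ, nsmul_eq_mul]
  rw [hsumF] at heq
  have : X + y = h := by rw [hXdef]; linarith
  rw [this]; exact hhH
end

section
/- Let H be a strongly primary Puiseux monoid. Then H is finitely generated if and only if its complete integral closure Ĥ is isomorphic to (N₀, +). -/
theorem nat_addSubmonoid_fg (S : AddSubmonoid ℕ) : S.FG := by
  by_cases h : ∀ x ∈ S, x = 0
  · refine ⟨∅, ?_⟩
    simp only [Finset.coe_empty, AddSubmonoid.closure_empty]
    exact le_antisymm bot_le (fun x hx => by simpa [h x hx] using AddSubmonoid.zero_mem ⊥)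
  push_neg at h
  obtain ⟨a, haS, ha0⟩ := h
  have ha : 0 < a := Nat.pos_of_ne_zero ha0
  classical
  set f : ℕ → ℕ := fun r => if h : ∃ x, x ∈ S ∧ x % a = r then Nat.find h else 0 with hf
  refine ⟨insert a ((Finset.range a).image f), ?_⟩
  apply le_antisymm
  · apply AddSubmonoid.closure_le.mpr
    intro x hx
    simp only [Finset.coe_insert, Set.mem_insert_iff, Finset.coe_image, Set.mem_image,
      Finset.mem_coe, Finset.mem_range] at hx
    rcases hx with rfl | ⟨r, _, rfl⟩
    · exact haS
    · by_cases h : ∃ x, x ∈ S ∧ x % a = r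
      · simpa [hf, h] using (Nat.find_spec h).1
      · simpa [hf, h] using S.zero_mem
  · intro x hx
    have hex : ∃ y, y ∈ S ∧ y % a = x % a := ⟨x, hx, rfl⟩
    set m := Nat.find hex with hm
    obtain ⟨hmS, hmr⟩ := Nat.find_spec hex
    have hmx : m ≤ x := Nat.find_min' hex ⟨hx, rfl⟩
    have hdvd : a ∣ x - m := (Nat.modEq_iff_dvd' hmx).mp hmr
    obtain ⟨k, hk⟩ := hdvd
    have hxe : x = m + a * k := by omega
    have hmem : m ∈ AddSubmonoid.closure (↑(insert a ((Finset.range a).image f)) : Set ℕ) := by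
      apply AddSubmonoid.subset_closure
      simp only [Finset.coe_insert, Set.mem_insert_iff, Finset.coe_image, Set.mem_image,
        Finset.mem_coe, Finset.mem_range]
      right
      exact ⟨x % a, Nat.mod_lt _ ha, by simp [hf, hex, ← hm]⟩
    have hamem : a ∈ AddSubmonoid.closure (↑(insert a ((Finset.range a).image f)) : Set ℕ) :=
      AddSubmonoid.subset_closure (by simp)
    rw [hxe]
    exact AddSubmonoid.add_mem _ hmem (by simpa [mul_comm] using AddSubmonoid.nsmul_mem _ hamem k)

theorem mem_closure_sub (H : AddSubmonoid ℚ) (x : ℚ) :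
    x ∈ AddSubgroup.closure (H : Set ℚ) ↔ ∃ a ∈ H, ∃ b ∈ H, x = a - b := by
  constructor
  · intro hx
    refine AddSubgroup.closure_induction (fun y hy => ⟨y, hy, 0, H.zero_mem, by simp⟩)
      ⟨0, H.zero_mem, 0, H.zero_mem, by simp⟩ ?_ ?_ hx
    · rintro y z - - ⟨a, ha, b, hb, rfl⟩ ⟨c, hc, d, hd, rfl⟩
      exact ⟨a + c, H.add_mem ha hc, b + d, H.add_mem hb hd, by ring⟩
    · rintro y - ⟨a, ha, b, hb, rfl⟩
      exact ⟨b, hb, a, ha, by ring⟩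
  · rintro ⟨a, ha, b, hb, rfl⟩
    exact AddSubgroup.sub_mem _ (AddSubgroup.subset_closure ha) (AddSubgroup.subset_closure hb)

theorem den_clear (s : Finset ℚ) : ∀ x ∈ AddSubmonoid.closure (s : Set ℚ),
    ∃ z : ℤ, ((∏ y ∈ s, y.den : ℕ) : ℚ) * x = z := by
  intro x hx
  refine AddSubmonoid.closure_induction ?_ ⟨0, by simp⟩ ?_ hx
  · intro y hy
    obtain ⟨e, he⟩ := Finset.dvd_prod_of_mem (fun y : ℚ => y.den) hy
    refine ⟨(e : ℤ) * y.num, ?_⟩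
    have hden : (y.den : ℚ) * y = y.num := by
      have h0 : (y.den : ℚ) ≠ 0 := Nat.cast_ne_zero.mpr y.den_nz
      rw [mul_comm]
      nth_rewrite 1 [← Rat.num_div_den y]
      rw [div_mul_cancel₀ _ h0]
    rw [he]
    push_cast
    rw [mul_comm (y.den : ℚ), mul_assoc, hden]
  · rintro a b - - ⟨z, hz⟩ ⟨w, hw⟩
    exact ⟨z + w, by rw [mul_add, hz, hw]; push_cast; ring⟩

/-- The complete integral closure of a Puiseux monoid, as an additive
submonoid of ℚ. -/
def PuiseuxCIC (H : AddSubmonoid ℚ) : AddSubmonoid ℚ where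
  carrier := {x ∈ (AddSubgroup.closure (H : Set ℚ) : Set ℚ) |
    ∃ c ∈ H, ∀ m : ℕ, c + (m : ℚ) * x ∈ H}
  zero_mem' := by
    refine ⟨AddSubgroup.zero_mem _, 0, H.zero_mem, fun m => by simpa using H.zero_mem⟩
  add_mem' := by
    rintro x y ⟨hx, c, hc, hcx⟩ ⟨hy, d, hd, hdy⟩
    refine ⟨AddSubgroup.add_mem _ hx hy, c + d, H.add_mem hc hd, fun m => ?_⟩
    have := H.add_mem (hcx m) (hdy m)
    convert this using 1
    ring

theorem mem_PuiseuxCIC {H : AddSubmonoid ℚ} {x : ℚ} : x ∈ PuiseuxCIC H ↔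
    x ∈ AddSubgroup.closure (H : Set ℚ) ∧ ∃ c ∈ H, ∀ m : ℕ, c + (m : ℚ) * x ∈ H :=
  Iff.rfl

/-- Elements of the CIC are nonnegative. -/
theorem PuiseuxCIC_nonneg {H : AddSubmonoid ℚ} (hpos : ∀ x ∈ H, 0 ≤ x)
    {x : ℚ} (hx : x ∈ PuiseuxCIC H) : 0 ≤ x := by
  obtain ⟨-, c, hc, hcm⟩ := hx
  by_contra hneg
  push_neg at hneg
  have hx' : 0 < -x := by linarith
  set t : ℕ := ⌈c / (-x)⌉₊ + 1 with ht
  have h1 : c / (-x) ≤ (⌈c / (-x)⌉₊ : ℚ) := Nat.le_ceil _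
  have h2 : c ≤ (⌈c / (-x)⌉₊ : ℚ) * (-x) := (div_le_iff₀ hx').mp h1
  have h3 : 0 ≤ c + (t : ℚ) * x := hpos _ (hcm t)
  have h4 : (t : ℚ) = (⌈c / (-x)⌉₊ : ℚ) + 1 := by push_cast [ht]; ring
  nlinarith

/-- A strongly primary Puiseux monoid is finitely generated iff its complete
integral closure is isomorphic to (ℕ₀, +). -/
theorem puiseux_fg_iff_cic_nat (H : AddSubmonoid ℚ)
    (hpos : ∀ x ∈ H, 0 ≤ x) (hnt : ∃ x ∈ H, x ≠ 0)
    (hsp : ∀ a ∈ H, a ≠ 0 → ∃ n : ℕ, 0 < n ∧ ∀ f : Fin n → ℚ,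
      (∀ i, f i ∈ H ∧ f i ≠ 0) → ∃ h ∈ H, (∑ i, f i) = a + h) :
    H.FG ↔ Nonempty (PuiseuxCIC H ≃+ ℕ) := by
  constructor
  · rintro ⟨s, hs⟩
    set G := AddSubgroup.closure (H : Set ℚ) with hG
    set d : ℕ := ∏ y ∈ s, y.den with hdd
    have hd : (0 : ℚ) < d := by
      have : 0 < d := Finset.prod_pos (fun y _ => y.pos)
      exact_mod_cast this
    have hintH : ∀ x ∈ H, ∃ z : ℤ, (d : ℚ) * x = z := by
      intro x hx
      exact den_clear s x (by rw [hs]; exact hx)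
    have hintG : ∀ x ∈ G, ∃ z : ℤ, (d : ℚ) * x = z := by
      intro x hx
      obtain ⟨a, ha, b, hb, rfl⟩ := (mem_closure_sub H x).mp hx
      obtain ⟨z, hz⟩ := hintH a ha
      obtain ⟨w, hw⟩ := hintH b hb
      exact ⟨z - w, by rw [mul_sub, hz, hw]; push_cast; ring⟩
    set S : AddSubgroup ℤ :=
      { carrier := {n : ℤ | ((n : ℚ) / d) ∈ G}
        zero_mem' := by simp [G.zero_mem]
        add_mem' := by
          intro a b ha hb
          have := G.add_mem ha hb
          simpa [add_div] using this
        neg_mem' := by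
          intro a ha
          have := G.neg_mem ha
          simpa [neg_div] using this } with hS
    obtain ⟨a, ha⟩ := Int.subgroup_cyclic S
    set g0 : ℚ := (a : ℚ) / d with hg0
    have hg0G : g0 ∈ G := by
      have haS : a ∈ S := by
        rw [ha]
        exact AddSubgroup.subset_closure rfl
      exact haS
    have hmemG : ∀ x, x ∈ G ↔ ∃ k : ℤ, x = k * g0 := by
      intro x
      constructor
      · intro hx
        obtain ⟨z, hz⟩ := hintG x hx
        have hxz : x = (z : ℚ) / d := by
          field_simp
          linarith [hz]
        have hzS : z ∈ S := by
          show ((z : ℚ) / d) ∈ G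
          rw [← hxz]; exact hx
        rw [ha] at hzS
        obtain ⟨k, hk⟩ := AddSubgroup.mem_closure_singleton.mp hzS
        rw [zsmul_eq_mul] at hk
        refine ⟨k, ?_⟩
        rw [hxz, ← hk, hg0]
        push_cast
        ring
      · rintro ⟨k, rfl⟩
        have := G.zsmul_mem hg0G k
        simpa [zsmul_eq_mul] using this
    obtain ⟨x0, hx0H, hx00⟩ := hnt
    have hg00 : g0 ≠ 0 := by
      obtain ⟨k, hk⟩ := (hmemG x0).mp (AddSubgroup.subset_closure hx0H)
      intro h
      rw [h, mul_zero] at hk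
      exact hx00 hk
    set g : ℚ := |g0| with hg
    have hgpos : 0 < g := abs_pos.mpr hg00
    have hmemG' : ∀ x, x ∈ G ↔ ∃ k : ℤ, x = k * g := by
      intro x
      rcases abs_cases g0 with ⟨habs, -⟩ | ⟨habs, -⟩
      · rw [hg, habs]; exact hmemG x
      · rw [hg, habs]
        rw [hmemG x]
        constructor
        · rintro ⟨k, rfl⟩; exact ⟨-k, by push_cast; ring⟩
        · rintro ⟨k, rfl⟩; exact ⟨-k, by push_cast; ring⟩
    have hHg : ∀ x ∈ H, ∃ k : ℕ, x = k * g := by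
      intro x hx
      obtain ⟨k, hk⟩ := (hmemG' x).mp (AddSubgroup.subset_closure hx)
      have hx0 : 0 ≤ x := hpos x hx
      have hk0 : 0 ≤ k := by
        by_contra hneg
        push_neg at hneg
        have : (k : ℚ) < 0 := by exact_mod_cast hneg
        nlinarith
      refine ⟨k.toNat, ?_⟩
      rw [hk]
      congr 1
      exact_mod_cast (Int.toNat_of_nonneg hk0).symm
    have hgG : g ∈ G := (hmemG' g).mpr ⟨1, by ring⟩
    obtain ⟨P, hP, N, hN, hPN⟩ := (mem_closure_sub H g).mp hgG
    obtain ⟨p, hp⟩ := hHg P hP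
    obtain ⟨q, hqe⟩ := hHg N hN
    have hpq : (p : ℚ) = q + 1 := by
      have h1 : ((p : ℚ) - q) * g = 1 * g := by
        rw [hp, hqe] at hPN
        ring_nf
        ring_nf at hPN
        linarith
      have := mul_right_cancel₀ hgpos.ne' h1
      linarith
    set c : ℚ := ((q * q : ℕ) : ℚ) * g with hc
    have hcH : c ∈ H := by
      have := AddSubmonoid.nsmul_mem H hN q
      have heq : q • N = c := by
        rw [nsmul_eq_mul, hqe, hc]
        push_cast
        ring
      rwa [heq] at this
    have habs : ∀ m : ℕ, c + (m : ℚ) * g ∈ H := by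
      intro m
      by_cases hq0 : q = 0
      · have hgP : g = P := by
          rw [hqe, hq0] at hPN
          simpa using hPN
        have : c + (m : ℚ) * g = m • P := by
          rw [nsmul_eq_mul, hc, hq0, hgP]
          push_cast
          ring
        rw [this]
        exact AddSubmonoid.nsmul_mem H hP m
      · have hqpos : 0 < q := Nat.pos_of_ne_zero hq0
        set u := m / q with hu
        set r := m % q with hr
        have hrq : r < q := Nat.mod_lt _ hqpos
        have hm : q * u + r = m := Nat.div_add_mod m q
        have key : (q - r) • N + u • N + r • P ∈ H :=
          H.add_mem (H.add_mem (AddSubmonoid.nsmul_mem H hN _) (AddSubmonoid.nsmul_mem H hN _))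
            (AddSubmonoid.nsmul_mem H hP _)
        have heq : c + (m : ℚ) * g = (q - r) • N + u • N + r • P := by
          rw [nsmul_eq_mul, nsmul_eq_mul, nsmul_eq_mul, hp, hqe, hc]
          rw [Nat.cast_sub hrq.le]
          have hm' : ((q : ℚ) * u + r) = (m : ℚ) := by exact_mod_cast hm
          rw [hpq, ← hm']
          push_cast
          ring
        rw [heq]
        exact key
    have hCIC : ∀ x, x ∈ PuiseuxCIC H ↔ ∃ n : ℕ, x = (n : ℚ) * g := by
      intro x
      constructor
      · intro hx
        have hx0 : 0 ≤ x := PuiseuxCIC_nonneg hpos hx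
        obtain ⟨hxG, -⟩ := hx
        obtain ⟨k, hk⟩ := (hmemG' x).mp hxG
        have hk0 : 0 ≤ k := by
          by_contra hneg
          push_neg at hneg
          have : (k : ℚ) < 0 := by exact_mod_cast hneg
          nlinarith
        refine ⟨k.toNat, ?_⟩
        rw [hk]
        congr 1
        exact_mod_cast (Int.toNat_of_nonneg hk0).symm
      · rintro ⟨n, rfl⟩
        refine ⟨(hmemG' _).mpr ⟨n, by push_cast; ring⟩, c, hcH, fun m => ?_⟩
        have := habs (m * n)
        have heq : c + ((m * n : ℕ) : ℚ) * g = c + (m : ℚ) * ((n : ℚ) * g) := by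
          push_cast
          ring
        rwa [heq] at this
    set φ : ℕ →+ PuiseuxCIC H :=
      { toFun := fun n => ⟨(n : ℚ) * g, (hCIC _).mpr ⟨n, rfl⟩⟩
        map_zero' := Subtype.ext (by simp)
        map_add' := fun n m => Subtype.ext (by push_cast; ring) } with hφ
    have hinj : Function.Injective φ := by
      intro n m h
      have h1 : (n : ℚ) * g = (m : ℚ) * g := congrArg Subtype.val h
      have := mul_right_cancel₀ hgpos.ne' h1
      exact_mod_cast this
    have hsurj : Function.Surjective φ := by
      intro y
      obtain ⟨n, hn⟩ := (hCIC y.1).mp y.2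
      exact ⟨n, Subtype.ext hn.symm⟩
    exact ⟨(AddEquiv.ofBijective φ ⟨hinj, hsurj⟩).symm⟩
  · rintro ⟨e⟩
    set qq : ℚ := ((e.symm 1 : PuiseuxCIC H) : ℚ) with hqq
    have hHsub : ∀ a ∈ H, a ∈ PuiseuxCIC H := by
      intro a ha
      refine ⟨AddSubgroup.subset_closure ha, 0, H.zero_mem, fun m => ?_⟩
      have := AddSubmonoid.nsmul_mem H ha m
      rw [nsmul_eq_mul] at this
      simpa using this
    have hq : ∀ x ∈ PuiseuxCIC H, ∃ n : ℕ, x = (n : ℚ) * qq := by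
      intro x hx
      refine ⟨e ⟨x, hx⟩, ?_⟩
      have h1 : (⟨x, hx⟩ : PuiseuxCIC H) = e.symm (e ⟨x, hx⟩) := (e.symm_apply_apply _).symm
      set n : ℕ := e ⟨x, hx⟩ with hn
      have h2 : e.symm n = n • e.symm 1 := by
        conv_lhs => rw [show n = n • (1 : ℕ) by simp]
        exact map_nsmul e.symm n 1
      have h3 : x = ((n • e.symm 1 : PuiseuxCIC H) : ℚ) := by
        rw [← h2, ← h1]
      rw [h3]
      push_cast
      rw [nsmul_eq_mul]
    obtain ⟨x0, hx0H, hx00⟩ := hnt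
    have hx0pos : 0 < x0 := lt_of_le_of_ne (hpos x0 hx0H) (Ne.symm hx00)
    obtain ⟨n0, hn0⟩ := hq x0 (hHsub x0 hx0H)
    have hqpos : 0 < qq := by
      by_contra h
      push_neg at h
      have : (n0 : ℚ) * qq ≤ 0 := mul_nonpos_of_nonneg_of_nonpos (by positivity) h
      linarith [hn0 ▸ hx0pos]
    set S : AddSubmonoid ℕ :=
      { carrier := {n : ℕ | (n : ℚ) * qq ∈ H}
        zero_mem' := by simpa using H.zero_mem
        add_mem' := by
          intro a b ha hb
          have := H.add_mem ha hb
          show ((a + b : ℕ) : ℚ) * qq ∈ H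
          push_cast
          rw [add_mul]
          exact this } with hSdef
    set ψ : ℕ →+ ℚ :=
      { toFun := fun n => (n : ℚ) * qq
        map_zero' := by simp
        map_add' := fun n m => by push_cast; ring } with hψ
    have hmap : AddSubmonoid.map ψ S = H := by
      ext x
      constructor
      · rintro ⟨n, hn, rfl⟩
        exact hn
      · intro hx
        obtain ⟨n, hn⟩ := hq x (hHsub x hx)
        exact ⟨n, by rw [hSdef]; exact (show ((n:ℚ) * qq ∈ H) from hn ▸ hx), hn.symm⟩
    rw [← hmap]
    exact (nat_addSubmonoid_fg S).map ψ
end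

section
/- Let (αᵢ)ᵢ≥1 be a sequence of positive reals with α = inf αᵢ > 0 and (bᵢ)ᵢ≥1 a sequence of positive integers with bᵢ ∣ bᵢ₊₁ for all i. Define Hᵢ = {0} ∪ (Q≥αᵢ ∩ bᵢ⁻¹·Z) and H = ⋃ᵢ Hᵢ. Then H is a Puiseux monoid whose quotient group equals ⋃ᵢ bᵢ⁻¹·Z, and H is strongly primary with M(H) ≤ 1 + sup{⌈α⁻¹(3αᵢ+1)⌉ : i ∈ N}. -/
/-!
Every nonzero element of `H` lies in some `Hᵢ`, and finitely many elements lie in a common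
`b_K⁻¹ℤ`, since these groups form a chain. Let `A = inf αᵢ`. If `f₀, …, fₖ` are nonzero elements
of `H`, hence each at least `A`, and `a ∈ Hᵢ` satisfies `a + αᵢ ≤ kA`, then `∑ fⱼ - a` lies in
`b_K⁻¹ℤ` for `K` the largest index involved and is at least `αᵢ + fⱼ` for every `j`, hence at
least `α_K`: so `∑ fⱼ ∈ a + H`.
For an atom `u ∈ Hᵢ` we have `u < 2αᵢ + 1`, since otherwise `u = ⌈αᵢ⌉ + (u - ⌈αᵢ⌉)` splits in
`Hᵢ`; this gives the bound on `M(H)`.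
-/

open AddSubgroup

namespace PuiseuxConstruction

lemma mem_zmultiples_inv_iff {n : ℕ} {q : ℚ} :
    q ∈ zmultiples (n : ℚ)⁻¹ ↔ ∃ m : ℤ, q = m / n := by
  simp only [mem_zmultiples_iff, zsmul_eq_mul, div_eq_mul_inv, eq_comm]

lemma zmultiples_inv_le_of_dvd {m n : ℕ} (h : m ∣ n) (hn : n ≠ 0) :
    zmultiples (m : ℚ)⁻¹ ≤ zmultiples (n : ℚ)⁻¹ := by
  obtain ⟨c, rfl⟩ := h
  have hm : (m : ℚ) ≠ 0 := by exact_mod_cast left_ne_zero_of_mul hn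
  have hc : (c : ℚ) ≠ 0 := by exact_mod_cast right_ne_zero_of_mul hn
  refine zmultiples_le_of_mem (mem_zmultiples_inv_iff.2 ⟨c, ?_⟩)
  push_cast
  field_simp

lemma one_mem_zmultiples_inv {n : ℕ} (hn : n ≠ 0) : (1 : ℚ) ∈ zmultiples (n : ℚ)⁻¹ :=
  mem_zmultiples_inv_iff.2 ⟨n, by simp [hn]⟩

lemma add_nsmul_le_sum {M : Type*} [AddCommMonoid M] [Preorder M] [AddLeftMono M] {k : ℕ}
    {A : M} {f : Fin (k + 1) → M} (hf : ∀ j, A ≤ f j) (j : Fin (k + 1)) :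
    f j + k • A ≤ ∑ i, f i := by
  rw [Fin.sum_univ_succAbove f j]
  gcongr
  simpa using Finset.card_nsmul_le_sum Finset.univ _ A fun i _ => hf (j.succAbove i)

/-- `a` absorbs the `n`-fold sumset of `S ∖ {0}`: `n(S ∖ {0}) ⊆ a + S`. -/
def NFoldSumsetSubset {M : Type*} [AddCommMonoid M] (S : Set M) (n : ℕ) (a : M) : Prop :=
  ∀ f : Fin n → M, (∀ j, f j ∈ S ∧ f j ≠ 0) → ∃ h ∈ S, ∑ j, f j = a + h

/-- The paper's `H = ⋃ᵢ ({0} ∪ (ℚ≥αᵢ ∩ Gᵢ))`. -/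
def truncatedUnion (α : ℕ → ℝ) (G : ℕ → AddSubgroup ℚ) : Set ℚ :=
  {0} ∪ ⋃ i, {q : ℚ | α i ≤ q ∧ q ∈ G i}

section

variable {α : ℕ → ℝ} {G : ℕ → AddSubgroup ℚ} {A : ℝ}

lemma zero_mem_truncatedUnion : (0 : ℚ) ∈ truncatedUnion α G := Or.inl rfl

lemma mem_truncatedUnion {i : ℕ} {q : ℚ} (hα : α i ≤ q) (hG : q ∈ G i) :
    q ∈ truncatedUnion α G :=
  Or.inr (Set.mem_iUnion.2 ⟨i, hα, hG⟩)

lemma exists_of_mem_truncatedUnion {q : ℚ} (hq : q ∈ truncatedUnion α G) (hq0 : q ≠ 0) :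
    ∃ i, α i ≤ q ∧ q ∈ G i := by
  simpa [truncatedUnion, hq0] using hq

lemma le_of_mem_truncatedUnion (hα : ∀ i, A ≤ α i) {q : ℚ} (hq : q ∈ truncatedUnion α G)
    (hq0 : q ≠ 0) : A ≤ q := by
  obtain ⟨i, hi, -⟩ := exists_of_mem_truncatedUnion hq hq0
  exact (hα i).trans hi

lemma nonneg_of_mem_truncatedUnion (hα : ∀ i, 0 ≤ α i) {q : ℚ}
    (hq : q ∈ truncatedUnion α G) : 0 ≤ q := by
  rcases eq_or_ne q 0 with rfl | hq0
  · rfl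
  · exact_mod_cast le_of_mem_truncatedUnion hα hq hq0

lemma add_mem_truncatedUnion (hα : ∀ i, 0 ≤ α i) (hG : Monotone G) {x y : ℚ}
    (hx : x ∈ truncatedUnion α G) (hy : y ∈ truncatedUnion α G) :
    x + y ∈ truncatedUnion α G := by
  rcases eq_or_ne x 0 with rfl | hx0
  · simpa using hy
  rcases eq_or_ne y 0 with rfl | hy0
  · simpa using hx
  obtain ⟨i, hxi, hxG⟩ := exists_of_mem_truncatedUnion hx hx0
  obtain ⟨j, hyj, hyG⟩ := exists_of_mem_truncatedUnion hy hy0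
  have hx' : (0 : ℝ) ≤ x := (hα i).trans hxi
  have hy' : (0 : ℝ) ≤ y := (hα j).trans hyj
  refine mem_truncatedUnion (i := max i j) ?_
    (add_mem (hG le_sup_left hxG) (hG le_sup_right hyG))
  push_cast
  rcases le_total i j with h | h
  · rw [max_eq_right h]; linarith
  · rw [max_eq_left h]; linarith

/-- Every `q ∈ Gᵢ` is the difference `(q + N) - N` of two elements of `Hᵢ`, for a large natural
number `N`. -/
lemma closure_truncatedUnion (hone : ∀ i, (1 : ℚ) ∈ G i) :
    AddSubgroup.closure (truncatedUnion α G) = ⨆ i, G i := by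
  apply le_antisymm
  · rw [closure_le]
    rintro q hq
    rcases eq_or_ne q 0 with rfl | hq0
    · exact zero_mem _
    obtain ⟨i, -, hqG⟩ := exists_of_mem_truncatedUnion hq hq0
    exact le_iSup G i hqG
  · refine iSup_le fun i q hq => ?_
    set N : ℕ := ⌈α i + |(q : ℝ)|⌉₊
    have hN : α i + |(q : ℝ)| ≤ N := Nat.le_ceil _
    have hNG : (N : ℚ) ∈ G i := by simpa using nsmul_mem (hone i) N
    have hNmem : (N : ℚ) ∈ truncatedUnion α G := by
      refine mem_truncatedUnion (i := i) ?_ hNG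
      push_cast
      linarith [abs_nonneg (q : ℝ)]
    have hqNmem : q + N ∈ truncatedUnion α G := by
      refine mem_truncatedUnion (i := i) ?_ (add_mem hq hNG)
      push_cast
      linarith [neg_abs_le (q : ℝ)]
    simpa using sub_mem (subset_closure hqNmem) (subset_closure hNmem)

lemma nFoldSumsetSubset_of_add_le (hA : 0 ≤ A) (hα : ∀ i, A ≤ α i) (hG : Monotone G)
    {a : ℚ} {i₀ : ℕ} (ha : α i₀ ≤ a) (haG : a ∈ G i₀) {k : ℕ} (hk : a + α i₀ ≤ k * A) :
    NFoldSumsetSubset (truncatedUnion α G) (k + 1) a := by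
  intro f hf
  choose idx hidx hfG using fun j => exists_of_mem_truncatedUnion (hf j).1 (hf j).2
  have hαi₀ : 0 ≤ α i₀ := hA.trans (hα i₀)
  have hfA : ∀ j, A ≤ f j := fun j => (hα (idx j)).trans (hidx j)
  have hsum : ∀ j, (f j : ℝ) + α i₀ ≤ ((∑ j, f j - a : ℚ) : ℝ) := fun j => by
    have := add_nsmul_le_sum hfA j
    push_cast at this ⊢
    rw [nsmul_eq_mul] at this
    linarith
  obtain ⟨K, hKs, hle⟩ : ∃ K ∈ insert i₀ (Finset.univ.image idx),
      ∀ i ∈ insert i₀ (Finset.univ.image idx), i ≤ K :=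
    ⟨_, Finset.max'_mem _ (Finset.insert_nonempty _ _), fun i hi => Finset.le_max' _ i hi⟩
  have hK : α K ≤ ((∑ j, f j - a : ℚ) : ℝ) := by
    rcases Finset.mem_insert.1 hKs with rfl | hK
    · linarith [hsum 0, hA.trans (hfA 0)]
    · obtain ⟨j, -, rfl⟩ := Finset.mem_image.1 hK
      linarith [hsum j, hidx j]
  have hi₀K : G i₀ ≤ G K := hG (hle i₀ (Finset.mem_insert_self _ _))
  have hidxK : ∀ j, G (idx j) ≤ G K := fun j =>
    hG (hle _ (Finset.mem_insert_of_mem (Finset.mem_image_of_mem _ (Finset.mem_univ j))))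
  have hdiff : ∑ j, f j - a ∈ G K :=
    sub_mem (sum_mem fun j _ => hidxK j (hfG j)) (hi₀K haG)
  exact ⟨_, mem_truncatedUnion hK hdiff, by ring⟩

lemma exists_nFoldSumsetSubset (hA : 0 < A) (hα : ∀ i, A ≤ α i) (hG : Monotone G) {a : ℚ}
    (ha : a ∈ truncatedUnion α G) (ha0 : a ≠ 0) :
    ∃ n, 0 < n ∧ NFoldSumsetSubset (truncatedUnion α G) n a := by
  obtain ⟨i, hai, haG⟩ := exists_of_mem_truncatedUnion ha ha0
  refine ⟨_, Nat.succ_pos _,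
    nFoldSumsetSubset_of_add_le hA.le hα hG hai haG (k := ⌈2 * a / A⌉₊) ?_⟩
  have := Nat.le_ceil (2 * (a : ℝ) / A)
  rw [div_le_iff₀ hA] at this
  linarith

lemma lt_two_mul_add_one_of_atom {i : ℕ} (hone : (1 : ℚ) ∈ G i) (hαi : 0 < α i) {u : ℚ}
    (huG : u ∈ G i)
    (hatom : ¬∃ x ∈ truncatedUnion α G, ∃ y ∈ truncatedUnion α G, x ≠ 0 ∧ y ≠ 0 ∧ u = x + y) :
    (u : ℝ) < 2 * α i + 1 := by
  by_contra! hbig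
  set x : ℤ := ⌈α i⌉
  have hxG : (x : ℚ) ∈ G i := by simpa using zsmul_mem hone x
  have hx : α i ≤ x := Int.le_ceil _
  have hux : α i ≤ ((u - x : ℚ) : ℝ) := by
    push_cast
    linarith [Int.ceil_lt_add_one (α i)]
  refine hatom ⟨x, mem_truncatedUnion hx hxG, u - x, mem_truncatedUnion hux (sub_mem huG hxG),
    ?_, ?_, by ring⟩
  · exact_mod_cast (hαi.trans_le hx).ne'
  · exact_mod_cast (hαi.trans_le hux).ne'

lemma exists_nFoldSumsetSubset_of_atom (hA : 0 < A) (hα : ∀ i, A ≤ α i) (hG : Monotone G)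
    (hone : ∀ i, (1 : ℚ) ∈ G i) {u : ℚ} (hu : u ∈ truncatedUnion α G) (hu0 : u ≠ 0)
    (hatom : ¬∃ x ∈ truncatedUnion α G, ∃ y ∈ truncatedUnion α G, x ≠ 0 ∧ y ≠ 0 ∧ u = x + y) :
    ∃ n i, 0 < n ∧ NFoldSumsetSubset (truncatedUnion α G) n u ∧
      (n : ℤ) ≤ 1 + ⌈(3 * α i + 1) / A⌉ := by
  obtain ⟨i, hui, huG⟩ := exists_of_mem_truncatedUnion hu hu0
  have hαi : 0 < α i := hA.trans_le (hα i)
  have hsmall := lt_two_mul_add_one_of_atom (hone i) hαi huG hatom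
  have hpos : 0 ≤ (3 * α i + 1) / A := by positivity
  set k := ⌈(3 * α i + 1) / A⌉₊
  have hk : 3 * α i + 1 ≤ k * A := by
    rw [← div_le_iff₀ hA]
    exact Nat.le_ceil _
  refine ⟨k + 1, i, Nat.succ_pos _, nFoldSumsetSubset_of_add_le hA.le hα hG hui huG ?_, ?_⟩
  · linarith
  · push_cast
    rw [Int.natCast_ceil_eq_ceil hpos, add_comm]

end

end PuiseuxConstruction

open PuiseuxConstruction in
/-- Example 3.10 construction: for positive reals αᵢ with inf α = A > 0 and
positive integers bᵢ with bᵢ ∣ bᵢ₊₁, the set H = ⋃ᵢ ({0} ∪ (ℚ≥αᵢ ∩ bᵢ⁻¹ℤ)) is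
a Puiseux monoid with quotient group ⋃ᵢ bᵢ⁻¹ℤ, and H is strongly primary with
M(H) ≤ 1 + sup ⌈A⁻¹(3αᵢ+1)⌉. -/
theorem puiseux_construction_stronglyPrimary
    (α : ℕ → ℝ) (A : ℝ) (hA : 0 < A) (hglb : IsGLB (Set.range α) A)
    (b : ℕ → ℕ) (hb : ∀ i, 0 < b i) (hdvd : ∀ i, b i ∣ b (i + 1)) :
    ∀ S : Set ℚ, S = {0} ∪ ⋃ i : ℕ,
        {q : ℚ | α i ≤ (q : ℝ) ∧ ∃ m : ℤ, q = (m : ℚ) / (b i : ℚ)} →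
    -- H is a Puiseux monoid
    ((0 : ℚ) ∈ S ∧ (∀ x ∈ S, ∀ y ∈ S, x + y ∈ S) ∧ (∀ x ∈ S, 0 ≤ x)) ∧
    -- its quotient group is ⋃ᵢ bᵢ⁻¹·ℤ
    ((AddSubgroup.closure S : Set ℚ) =
      ⋃ i : ℕ, {q : ℚ | ∃ m : ℤ, q = (m : ℚ) / (b i : ℚ)}) ∧
    -- H is strongly primary
    (∀ a ∈ S, a ≠ 0 → ∃ n : ℕ, 0 < n ∧ ∀ f : Fin n → ℚ,
      (∀ j, f j ∈ S ∧ f j ≠ 0) → ∃ h ∈ S, (∑ j, f j) = a + h) ∧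
    -- with M(H) ≤ 1 + sup ⌈A⁻¹(3αᵢ+1)⌉
    (∀ u ∈ S, u ≠ 0 →
      (¬∃ x ∈ S, ∃ y ∈ S, x ≠ 0 ∧ y ≠ 0 ∧ u = x + y) →
      ∃ (n : ℕ) (i : ℕ), 0 < n ∧
        (∀ f : Fin n → ℚ, (∀ j, f j ∈ S ∧ f j ≠ 0) →
          ∃ h ∈ S, (∑ j, f j) = u + h) ∧
        (n : ℤ) ≤ 1 + ⌈(3 * α i + 1) / A⌉) := by
  intro S hS
  have hα : ∀ i, A ≤ α i := fun i => hglb.1 ⟨i, rfl⟩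
  have hα0 : ∀ i, 0 ≤ α i := fun i => hA.le.trans (hα i)
  set G : ℕ → AddSubgroup ℚ := fun i => zmultiples (b i : ℚ)⁻¹
  have hG : Monotone G :=
    monotone_nat_of_le_succ fun i => zmultiples_inv_le_of_dvd (hdvd i) (hb _).ne'
  have hone : ∀ i, (1 : ℚ) ∈ G i := fun i => one_mem_zmultiples_inv (hb i).ne'
  obtain rfl : S = truncatedUnion α G := by
    simp only [hS, truncatedUnion, G, mem_zmultiples_inv_iff]
  refine ⟨⟨zero_mem_truncatedUnion, fun x hx y hy => add_mem_truncatedUnion hα0 hG hx hy,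
    fun x hx => nonneg_of_mem_truncatedUnion hα0 hx⟩, ?_,
    fun a ha ha0 => exists_nFoldSumsetSubset hA hα hG ha ha0,
    fun u hu hu0 hatom => exists_nFoldSumsetSubset_of_atom hA hα hG hone hu hu0 hatom⟩
  rw [closure_truncatedUnion hone, coe_iSup_of_directed hG.directed_le]
  ext q
  simp [G, mem_zmultiples_inv_iff]
end

section
/- With H = ⋃ᵢ Hᵢ as in the construction with Hᵢ = {0} ∪ (Q≥αᵢ ∩ bᵢ⁻¹·Z), every atom of H lying in Hᵢ satisfies αᵢ ≤ u < 2αᵢ + 1; consequently A(H) ⊆ ⋃ᵢ (Hᵢ ∩ [αᵢ, 2αᵢ+1)). -/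
/-- In the construction H = ⋃ᵢ Hᵢ with Hᵢ = {0} ∪ (ℚ≥αᵢ ∩ bᵢ⁻¹ℤ), every atom u
of H lying in Hᵢ satisfies αᵢ ≤ u < 2αᵢ + 1; consequently
A(H) ⊆ ⋃ᵢ (Hᵢ ∩ [αᵢ, 2αᵢ+1)). -/
theorem puiseux_construction_atoms_bounded
    (α : ℕ → ℝ) (A : ℝ) (hA : 0 < A) (hglb : IsGLB (Set.range α) A)
    (b : ℕ → ℕ) (hb : ∀ i, 0 < b i) (hdvd : ∀ i, b i ∣ b (i + 1)) :
    ∀ S : Set ℚ, S = {0} ∪ ⋃ i : ℕ,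
        {q : ℚ | α i ≤ (q : ℝ) ∧ ∃ m : ℤ, q = (m : ℚ) / (b i : ℚ)} →
    ∀ u : ℚ, u ∈ S → u ≠ 0 →
      (¬∃ x ∈ S, ∃ y ∈ S, x ≠ 0 ∧ y ≠ 0 ∧ u = x + y) →
      ∀ i : ℕ, (α i ≤ (u : ℝ) ∧ ∃ m : ℤ, u = (m : ℚ) / (b i : ℚ)) →
        α i ≤ (u : ℝ) ∧ (u : ℝ) < 2 * α i + 1 := by
  intro S hS u huS hu0 hatom i ⟨hαu, m, hm⟩
  refine ⟨hαu, ?_⟩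
  by_contra h
  push_neg at h
  have hAα : A ≤ α i := hglb.1 ⟨i, rfl⟩
  have hαpos : 0 < α i := lt_of_lt_of_le hA hAα
  have hbiR : (0:ℝ) < (b i : ℝ) := by exact_mod_cast hb i
  have hbiQ : ((b i : ℚ)) ≠ 0 := by exact_mod_cast (hb i).ne'
  have hbi1 : (1:ℝ) ≤ (b i : ℝ) := by exact_mod_cast hb i
  set n : ℤ := ⌈α i * (b i : ℝ)⌉ with hn
  have hn1 : α i * (b i : ℝ) ≤ (n : ℝ) := Int.le_ceil _
  have hn2 : (n : ℝ) < α i * (b i : ℝ) + 1 := Int.ceil_lt_add_one _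
  set x : ℚ := (n : ℚ) / (b i : ℚ) with hx
  have hxR : (x : ℝ) = (n : ℝ) / (b i : ℝ) := by push_cast [hx]; ring
  have hx_ge : α i ≤ (x : ℝ) := by
    rw [hxR, le_div_iff₀ hbiR]; exact hn1
  have hx_le : (x : ℝ) ≤ α i + 1 := by
    rw [hxR, div_le_iff₀ hbiR]; nlinarith
  set y : ℚ := u - x with hy
  have hyR : (y : ℝ) = (u : ℝ) - (x : ℝ) := by push_cast [hy]; ring
  have hy_ge : α i ≤ (y : ℝ) := by rw [hyR]; linarith
  have hx0 : x ≠ 0 := by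
    intro h0
    rw [h0] at hx_ge; push_cast at hx_ge; linarith
  have hy0 : y ≠ 0 := by
    intro h0
    rw [h0] at hy_ge; push_cast at hy_ge; linarith
  have hxS : x ∈ S := by
    rw [hS]
    right
    exact Set.mem_iUnion.mpr ⟨i, hx_ge, n, rfl⟩
  have hyS : y ∈ S := by
    rw [hS]
    right
    refine Set.mem_iUnion.mpr ⟨i, hy_ge, m - n, ?_⟩
    rw [hy, hm, hx]
    push_cast
    field_simp
  exact hatom ⟨x, hxS, y, hyS, hx0, hy0, by rw [hy]; ring⟩
end
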